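/- arXiv:2412.16332 — 8 statements merged into one kernel-verified Lean document; each statement's English description precedes it below -/
import Mathlib

section
/- Let (H₀,H₁) be a Hilbert space pair with inclusion ι : H₁ → H₀. If A ∈ L(H₁,H₀) is symmetrizable and Fredholm of index zero, then its Banach adjoint A* : H₀* → H₁* is Fredholm of index zero and is symmetrizable with respect to the pair (H₁*, H₀*) whose inclusion is ι* : H₀* → H₁*; moreover, if A is bijective then A* is bijective. -/
/-- The Banach adjoint of a continuous linear map `B : E₁ → E₀`:
`B* : E₀* → E₁*`, `(B*η)ξ = η(Bξ)`. -/
noncomputable def dualOp {E1 E0 : Type*} [NormedAddCommGroup E1] [NormedSpace ℝ E1]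
    [NormedAddCommGroup E0] [NormedSpace ℝ E0] (B : E1 →L[ℝ] E0) :
    (E0 →L[ℝ] ℝ) →L[ℝ] (E1 →L[ℝ] ℝ) :=
  (ContinuousLinearMap.compL ℝ E1 E0 ℝ).flip B

/-- `B : E₁ → E₀` is symmetrizable with respect to the "inclusion" `j : E₁ → E₀`:
there is a continuous symmetric bilinear form (an inner product) on `E₀` inducing a norm
equivalent to the given one, with respect to which `B` is symmetric. -/
def Symmetrizable {E1 E0 : Type*} [NormedAddCommGroup E1] [NormedSpace ℝ E1]
    [NormedAddCommGroup E0] [NormedSpace ℝ E0]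
    (j B : E1 →L[ℝ] E0) : Prop :=
  ∃ Φ : E0 →L[ℝ] E0 →L[ℝ] ℝ,
    (∀ x y : E0, Φ x y = Φ y x) ∧
    (∃ m M : ℝ, 0 < m ∧ ∀ x : E0, m * ‖x‖ ^ 2 ≤ Φ x x ∧ Φ x x ≤ M * ‖x‖ ^ 2) ∧
    (∀ x y : E1, Φ (B x) (j y) = Φ (j x) (B y))

/-- A continuous linear operator is Fredholm of index zero: finite-dimensional kernel,
closed range, and the dimension of the cokernel equals that of the kernel. -/
def FredholmIdxZero {X Y : Type*} [NormedAddCommGroup X] [NormedSpace ℝ X]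
    [NormedAddCommGroup Y] [NormedSpace ℝ Y] (T : X →L[ℝ] Y) : Prop :=
  FiniteDimensional ℝ (LinearMap.ker (T : X →ₗ[ℝ] Y)) ∧
  IsClosed (LinearMap.range (T : X →ₗ[ℝ] Y) : Set Y) ∧
  FiniteDimensional ℝ (Y ⧸ LinearMap.range (T : X →ₗ[ℝ] Y)) ∧
  Module.finrank ℝ (Y ⧸ LinearMap.range (T : X →ₗ[ℝ] Y)) = Module.finrank ℝ (LinearMap.ker (T : X →ₗ[ℝ] Y))

section AuxiliaryLemmas

open ContinuousLinearMap InnerProductSpace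

@[simp] lemma dualOp_apply {E1 E0 : Type*} [NormedAddCommGroup E1] [NormedSpace ℝ E1]
    [NormedAddCommGroup E0] [NormedSpace ℝ E0] (B : E1 →L[ℝ] E0) (η : E0 →L[ℝ] ℝ) (x : E1) :
    dualOp B η x = η (B x) := rfl

noncomputable def riesz (H : Type*) [NormedAddCommGroup H] [InnerProductSpace ℝ H]
    [CompleteSpace H] : H ≃L[ℝ] (H →L[ℝ] ℝ) :=
  { toFun := fun x => (InnerProductSpace.toDual ℝ H x : H →L[ℝ] ℝ)
    invFun := fun α => (InnerProductSpace.toDual ℝ H).symm α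
    map_add' := by intro x y; simp
    map_smul' := by intro c x; simp
    left_inv := fun x => by simp
    right_inv := fun α => by simp
    continuous_toFun := (InnerProductSpace.toDual ℝ H).continuous
    continuous_invFun := (InnerProductSpace.toDual ℝ H).symm.continuous }

@[simp] lemma riesz_apply {H : Type*} [NormedAddCommGroup H] [InnerProductSpace ℝ H]
    [CompleteSpace H] (x y : H) : riesz H x y = ⟪x, y⟫_ℝ := rfl

@[simp] lemma inner_riesz_symm {H : Type*} [NormedAddCommGroup H] [InnerProductSpace ℝ H]
    [CompleteSpace H] (α : H →L[ℝ] ℝ) (x : H) :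
    ⟪(riesz H).symm α, x⟫_ℝ = α x :=
  InnerProductSpace.toDual_symm_apply (𝕜 := ℝ) (E := H) (x := x) (y := α)

@[simp] lemma norm_riesz_symm {H : Type*} [NormedAddCommGroup H] [InnerProductSpace ℝ H]
    [CompleteSpace H] (α : H →L[ℝ] ℝ) : ‖(riesz H).symm α‖ = ‖α‖ :=
  (InnerProductSpace.toDual ℝ H).symm.norm_map α


section transfer
variable {X X' Y Y' : Type*} [NormedAddCommGroup X] [NormedSpace ℝ X]
  [NormedAddCommGroup X'] [NormedSpace ℝ X'] [NormedAddCommGroup Y] [NormedSpace ℝ Y]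
  [NormedAddCommGroup Y'] [NormedSpace ℝ Y']

lemma fredholm_conj (T : X →L[ℝ] Y) (e1 : X' ≃L[ℝ] X) (e2 : Y ≃L[ℝ] Y')
    (h : FredholmIdxZero T) : FredholmIdxZero ((e2 : Y →L[ℝ] Y') ∘L T ∘L (e1 : X' →L[ℝ] X)) := by
  obtain ⟨h1, h2, h3, h4⟩ := h
  set T' := (e2 : Y →L[ℝ] Y') ∘L T ∘L (e1 : X' →L[ℝ] X) with hT'
  have hker : LinearMap.ker (T' : X' →ₗ[ℝ] Y') = Submodule.comap (e1 : X' →ₗ[ℝ] X) (LinearMap.ker (T : X →ₗ[ℝ] Y)) := by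
    ext x
    simp [hT', LinearMap.mem_ker, Submodule.mem_comap]
  have hkereq : LinearMap.ker (T' : X' →ₗ[ℝ] Y') ≃ₗ[ℝ] LinearMap.ker (T : X →ₗ[ℝ] Y) := by
    rw [hker]
    exact LinearEquiv.ofSubmodule' e1.toLinearEquiv (LinearMap.ker (T : X →ₗ[ℝ] Y))
  have hrange : LinearMap.range (T' : X' →ₗ[ℝ] Y') = Submodule.map (e2 : Y →ₗ[ℝ] Y') (LinearMap.range (T : X →ₗ[ℝ] Y)) := by
    ext y
    simp only [LinearMap.mem_range, Submodule.mem_map, hT']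
    constructor
    · rintro ⟨x, rfl⟩; exact ⟨T (e1 x), ⟨e1 x, rfl⟩, rfl⟩
    · rintro ⟨z, ⟨x, rfl⟩, rfl⟩; exact ⟨e1.symm x, by simp⟩
  have hrc : IsClosed (LinearMap.range (T' : X' →ₗ[ℝ] Y') : Set Y') := by
    rw [hrange]
    have : (Submodule.map (e2 : Y →ₗ[ℝ] Y') (LinearMap.range (T : X →ₗ[ℝ] Y)) : Set Y')
        = e2 '' (LinearMap.range (T : X →ₗ[ℝ] Y) : Set Y) := rfl
    rw [this]
    exact (e2.toHomeomorph.isClosedMap) _ h2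
  have hquot : (Y' ⧸ LinearMap.range (T' : X' →ₗ[ℝ] Y')) ≃ₗ[ℝ] (Y ⧸ LinearMap.range (T : X →ₗ[ℝ] Y)) :=
    (Submodule.Quotient.equiv (LinearMap.range (T : X →ₗ[ℝ] Y)) (LinearMap.range (T' : X' →ₗ[ℝ] Y')) e2.toLinearEquiv hrange.symm).symm
  refine ⟨Module.Finite.equiv hkereq.symm, hrc, Module.Finite.equiv hquot.symm, ?_⟩
  rw [hquot.finrank_eq, hkereq.finrank_eq, h4]
end transfer

variable {H0 H1 : Type*}
  [NormedAddCommGroup H0] [InnerProductSpace ℝ H0] [CompleteSpace H0]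
  [NormedAddCommGroup H1] [InnerProductSpace ℝ H1] [CompleteSpace H1]

lemma fredholm_adjoint (A : H1 →L[ℝ] H0) (h : FredholmIdxZero A) :
    FredholmIdxZero (ContinuousLinearMap.adjoint A) := by
  obtain ⟨h1, h2, h3, h4⟩ := h
  set K := LinearMap.ker (A : H1 →ₗ[ℝ] H0) with hK
  set RA := LinearMap.range (A : H1 →ₗ[ℝ] H0) with hRA
  haveI : CompleteSpace RA := h2.completeSpace_coe
  haveI : CompleteSpace K := (ContinuousLinearMap.isClosed_ker A).completeSpace_coe
  -- kernel of adjoint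
  have hker_adj : LinearMap.ker (ContinuousLinearMap.adjoint A : H0 →ₗ[ℝ] H1) = RAᗮ := by
    ext y
    simp only [LinearMap.mem_ker, Submodule.mem_orthogonal, ContinuousLinearMap.coe_coe]
    constructor
    · rintro hy u ⟨x, rfl⟩
      rw [ContinuousLinearMap.coe_coe, real_inner_comm, ← ContinuousLinearMap.adjoint_inner_left, hy, inner_zero_left]
    · intro hy
      apply ext_inner_right ℝ
      intro x
      rw [ContinuousLinearMap.adjoint_inner_left, inner_zero_left, real_inner_comm]
      exact hy (A x) ⟨x, rfl⟩
  have equot : (H0 ⧸ RA) ≃ₗ[ℝ] RAᗮ :=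
    Submodule.quotientEquivOfIsCompl RA RAᗮ Submodule.isCompl_orthogonal_of_hasOrthogonalProjection
  -- restricted operator
  have hmem : ∀ x : Kᗮ, A x ∈ RA := fun x => LinearMap.mem_range_self _ _
  set A0 : Kᗮ →L[ℝ] RA := (A ∘L Submodule.subtypeL Kᗮ).codRestrict RA hmem with hA0
  have hA0app : ∀ x : Kᗮ, (A0 x : H0) = A x := fun x => rfl
  have hA0ker : LinearMap.ker (A0 : Kᗮ →ₗ[ℝ] RA) = ⊥ := by
    rw [LinearMap.ker_eq_bot']
    intro x hx
    have hxK : (x : H1) ∈ K := by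
      have : A (x : H1) = 0 := by rw [← hA0app, show A0 x = 0 from hx]; rfl
      simpa [hK, LinearMap.mem_ker] using this
    have : ⟪(x : H1), (x : H1)⟫_ℝ = 0 := x.2 (x : H1) hxK
    exact Subtype.ext (inner_self_eq_zero.mp this)
  have hA0range : LinearMap.range (A0 : Kᗮ →ₗ[ℝ] RA) = ⊤ := by
    rw [LinearMap.range_eq_top]
    rintro ⟨y, x, rfl⟩
    have hx : (x : H1) ∈ K ⊔ Kᗮ := by
      rw [Submodule.sup_orthogonal_of_hasOrthogonalProjection]; trivial
    obtain ⟨k, hk, k', hk', rfl⟩ := Submodule.mem_sup.mp hx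
    refine ⟨⟨k', hk'⟩, Subtype.ext ?_⟩
    show (A0 ⟨k', hk'⟩ : H0) = A (k + k')
    rw [hA0app]
    simp only [map_add]
    have : A k = 0 := hk
    rw [this, zero_add]
  set e := ContinuousLinearEquiv.ofBijective A0 hA0ker hA0range with he
  have heapp : ∀ x : Kᗮ, e x = A0 x := fun x => rfl
  have hrange_adj : LinearMap.range (ContinuousLinearMap.adjoint A : H0 →ₗ[ℝ] H1) = Kᗮ := by
    apply le_antisymm
    · rintro z ⟨y, rfl⟩
      intro u hu
      rw [ContinuousLinearMap.coe_coe, real_inner_comm, ContinuousLinearMap.adjoint_inner_left]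
      have : A u = 0 := hu
      rw [this, inner_zero_right]
    · intro z hz
      set zc : Kᗮ := ⟨z, hz⟩ with hzc
      set w := ContinuousLinearMap.adjoint (e.symm : RA →L[ℝ] Kᗮ) zc with hw
      refine ⟨(w : H0), ?_⟩
      apply ext_inner_right ℝ
      intro x
      rw [ContinuousLinearMap.coe_coe, ContinuousLinearMap.adjoint_inner_left]
      have hx : (x : H1) ∈ K ⊔ Kᗮ := by
        rw [Submodule.sup_orthogonal_of_hasOrthogonalProjection]; trivial
      obtain ⟨k, hk, k', hk', rfl⟩ := Submodule.mem_sup.mp hx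
      have hAx : A (k + k') = ((A0 ⟨k', hk'⟩ : RA) : H0) := by
        rw [hA0app]
        simp only [map_add]
        have : A k = 0 := hk
        rw [this, zero_add]
      rw [hAx]
      have hcoe : ⟪(w : H0), ((A0 ⟨k', hk'⟩ : RA) : H0)⟫_ℝ = ⟪w, A0 ⟨k', hk'⟩⟫_ℝ := rfl
      rw [hcoe, hw, ContinuousLinearMap.adjoint_inner_left]
      have : (e.symm : RA →L[ℝ] Kᗮ) (A0 ⟨k', hk'⟩) = ⟨k', hk'⟩ := by
        rw [← heapp]
        exact e.symm_apply_apply _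
      rw [this]
      have hcoe2 : ⟪zc, (⟨k', hk'⟩ : Kᗮ)⟫_ℝ = ⟪z, k'⟫_ℝ := rfl
      rw [hcoe2, inner_add_right]
      have : ⟪z, k⟫_ℝ = 0 := by
        rw [real_inner_comm]; exact hz k hk
      rw [this, zero_add]
  -- finish
  haveI : FiniteDimensional ℝ RAᗮ := Module.Finite.equiv equot
  haveI : CompleteSpace (Kᗮ : Submodule ℝ H1) := (Submodule.isClosed_orthogonal K).completeSpace_coe
  have equot2 : (H1 ⧸ Kᗮ) ≃ₗ[ℝ] Kᗮᗮ :=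
    Submodule.quotientEquivOfIsCompl Kᗮ Kᗮᗮ Submodule.isCompl_orthogonal_of_hasOrthogonalProjection
  have horthorth : Kᗮᗮ = K := Submodule.orthogonal_orthogonal K
  have equot3 : (H1 ⧸ Kᗮ) ≃ₗ[ℝ] K := equot2.trans (LinearEquiv.ofEq _ _ horthorth)
  constructor
  · rw [hker_adj]; exact Module.Finite.equiv equot
  refine ⟨by rw [hrange_adj]; exact Submodule.isClosed_orthogonal K, ?_, ?_⟩
  · rw [hrange_adj]
    exact Module.Finite.equiv equot3.symm
  · rw [hrange_adj, hker_adj]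
    rw [equot3.finrank_eq, ← equot.finrank_eq, h4]

lemma riesz_symm_dualOp (B : H1 →L[ℝ] H0) (α : H0 →L[ℝ] ℝ) :
    (riesz H1).symm (dualOp B α) = ContinuousLinearMap.adjoint B ((riesz H0).symm α) := by
  apply ext_inner_right ℝ
  intro x
  rw [ContinuousLinearMap.adjoint_inner_left]
  simp

lemma dualOp_eq_conj (B : H1 →L[ℝ] H0) :
    dualOp B = ((riesz H1 : H1 →L[ℝ] (H1 →L[ℝ] ℝ)) ∘L (ContinuousLinearMap.adjoint B))
      ∘L ((riesz H0).symm : (H0 →L[ℝ] ℝ) →L[ℝ] H0) := by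
  ext α x
  have := riesz_symm_dualOp B α
  calc dualOp B α x = ⟪(riesz H1).symm (dualOp B α), x⟫_ℝ := by rw [inner_riesz_symm]
    _ = ⟪ContinuousLinearMap.adjoint B ((riesz H0).symm α), x⟫_ℝ := by rw [this]
    _ = _ := rfl

lemma bij_dualOp (B : H1 →L[ℝ] H0) (hb : Function.Bijective ⇑B) :
    Function.Bijective ⇑(dualOp B) := by
  have hker : LinearMap.ker (B : H1 →ₗ[ℝ] H0) = ⊥ := LinearMap.ker_eq_bot.mpr hb.1
  have hrange : LinearMap.range (B : H1 →ₗ[ℝ] H0) = ⊤ := LinearMap.range_eq_top.mpr hb.2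
  set eB := ContinuousLinearEquiv.ofBijective B hker hrange with heB
  have hinv1 : ∀ η, dualOp B (dualOp (eB.symm : H0 →L[ℝ] H1) η) = η := by
    intro η; ext x
    simp only [dualOp_apply]
    congr 1
    exact eB.symm_apply_apply x
  have hinv2 : ∀ η, dualOp (eB.symm : H0 →L[ℝ] H1) (dualOp B η) = η := by
    intro η; ext x
    simp only [dualOp_apply]
    congr 1
    exact eB.apply_symm_apply x
  constructor
  · intro a b hab
    rw [← hinv2 a, ← hinv2 b, hab]
  · intro η
    exact ⟨dualOp (eB.symm : H0 →L[ℝ] H1) η, hinv1 η⟩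

lemma aux_lower {mm K a b : ℝ} (hm : 0 < mm) (hK : 0 ≤ K) (hab : a ≤ K * b)
    (ha : 0 ≤ a) (hb : 0 ≤ b) :
    mm / (K + 1) ^ 2 * a ^ 2 ≤ mm * b ^ 2 := by
  have h1 : a ^ 2 ≤ (K + 1) ^ 2 * b ^ 2 := by nlinarith
  have hc : (0:ℝ) < (K + 1) ^ 2 := by positivity
  have h2 : mm / (K + 1) ^ 2 * a ^ 2 ≤ mm / (K + 1) ^ 2 * ((K + 1) ^ 2 * b ^ 2) := by
    apply mul_le_mul_of_nonneg_left h1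
    positivity
  have h3 : mm / (K + 1) ^ 2 * ((K + 1) ^ 2 * b ^ 2) = mm * b ^ 2 := by
    field_simp
  linarith

lemma aux_upper {K a b : ℝ} (hK : 0 ≤ K) (hab : b ≤ K * a) (ha : 0 ≤ a) (hb : 0 ≤ b) :
    b ^ 2 ≤ K ^ 2 * a ^ 2 := by nlinarith

set_option maxHeartbeats 2000000 in
lemma symmetrizable_dual (ι : H1 →L[ℝ] H0) (hι_inj : Function.Injective ι)
    (A : H1 →L[ℝ] H0) (Φ : H0 →L[ℝ] H0 →L[ℝ] ℝ)
    (hΦsym : ∀ x y : H0, Φ x y = Φ y x)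
    (m M : ℝ) (hm : 0 < m)
    (hbd : ∀ x : H0, m * ‖x‖ ^ 2 ≤ Φ x x ∧ Φ x x ≤ M * ‖x‖ ^ 2)
    (hAB : ∀ x y : H1, Φ (A x) (ι y) = Φ (ι x) (A y))
    (hker_fd : FiniteDimensional ℝ (LinearMap.ker (A : H1 →ₗ[ℝ] H0)))
    (hq_fd : FiniteDimensional ℝ (H0 ⧸ LinearMap.range (A : H1 →ₗ[ℝ] H0)))
    (hfr : Module.finrank ℝ (H0 ⧸ LinearMap.range (A : H1 →ₗ[ℝ] H0))
      = Module.finrank ℝ (LinearMap.ker (A : H1 →ₗ[ℝ] H0))) :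
    Symmetrizable (dualOp ι) (dualOp A) := by
  haveI := hker_fd
  haveI := hq_fd
  -- the operator S representing Φ
  have coercive : IsCoercive Φ := by
    refine ⟨m, hm, fun u => ?_⟩
    have := (hbd u).1
    nlinarith [this, sq_nonneg ‖u‖]
  obtain ⟨S, hS⟩ : ∃ S : H0 ≃L[ℝ] H0, ∀ x y : H0, ⟪S x, y⟫_ℝ = Φ x y :=
    ⟨coercive.continuousLinearEquivOfBilin, fun x y =>
      coercive.continuousLinearEquivOfBilin_apply x y⟩
  have hS' : ∀ x y : H0, ⟪x, S y⟫_ℝ = ⟪S x, y⟫_ℝ := by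
    intro x y
    rw [real_inner_comm, hS, hΦsym, ← hS]
  set N := LinearMap.ker (A : H1 →ₗ[ℝ] H0) with hN
  -- bilinear form pulled to H1 restricted to N
  set ΦI : H1 →L[ℝ] (H1 →L[ℝ] ℝ) := (dualOp ι) ∘L (Φ ∘L ι) with hΦI
  have hΦIapp : ∀ x y : H1, ΦI x y = Φ (ι x) (ι y) := fun x y => rfl
  set Φb : H1 →L[ℝ] (↥N →L[ℝ] ℝ) := (dualOp (N.subtypeL)) ∘L ΦI with hΦb
  have hΦbapp : ∀ (x : H1) (n : ↥N), Φb x n = Φ (ι x) (ι n) := fun x n => rfl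
  set ρ : ↥N →L[ℝ] (↥N →L[ℝ] ℝ) := Φb ∘L N.subtypeL with hρ
  have hρapp : ∀ (n₁ n₂ : ↥N), ρ n₁ n₂ = Φ (ι n₁) (ι n₂) := fun _ _ => rfl
  -- positivity
  have hpos : ∀ x : H1, Φ (ι x) (ι x) = 0 → x = 0 := by
    intro x hx
    have h1 := (hbd (ι x)).1
    rw [hx] at h1
    have : ι x = 0 := by
      by_contra hne
      have hpos' : 0 < ‖ι x‖ := norm_pos_iff.mpr hne
      nlinarith [mul_pos hm (pow_pos hpos' 2)]
    have h0 : ι x = ι 0 := by simpa using this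
    exact hι_inj h0
  -- rho is bijective
  have hρinj : Function.Injective ρ := by
    intro n₁ n₂ hn
    have hdiff : ρ (n₁ - n₂) = 0 := by rw [map_sub, hn, sub_self]
    have h0 : Φ (ι ((n₁ : H1) - (n₂ : H1))) (ι ((n₁ : H1) - (n₂ : H1))) = 0 := by
      have := DFunLike.congr_fun hdiff (n₁ - n₂)
      simpa [hρapp] using this
    have := hpos _ h0
    have : (n₁ : H1) = (n₂ : H1) := by
      have := sub_eq_zero.mp this
      exact this
    exact Subtype.ext this
  haveI : FiniteDimensional ℝ (↥N →ₗ[ℝ] ℝ) := inferInstance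
  have efd : (↥N →ₗ[ℝ] ℝ) ≃ₗ[ℝ] (↥N →L[ℝ] ℝ) := LinearMap.toContinuousLinearMap
  haveI : FiniteDimensional ℝ (↥N →L[ℝ] ℝ) := Module.Finite.equiv efd
  have hfrN : Module.finrank ℝ ↥N = Module.finrank ℝ (↥N →L[ℝ] ℝ) := by
    rw [← efd.finrank_eq]
    exact (Subspace.dual_finrank_eq (V := ↥N) (K := ℝ)).symm
  have hρbij : Function.Bijective ρ := by
    refine ⟨hρinj, ?_⟩
    exact (LinearMap.injective_iff_surjective_of_finrank_eq_finrank hfrN).mp hρinj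
  obtain ⟨ρe, hρe⟩ : ∃ ρe : ↥N ≃ₗ[ℝ] (↥N →L[ℝ] ℝ), ∀ n, ρe n = ρ n :=
    ⟨LinearEquiv.ofBijective (ρ : ↥N →ₗ[ℝ] (↥N →L[ℝ] ℝ)) hρbij, fun n => rfl⟩
  set ρinvC : (↥N →L[ℝ] ℝ) →L[ℝ] ↥N :=
    LinearMap.toContinuousLinearMap ρe.symm.toLinearMap with hρinvC
  have hρinv : ∀ α : (↥N →L[ℝ] ℝ), ρ (ρinvC α) = α := by
    intro α
    have : ρinvC α = ρe.symm α := rfl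
    rw [this, ← hρe, ρe.apply_symm_apply]
  -- the projection P
  set P : H1 →L[ℝ] H1 := N.subtypeL ∘L ρinvC ∘L Φb with hP
  have hPmem : ∀ x : H1, P x ∈ N := fun x => (ρinvC (Φb x)).2
  have hAP : ∀ x : H1, A (P x) = 0 := fun x => hPmem x
  have hPb : ∀ (x : H1) (n : ↥N), Φ (ι (P x)) (ι n) = Φ (ι x) (ι n) := by
    intro x n
    have : Φb (P x) = Φb x := by
      have h1 : Φb (P x) = ρ (ρinvC (Φb x)) := rfl
      rw [h1, hρinv]
    have := DFunLike.congr_fun this n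
    simpa [hΦbapp] using this
  have hPid : ∀ n : ↥N, P (n : H1) = (n : H1) := by
    intro n
    have h1 : ρ ⟨P (n : H1), hPmem _⟩ = ρ n := by
      ext k
      simp only [hρapp]
      exact hPb (n : H1) k
    have := hρinj h1
    exact congrArg Subtype.val this
  have hPsym : ∀ x y : H1, Φ (ι (P x)) (ι y) = Φ (ι x) (ι (P y)) := by
    intro x y
    calc Φ (ι (P x)) (ι y) = Φ (ι y) (ι (P x)) := hΦsym _ _
      _ = Φ (ι (P y)) (ι (P x)) := (hPb y ⟨P x, hPmem x⟩).symm
      _ = Φ (ι (P x)) (ι (P y)) := hΦsym _ _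
      _ = Φ (ι x) (ι (P y)) := hPb x ⟨P y, hPmem y⟩
  clear hP
  clear_value P
  -- the invertible modification
  set At : H1 →L[ℝ] H0 := A + ι ∘L P with hAt
  have hAtapp : ∀ x : H1, At x = A x + ι (P x) := fun x => rfl
  have hAtsym : ∀ x y : H1, Φ (At x) (ι y) = Φ (ι x) (At y) := by
    intro x y
    rw [hAtapp, hAtapp, map_add]
    have h1 : Φ (A x) (ι y) + Φ (ι (P x)) (ι y)
        = Φ (ι x) (A y) + Φ (ι x) (ι (P y)) := by
      rw [hAB, hPsym]
    calc (Φ (A x) + Φ (ι (P x))) (ι y) = Φ (A x) (ι y) + Φ (ι (P x)) (ι y) := rfl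
      _ = Φ (ι x) (A y) + Φ (ι x) (ι (P y)) := h1
      _ = Φ (ι x) (A y + ι (P y)) := (map_add (Φ (ι x)) _ _).symm
  have hAtinj : Function.Injective At := by
    intro x y hxy
    have hsub : At (x - y) = 0 := by rw [map_sub, hxy, sub_self]
    set z := x - y with hz
    have h0 : A z + ι (P z) = 0 := by rw [← hAtapp]; exact hsub
    have h5 : Φ (A z) (ι (P z)) = 0 := by
      rw [hAB]
      rw [hAP]
      exact map_zero (Φ (ι z))
    have h6 : A z = - ι (P z) := eq_neg_of_add_eq_zero_left h0
    have h7 : Φ (ι (P z)) (ι (P z)) = 0 := by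
      have := h5
      rw [h6] at this
      have h8 : Φ (-(ι (P z))) (ι (P z)) = - Φ (ι (P z)) (ι (P z)) := by
        rw [map_neg]
        rfl
      rw [h8] at this
      linarith
    have hPz : P z = 0 := hpos _ h7
    have hAz : A z = 0 := by rw [h6, hPz, map_zero, neg_zero]
    have hzN : z ∈ N := hAz
    have : P z = z := hPid ⟨z, hzN⟩
    have hz0 : z = 0 := by rw [← this, hPz]
    exact sub_eq_zero.mp hz0
  have hAtsurj : Function.Surjective At := by
    set RA := LinearMap.range (A : H1 →ₗ[ℝ] H0) with hRA
    set φ : ↥N →ₗ[ℝ] (H0 ⧸ RA) := RA.mkQ.comp ((ι : H1 →ₗ[ℝ] H0).comp N.subtype) with hφ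
    have hφapp : ∀ n : ↥N, φ n = RA.mkQ (ι (n : H1)) := fun n => rfl
    have hφinj : Function.Injective φ := by
      intro n₁ n₂ hn
      have : RA.mkQ (ι ((n₁ : H1) - (n₂ : H1))) = 0 := by
        rw [map_sub, map_sub, ← hφapp, ← hφapp, hn, sub_self]
      have hmem : ι ((n₁ : H1) - (n₂ : H1)) ∈ RA := by
        rwa [Submodule.mkQ_apply, Submodule.Quotient.mk_eq_zero] at this
      obtain ⟨w, hw⟩ := hmem
      set d := (n₁ : H1) - (n₂ : H1) with hd
      have hdN : d ∈ N := Submodule.sub_mem _ n₁.2 n₂.2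
      have h0 : Φ (ι d) (ι d) = 0 := by
        have : Φ (ι d) (ι d) = Φ (A w) (ι d) := by rw [show A w = ι d from hw]
        rw [this, hAB]
        have : A d = 0 := hdN
        rw [this]
        exact map_zero (Φ (ι w))
      have := hpos _ h0
      exact Subtype.ext (sub_eq_zero.mp this)
    have hφsurj : Function.Surjective φ := by
      have heq : Module.finrank ℝ ↥N = Module.finrank ℝ (H0 ⧸ RA) := hfr.symm
      exact (LinearMap.injective_iff_surjective_of_finrank_eq_finrank heq).mp hφinj
    intro u
    obtain ⟨n, hn⟩ := hφsurj (RA.mkQ u)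
    have hmem : u - ι (n : H1) ∈ RA := by
      have : RA.mkQ (u - ι (n : H1)) = 0 := by
        rw [map_sub, ← hφapp, hn, sub_self]
      rwa [Submodule.mkQ_apply, Submodule.Quotient.mk_eq_zero] at this
    obtain ⟨x, hx⟩ := hmem
    refine ⟨x - P x + (n : H1), ?_⟩
    rw [hAtapp]
    have h1 : A (x - P x + (n : H1)) = A x := by
      rw [map_add, map_sub, hAP]
      have : A (n : H1) = 0 := n.2
      rw [this, add_zero, sub_zero]
    have h2 : P (x - P x + (n : H1)) = (n : H1) := by
      rw [map_add, map_sub]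
      rw [hPid ⟨P x, hPmem x⟩, hPid n]
      simp
    rw [h1, h2, show A x = u - ι (n : H1) from hx]
    abel
  obtain ⟨AtE, hAtE⟩ : ∃ AtE : H1 ≃L[ℝ] H0, ∀ x, AtE x = At x :=
    ⟨ContinuousLinearEquiv.ofBijective At (LinearMap.ker_eq_bot.mpr hAtinj)
      (LinearMap.range_eq_top.mpr hAtsurj), fun x => rfl⟩
  -- adjoint facts
  have hAtd : ∀ u : H0, ContinuousLinearMap.adjoint At u
      = ContinuousLinearMap.adjoint A u
        + ContinuousLinearMap.adjoint P (ContinuousLinearMap.adjoint ι u) := by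
    intro u
    have h1 : ContinuousLinearMap.adjoint At
        = ContinuousLinearMap.adjoint A
          + ContinuousLinearMap.adjoint P ∘L ContinuousLinearMap.adjoint ι := by
      rw [hAt, map_add, ContinuousLinearMap.adjoint_comp]
    rw [h1]; rfl
  have hAS : ∀ w : H1, ContinuousLinearMap.adjoint A (S (ι w))
      = ContinuousLinearMap.adjoint ι (S (A w)) := by
    intro w
    apply ext_inner_right ℝ
    intro y
    rw [ContinuousLinearMap.adjoint_inner_left, ContinuousLinearMap.adjoint_inner_left,
      hS, hS]
    exact (hAB w y).symm
  have hAtP : At ∘L P = ι ∘L P := by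
    ext x
    simp only [ContinuousLinearMap.comp_apply]
    rw [hAtapp]
    rw [show P (P x) = P x from hPid ⟨P x, hPmem x⟩, hAP, zero_add]
  have hAP0 : A ∘L P = 0 := by
    ext x
    simp only [ContinuousLinearMap.comp_apply, ContinuousLinearMap.zero_apply]
    exact hAP x
  have hPAt : ∀ z : H0, ContinuousLinearMap.adjoint P (ContinuousLinearMap.adjoint At z)
      = ContinuousLinearMap.adjoint P (ContinuousLinearMap.adjoint ι z) := by
    intro z
    have h := congrArg ContinuousLinearMap.adjoint hAtP
    rw [ContinuousLinearMap.adjoint_comp, ContinuousLinearMap.adjoint_comp] at h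
    exact DFunLike.congr_fun h z
  have hPA : ∀ z : H0, ContinuousLinearMap.adjoint P (ContinuousLinearMap.adjoint A z) = 0 := by
    intro z
    have h := congrArg ContinuousLinearMap.adjoint hAP0
    rw [ContinuousLinearMap.adjoint_comp, map_zero] at h
    exact DFunLike.congr_fun h z
  have hAtsymop : ∀ x : H1, ContinuousLinearMap.adjoint At (S (ι x))
      = ContinuousLinearMap.adjoint ι (S (At x)) := by
    intro x
    apply ext_inner_right ℝ
    intro y
    rw [ContinuousLinearMap.adjoint_inner_left, ContinuousLinearMap.adjoint_inner_left,
      hS, hS]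
    exact (hAtsym x y).symm
  -- the equivalence given by the adjoint of At
  have hBdinv : ∀ u : H0, ContinuousLinearMap.adjoint ((AtE.symm : H0 →L[ℝ] H1))
      (ContinuousLinearMap.adjoint At u) = u := by
    intro u
    have h1 : At ∘L (AtE.symm : H0 →L[ℝ] H1) = ContinuousLinearMap.id ℝ H0 := by
      ext y
      simp only [ContinuousLinearMap.comp_apply, ContinuousLinearMap.coe_coe,
        ContinuousLinearMap.id_apply]
      rw [← hAtE]
      exact AtE.apply_symm_apply y
    have h2 := congrArg ContinuousLinearMap.adjoint h1
    rw [ContinuousLinearMap.adjoint_comp, ContinuousLinearMap.adjoint_id] at h2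
    exact DFunLike.congr_fun h2 u
  have hBdinv2 : ∀ u : H1, ContinuousLinearMap.adjoint At
      (ContinuousLinearMap.adjoint ((AtE.symm : H0 →L[ℝ] H1)) u) = u := by
    intro u
    have h1 : (AtE.symm : H0 →L[ℝ] H1) ∘L At = ContinuousLinearMap.id ℝ H1 := by
      ext y
      simp only [ContinuousLinearMap.comp_apply, ContinuousLinearMap.coe_coe,
        ContinuousLinearMap.id_apply]
      rw [← hAtE]
      exact AtE.symm_apply_apply y
    have h2 := congrArg ContinuousLinearMap.adjoint h1
    rw [ContinuousLinearMap.adjoint_comp, ContinuousLinearMap.adjoint_id] at h2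
    exact DFunLike.congr_fun h2 u
  have hBdbij : Function.Bijective (ContinuousLinearMap.adjoint At : H0 →L[ℝ] H1) := by
    constructor
    · intro a b hab
      rw [← hBdinv a, ← hBdinv b, hab]
    · intro u
      exact ⟨ContinuousLinearMap.adjoint ((AtE.symm : H0 →L[ℝ] H1)) u, hBdinv2 u⟩
  obtain ⟨Bd, hBd⟩ : ∃ Bd : H0 ≃L[ℝ] H1, ∀ u, Bd u = ContinuousLinearMap.adjoint At u :=
    ⟨ContinuousLinearEquiv.ofBijective (ContinuousLinearMap.adjoint At)
      (LinearMap.ker_eq_bot.mpr hBdbij.1) (LinearMap.range_eq_top.mpr hBdbij.2), fun u => rfl⟩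
  -- the operator T
  set T : H1 →L[ℝ] H1 := ((AtE.symm : H0 →L[ℝ] H1)) ∘L ((S.symm : H0 →L[ℝ] H0))
    ∘L ((Bd.symm : H1 →L[ℝ] H0)) with hT
  have hTapp : ∀ x : H1, T x = AtE.symm (S.symm (Bd.symm x)) := fun x => rfl
  set Rop : H1 →L[ℝ] H1 := (ContinuousLinearMap.adjoint At) ∘L ((S : H0 →L[ℝ] H0)) ∘L At
    with hRop
  have hRapp : ∀ x : H1, Rop x = ContinuousLinearMap.adjoint At (S (At x)) := fun x => rfl
  have hTR : ∀ x : H1, T (Rop x) = x := by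
    intro x
    rw [hRapp, hTapp]
    have h1 : Bd.symm (ContinuousLinearMap.adjoint At (S (At x))) = S (At x) := by
      rw [← hBd]
      exact Bd.symm_apply_apply _
    rw [h1, S.symm_apply_apply, ← hAtE, AtE.symm_apply_apply]
  have hRT : ∀ x : H1, Rop (T x) = x := by
    intro x
    rw [hRapp, hTapp]
    have h1 : At (AtE.symm (S.symm (Bd.symm x))) = S.symm (Bd.symm x) := by
      rw [← hAtE]
      exact AtE.apply_symm_apply _
    rw [h1, S.apply_symm_apply, ← hBd]
    exact Bd.apply_symm_apply x
  have hRP : ∀ x : H1, Rop (P x) = ContinuousLinearMap.adjoint P (Rop x) := by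
    intro x
    have h1 : At (P x) = ι (P x) := DFunLike.congr_fun hAtP x
    have h2 : ContinuousLinearMap.adjoint A (S (ι (P x))) = 0 := by
      rw [hAS, hAP, map_zero, map_zero]
    have h3 : ContinuousLinearMap.adjoint P (ContinuousLinearMap.adjoint ι (S (A x))) = 0 := by
      rw [← hAS, hPA]
    calc Rop (P x) = ContinuousLinearMap.adjoint At (S (At (P x))) := hRapp _
      _ = ContinuousLinearMap.adjoint At (S (ι (P x))) := by rw [h1]
      _ = ContinuousLinearMap.adjoint A (S (ι (P x)))
          + ContinuousLinearMap.adjoint P (ContinuousLinearMap.adjoint ι (S (ι (P x)))) :=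
        hAtd _
      _ = ContinuousLinearMap.adjoint P (ContinuousLinearMap.adjoint ι (S (ι (P x)))) := by
        rw [h2, zero_add]
      _ = ContinuousLinearMap.adjoint P (ContinuousLinearMap.adjoint ι (S (A x)))
          + ContinuousLinearMap.adjoint P (ContinuousLinearMap.adjoint ι (S (ι (P x)))) := by
        rw [h3, zero_add]
      _ = ContinuousLinearMap.adjoint P (ContinuousLinearMap.adjoint ι (S (A x))
          + ContinuousLinearMap.adjoint ι (S (ι (P x)))) := (map_add _ _ _).symm
      _ = ContinuousLinearMap.adjoint P (ContinuousLinearMap.adjoint ι (S (A x) + S (ι (P x)))) := by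
        rw [map_add (ContinuousLinearMap.adjoint ι)]
      _ = ContinuousLinearMap.adjoint P (ContinuousLinearMap.adjoint ι (S (A x + ι (P x)))) := by
        rw [map_add S]
      _ = ContinuousLinearMap.adjoint P (ContinuousLinearMap.adjoint ι (S (At x))) := by
        rw [← hAtapp]
      _ = ContinuousLinearMap.adjoint P (ContinuousLinearMap.adjoint At (S (At x))) :=
        (hPAt _).symm
      _ = ContinuousLinearMap.adjoint P (Rop x) := by rw [hRapp]
  have hTP : ∀ w : H1, T (ContinuousLinearMap.adjoint P w) = P (T w) := by
    intro w
    have h1 : P (T w) = T (Rop (P (T w))) := (hTR _).symm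
    rw [hRP (T w), hRT w] at h1
    exact h1.symm
  have hf4 : ∀ w : H0, ι (T (ContinuousLinearMap.adjoint At w))
      = At (T (ContinuousLinearMap.adjoint ι w)) := by
    intro w
    have hL : T (ContinuousLinearMap.adjoint At w) = AtE.symm (S.symm w) := by
      rw [hTapp]
      congr 1
      rw [← hBd]
      exact congrArg _ (Bd.symm_apply_apply w)
    have hR : At (T (ContinuousLinearMap.adjoint ι w))
        = S.symm (Bd.symm (ContinuousLinearMap.adjoint ι w)) := by
      rw [hTapp, ← hAtE]
      exact AtE.apply_symm_apply _
    rw [hL, hR]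
    have key : Bd (S (ι (AtE.symm (S.symm w))))
        = Bd (S (S.symm (Bd.symm (ContinuousLinearMap.adjoint ι w)))) := by
      rw [S.apply_symm_apply, Bd.apply_symm_apply]
      rw [hBd, hAtsymop]
      have h5 : At (AtE.symm (S.symm w)) = S.symm w := by
        rw [← hAtE]; exact AtE.apply_symm_apply _
      rw [h5, S.apply_symm_apply]
    exact S.injective (Bd.injective key)
  have hmain : ∀ u : H0, ι (T (ContinuousLinearMap.adjoint A u))
      = A (T (ContinuousLinearMap.adjoint ι u)) := by
    intro u
    have hAd : ContinuousLinearMap.adjoint A u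
        = ContinuousLinearMap.adjoint At u
          - ContinuousLinearMap.adjoint P (ContinuousLinearMap.adjoint ι u) := by
      rw [hAtd]; abel
    rw [hAd, map_sub, map_sub, hf4 u, hTP (ContinuousLinearMap.adjoint ι u)]
    rw [hAtapp (T (ContinuousLinearMap.adjoint ι u))]
    abel
  -- the bilinear form on the dual space
  set rs : (H1 →L[ℝ] ℝ) →L[ℝ] H1 := ((riesz H1).symm : (H1 →L[ℝ] ℝ) →L[ℝ] H1) with hrs
  set G : (H1 →L[ℝ] ℝ) →L[ℝ] (H1 →L[ℝ] ℝ) :=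
    ((riesz H1 : H1 →L[ℝ] (H1 →L[ℝ] ℝ))) ∘L (T ∘L rs) with hG
  set Ψ : (H1 →L[ℝ] ℝ) →L[ℝ] ((H1 →L[ℝ] ℝ) →L[ℝ] ℝ) := (dualOp rs) ∘L G with hΨdef
  have hΨ : ∀ α β : H1 →L[ℝ] ℝ,
      Ψ α β = ⟪T ((riesz H1).symm α), (riesz H1).symm β⟫_ℝ := fun α β => rfl
  have hTsym : ∀ u v : H1, ⟪T u, v⟫_ℝ = ⟪u, T v⟫_ℝ := by
    intro u v
    have hL : ⟪T u, v⟫_ℝ = ⟪S (At (T u)), At (T v)⟫_ℝ := by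
      calc ⟪T u, v⟫_ℝ = ⟪T u, Rop (T v)⟫_ℝ := by rw [hRT]
        _ = ⟪T u, ContinuousLinearMap.adjoint At (S (At (T v)))⟫_ℝ := by rw [hRapp]
        _ = ⟪At (T u), S (At (T v))⟫_ℝ := ContinuousLinearMap.adjoint_inner_right At _ _
        _ = ⟪S (At (T u)), At (T v)⟫_ℝ := hS' _ _
    have hR : ⟪u, T v⟫_ℝ = ⟪S (At (T u)), At (T v)⟫_ℝ := by
      calc ⟪u, T v⟫_ℝ = ⟪Rop (T u), T v⟫_ℝ := by rw [hRT]
        _ = ⟪ContinuousLinearMap.adjoint At (S (At (T u))), T v⟫_ℝ := by rw [hRapp]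
        _ = ⟪S (At (T u)), At (T v)⟫_ℝ := ContinuousLinearMap.adjoint_inner_left At _ _
    rw [hL, hR]
  refine ⟨Ψ, ?_, ?_, ?_⟩
  · intro α β
    rw [hΨ, hΨ, hTsym]
    exact real_inner_comm _ _
  · -- bounds
    set K1 : ℝ := ‖(ContinuousLinearMap.adjoint At : H0 →L[ℝ] H1)‖ * ‖((S : H0 →L[ℝ] H0))‖
      with hK1def
    set K2 : ℝ := ‖((S.symm : H0 →L[ℝ] H0))‖ * ‖((Bd.symm : H1 →L[ℝ] H0))‖ with hK2def
    have hK1 : 0 ≤ K1 := mul_nonneg (norm_nonneg _) (norm_nonneg _)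
    have hK2 : 0 ≤ K2 := mul_nonneg (norm_nonneg _) (norm_nonneg _)
    have hm' : 0 < m / (K1 + 1) ^ 2 := by positivity
    refine ⟨m / (K1 + 1) ^ 2, max M 0 * K2 ^ 2, hm', ?_⟩
    intro α
    set u : H1 := (riesz H1).symm α with hu
    have hnorm : ‖u‖ = ‖α‖ := norm_riesz_symm α
    set w : H0 := Bd.symm u with hw
    set z : H0 := S.symm w with hz
    have hSz : S z = w := S.apply_symm_apply w
    have huw : u = ContinuousLinearMap.adjoint At w := by
      rw [← hBd]
      exact (Bd.apply_symm_apply u).symm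
    have hval : Ψ α α = Φ z z := by
      rw [hΨ]
      have hTu : T u = AtE.symm z := hTapp u
      calc ⟪T u, u⟫_ℝ = ⟪AtE.symm z, ContinuousLinearMap.adjoint At w⟫_ℝ := by
            rw [hTu, ← huw]
        _ = ⟪At (AtE.symm z), w⟫_ℝ := ContinuousLinearMap.adjoint_inner_right At _ _
        _ = ⟪AtE (AtE.symm z), w⟫_ℝ := by rw [hAtE]
        _ = ⟪z, w⟫_ℝ := by rw [AtE.apply_symm_apply]
        _ = ⟪z, S z⟫_ℝ := by rw [hSz]
        _ = ⟪S z, z⟫_ℝ := hS' _ _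
        _ = Φ z z := hS _ _
    have hu_le : ‖u‖ ≤ K1 * ‖z‖ := by
      have h1 : ‖u‖ = ‖ContinuousLinearMap.adjoint At (S z)‖ := by rw [hSz, ← huw]
      rw [h1, hK1def, mul_assoc]
      refine le_trans (ContinuousLinearMap.le_opNorm _ _) ?_
      refine mul_le_mul_of_nonneg_left ?_ (norm_nonneg _)
      exact ContinuousLinearMap.le_opNorm ((S : H0 →L[ℝ] H0)) z
    have hz_le : ‖z‖ ≤ K2 * ‖u‖ := by
      rw [hz, hw, hK2def, mul_assoc]
      refine le_trans (ContinuousLinearMap.le_opNorm ((S.symm : H0 →L[ℝ] H0)) _) ?_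
      refine mul_le_mul_of_nonneg_left ?_ (norm_nonneg _)
      exact ContinuousLinearMap.le_opNorm ((Bd.symm : H1 →L[ℝ] H0)) u
    constructor
    · rw [hval, ← hnorm]
      exact le_trans (aux_lower hm hK1 hu_le (norm_nonneg u) (norm_nonneg z)) (hbd z).1
    · have h4 : ‖z‖ ^ 2 ≤ K2 ^ 2 * ‖u‖ ^ 2 :=
        aux_upper hK2 hz_le (norm_nonneg u) (norm_nonneg z)
      have h5 : Φ z z ≤ max M 0 * ‖z‖ ^ 2 :=
        le_trans (hbd z).2 (mul_le_mul_of_nonneg_right (le_max_left M 0) (sq_nonneg _))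
      rw [hval, ← hnorm]
      calc Φ z z ≤ max M 0 * ‖z‖ ^ 2 := h5
        _ ≤ max M 0 * (K2 ^ 2 * ‖u‖ ^ 2) :=
          mul_le_mul_of_nonneg_left h4 (le_max_right M 0)
        _ = max M 0 * K2 ^ 2 * ‖u‖ ^ 2 := (mul_assoc _ _ _).symm
  · intro α β
    rw [hΨ, hΨ, riesz_symm_dualOp A α, riesz_symm_dualOp ι β,
      riesz_symm_dualOp ι α, riesz_symm_dualOp A β]
    set u : H0 := (riesz H0).symm α with hu
    set v : H0 := (riesz H0).symm β with hv
    calc ⟪T (ContinuousLinearMap.adjoint A u), ContinuousLinearMap.adjoint ι v⟫_ℝ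
        = ⟪ι (T (ContinuousLinearMap.adjoint A u)), v⟫_ℝ :=
          ContinuousLinearMap.adjoint_inner_right ι _ _
      _ = ⟪A (T (ContinuousLinearMap.adjoint ι u)), v⟫_ℝ := by rw [hmain]
      _ = ⟪T (ContinuousLinearMap.adjoint ι u), ContinuousLinearMap.adjoint A v⟫_ℝ :=
          (ContinuousLinearMap.adjoint_inner_right A _ _).symm

end AuxiliaryLemmas

/-- if `A ∈ L(H₁,H₀)` is symmetrizable and Fredholm of index zero, then its
Banach adjoint `A* : H₀* → H₁*` is Fredholm of index zero and symmetrizable with respect to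
the pair `(H₁*,H₀*)` with inclusion `ι*`; moreover, if `A` is bijective then so is `A*`. -/
theorem adjoint_symmetrizable_fredholm
    {H0 H1 : Type*}
    [NormedAddCommGroup H0] [InnerProductSpace ℝ H0] [CompleteSpace H0]
    [NormedAddCommGroup H1] [InnerProductSpace ℝ H1] [CompleteSpace H1]
    (h0inf : ¬ FiniteDimensional ℝ H0) (h1inf : ¬ FiniteDimensional ℝ H1)
    (ι : H1 →L[ℝ] H0) (hι_inj : Function.Injective ι)
    (hι_cpt : IsCompactOperator (⇑ι)) (hι_dense : DenseRange ι)
    (A : H1 →L[ℝ] H0)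
    (hsym : Symmetrizable ι A) (hfred : FredholmIdxZero A) :
    FredholmIdxZero (dualOp A) ∧
    Symmetrizable (dualOp ι) (dualOp A) ∧
    (Function.Bijective ⇑A → Function.Bijective ⇑(dualOp A)) := by
  obtain ⟨Φ, hΦsym, ⟨m, M, hm, hbd⟩, hAB⟩ := hsym
  obtain ⟨h1, h2, h3, h4⟩ := hfred
  have hfredadj := fredholm_adjoint A ⟨h1, h2, h3, h4⟩
  refine ⟨?_, ?_, ?_⟩
  · rw [dualOp_eq_conj A]
    exact fredholm_conj (ContinuousLinearMap.adjoint A) (riesz H0).symm (riesz H1) hfredadj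
  · exact symmetrizable_dual ι hι_inj A Φ hΦsym m M hm hbd hAB h1 h3 h4
  · exact bij_dualOp A
end

section
/- Let (H₀,H₁) be a Hilbert space pair and let 𝔸 ∈ L(H₁,H₀) be symmetric, i.e. ⟨𝔸x, ιy⟩₀ = ⟨ιx, 𝔸y⟩₀ for all x, y ∈ H₁. Then for every ξ ∈ P₁(ℝ) the mixed term vanishes, ∫_ℝ ⟨∂ₛξ(s), 𝔸(ξ(s))⟩₀ ds = 0, and consequently ‖∂ₛξ + 𝔸ξ‖²_{L²(ℝ,H₀)} = ‖𝔸ξ‖²_{L²(ℝ,H₀)} + ‖∂ₛξ‖²_{L²(ℝ,H₀)}. -/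
open MeasureTheory
open scoped RealInnerProductSpace ENNReal

set_option linter.unusedSectionVars false
set_option linter.unusedVariables false

section helpers
variable {H : Type*} [NormedAddCommGroup H] [InnerProductSpace ℝ H] [CompleteSpace H]
variable {α : Type*} [MeasurableSpace α] {μ : Measure α}

lemma inner_integrable_of_memL2 {f g : α → H} (hf : MemLp f 2 μ) (hg : MemLp g 2 μ) :
    Integrable (fun s => ⟪f s, g s⟫) μ := by
  have h := L2.integrable_inner (𝕜 := ℝ) (hf.toLp f) (hg.toLp g)
  refine h.congr ?_
  filter_upwards [hf.coeFn_toLp, hg.coeFn_toLp] with x hx hy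
  rw [hx, hy]

lemma integral_norm_mul_le_of_memL2 {f g : α → H} (hf : MemLp f 2 μ) (hg : MemLp g 2 μ) :
    ∫ s, ‖f s‖ * ‖g s‖ ∂μ ≤ (eLpNorm f 2 μ).toReal * (eLpNorm g 2 μ).toReal := by
  have hfn : MemLp (fun s => ‖f s‖) 2 μ := hf.norm
  have hgn : MemLp (fun s => ‖g s‖) 2 μ := hg.norm
  set F := hfn.toLp _
  set G := hgn.toLp _
  have h1 : ∫ s, ‖f s‖ * ‖g s‖ ∂μ = (⟪F, G⟫ : ℝ) := by
    rw [L2.inner_def]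
    refine integral_congr_ae ?_
    filter_upwards [hfn.coeFn_toLp, hgn.coeFn_toLp] with x hx hy
    rw [hx, hy, RCLike.inner_apply, conj_trivial, mul_comm]
  have h2 : (⟪F, G⟫ : ℝ) ≤ ‖F‖ * ‖G‖ := real_inner_le_norm F G
  rw [h1]
  refine h2.trans (le_of_eq ?_)
  rw [Lp.norm_toLp _ hfn, Lp.norm_toLp _ hgn, eLpNorm_norm, eLpNorm_norm]
end helpers

/-- `ξ ∈ P₁(ℝ)` with (weak) derivative `ξ'`. -/
def P1R {H0 H1 : Type*}
    [NormedAddCommGroup H0] [InnerProductSpace ℝ H0] [CompleteSpace H0]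
    [NormedAddCommGroup H1] [InnerProductSpace ℝ H1] [CompleteSpace H1]
    (ι : H1 →L[ℝ] H0) (ξ : ℝ → H1) (ξ' : ℝ → H0) : Prop :=
  MemLp ξ 2 (volume : Measure ℝ) ∧ MemLp ξ' 2 (volume : Measure ℝ) ∧
  ∀ s t : ℝ, ι (ξ t) - ι (ξ s) = ∫ u in s..t, ξ' u

/-- for a symmetric `𝔸 : H₁ → H₀` (i.e. `⟨𝔸x, ιy⟩₀ = ⟨ιx, 𝔸y⟩₀`), the mixed
term `∫_ℝ ⟨∂ₛξ, 𝔸ξ⟩₀ ds` vanishes for every `ξ ∈ P₁(ℝ)`, and consequently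
`‖∂ₛξ + 𝔸ξ‖²_{L²} = ‖𝔸ξ‖²_{L²} + ‖∂ₛξ‖²_{L²}`. -/
theorem mixed_term_vanishes
    {H0 H1 : Type*}
    [NormedAddCommGroup H0] [InnerProductSpace ℝ H0] [CompleteSpace H0]
    [NormedAddCommGroup H1] [InnerProductSpace ℝ H1] [CompleteSpace H1]
    (h0inf : ¬ FiniteDimensional ℝ H0) (h1inf : ¬ FiniteDimensional ℝ H1)
    (ι : H1 →L[ℝ] H0) (hι_inj : Function.Injective ι)
    (hι_cpt : IsCompactOperator (⇑ι)) (hι_dense : DenseRange ι)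
    (𝔸 : H1 →L[ℝ] H0)
    (h_sym : ∀ x y : H1, ⟪𝔸 x, ι y⟫ = ⟪ι x, 𝔸 y⟫) :
    ∀ (ξ : ℝ → H1) (ξ' : ℝ → H0), P1R ι ξ ξ' →
      (∫ s : ℝ, ⟪ξ' s, 𝔸 (ξ s)⟫) = 0 ∧
      (∫ s : ℝ, ‖ξ' s + 𝔸 (ξ s)‖ ^ 2) =
        (∫ s : ℝ, ‖𝔸 (ξ s)‖ ^ 2) + ∫ s : ℝ, ‖ξ' s‖ ^ 2 := by
  intro ξ ξ' hP
  obtain ⟨hξ2, hξ'2, hFTC⟩ := hP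
  -- strongly measurable representatives
  set f : ℝ → H0 := hξ'2.1.mk ξ' with hf_def
  have hf_sm : StronglyMeasurable f := hξ'2.1.stronglyMeasurable_mk
  have hf_ae : ξ' =ᵐ[volume] f := hξ'2.1.ae_eq_mk
  have hf2 : MemLp f 2 (volume : Measure ℝ) := hξ'2.ae_eq hf_ae
  set ζ : ℝ → H1 := hξ2.1.mk ξ with hζ_def
  have hζ_sm : StronglyMeasurable ζ := hξ2.1.stronglyMeasurable_mk
  have hζ_ae : ξ =ᵐ[volume] ζ := hξ2.1.ae_eq_mk
  have hζ2 : MemLp ζ 2 (volume : Measure ℝ) := hξ2.ae_eq hζ_ae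
  set q : ℝ → H0 := fun u => 𝔸 (ζ u) with hq_def
  have hq_sm : StronglyMeasurable q := 𝔸.continuous.comp_stronglyMeasurable hζ_sm
  have hq2 : MemLp q 2 (volume : Measure ℝ) := 𝔸.comp_memLp' hζ2
  have hq_ae : (fun s => 𝔸 (ξ s)) =ᵐ[volume] q := hζ_ae.fun_comp 𝔸
  set p : ℝ → H0 := fun t => ι (ξ t) with hp_def
  have hp2 : MemLp p 2 (volume : Measure ℝ) := ι.comp_memLp' hξ2
  -- shifts
  have hshift : ∀ {H : Type _} [NormedAddCommGroup H] (g : ℝ → H),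
      MemLp g 2 (volume : Measure ℝ) → ∀ c : ℝ,
      MemLp (fun u => g (u + c)) 2 (volume : Measure ℝ) := by
    intro H _ g hg c
    exact hg.comp_measurePreserving (measurePreserving_add_right volume c)
  have haeshift : ∀ {H : Type _} [NormedAddCommGroup H] {g g' : ℝ → H},
      g =ᵐ[volume] g' → ∀ c : ℝ,
      (fun u => g (u + c)) =ᵐ[volume] (fun u => g' (u + c)) := by
    intro H _ g g' h c
    exact (measurePreserving_add_right volume c).quasiMeasurePreserving.ae_eq_comp h
  -- interval integrability of L² functions
  have hII : ∀ {H : Type _} [NormedAddCommGroup H] (g : ℝ → H),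
      MemLp g 2 (volume : Measure ℝ) → ∀ a b : ℝ, IntervalIntegrable g volume a b := by
    intro H _ g hg a b
    rw [intervalIntegrable_iff]
    haveI : IsFiniteMeasure ((volume : Measure ℝ).restrict (Set.uIoc a b)) := by
      constructor
      rw [Measure.restrict_apply_univ]
      exact measure_Ioc_lt_top
    exact (hg.restrict _).integrable one_le_two
  -- continuity of p
  have hp_cont : Continuous p := by
    have h1 : Continuous fun t => ∫ u in (0:ℝ)..t, ξ' u :=
      intervalIntegral.continuous_primitive (fun a b => hII ξ' hξ'2 a b) 0
    have h2 : p = fun t => (∫ u in (0:ℝ)..t, ξ' u) + p 0 := by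
      funext t
      have := hFTC 0 t
      simp only [hp_def]
      rw [← this]
      abel
    rw [h2]
    exact h1.add continuous_const
  -- the function C
  set C : ℝ → ℝ := fun r => ∫ u, ⟪f (u + r), q u⟫ with hC_def
  -- T and evenness
  set T : ℝ → ℝ := fun h => ∫ u, ⟪p (u + h), q u⟫ with hT_def
  have hTeven : ∀ h : ℝ, T h = T (-h) := by
    intro h
    have step1 : T h = ∫ u, ⟪ι (ζ u), 𝔸 (ξ (u + h))⟫ := by
      simp only [hT_def, hp_def, hq_def]
      refine integral_congr_ae (Filter.Eventually.of_forall fun u => ?_)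
      beta_reduce
      show ⟪ι (ξ (u + h)), 𝔸 (ζ u)⟫ = ⟪ι (ζ u), 𝔸 (ξ (u + h))⟫
      rw [real_inner_comm]
      exact h_sym (ζ u) (ξ (u + h))
    have step2 : (∫ u, ⟪ι (ζ u), 𝔸 (ξ (u + h))⟫) = ∫ v, ⟪ι (ζ (v + -h)), 𝔸 (ξ v)⟫ := by
      have := integral_add_right_eq_self (μ := (volume : Measure ℝ))
        (fun v => ⟪ι (ζ (v + -h)), 𝔸 (ξ v)⟫) h
      rw [← this]
      refine integral_congr_ae (Filter.Eventually.of_forall fun u => ?_)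
      beta_reduce
      simp
    have step3 : (∫ v, ⟪ι (ζ (v + -h)), 𝔸 (ξ v)⟫) = T (-h) := by
      simp only [hT_def, hp_def, hq_def]
      refine integral_congr_ae ?_
      filter_upwards [haeshift hζ_ae.symm (-h), hζ_ae] with v hv1 hv2
      rw [hv1, hv2]
    rw [step1, step2, step3]
  -- T h - T 0 as a double integral
  have hTsub : ∀ h : ℝ, T h - T 0 = ∫ u, ∫ r in (0:ℝ)..h, ⟪f (u + r), q u⟫ := by
    intro h
    have hint1 : Integrable (fun u => ⟪p (u + h), q u⟫) volume :=
      inner_integrable_of_memL2 (hshift p hp2 h) hq2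
    have hint0 : Integrable (fun u => ⟪p u, q u⟫) volume :=
      inner_integrable_of_memL2 hp2 hq2
    have hTh : T h - T 0 = ∫ u, (⟪p (u + h), q u⟫ - ⟪p u, q u⟫) := by
      simp only [hT_def, add_zero]
      exact (integral_sub hint1 hint0).symm
    rw [hTh]
    refine integral_congr_ae (Filter.Eventually.of_forall fun u => ?_)
    beta_reduce
    have e1 : p (u + h) - p u = ∫ w in u..(u+h), ξ' w := by
      simp only [hp_def]
      exact hFTC u (u + h)
    have e2 : (∫ w in u..(u+h), ξ' w) = ∫ w in u..(u+h), f w := by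
      refine intervalIntegral.integral_congr_ae ?_
      exact hf_ae.mono fun x hx _ => hx
    have e3 : ⟪p (u + h), q u⟫ - ⟪p u, q u⟫ = ⟪p (u+h) - p u, q u⟫ := by
      rw [inner_sub_left]
    rw [e3, e1, e2]
    have e4 : (⟪∫ w in u..(u+h), f w, q u⟫ : ℝ) = ∫ w in u..(u+h), ⟪f w, q u⟫ := by
      have hcomm : (⟪q u, (∫ w in u..(u+h), f w)⟫ : ℝ) = ∫ w in u..(u+h), ⟪q u, f w⟫ :=
        ((innerSL ℝ (q u)).intervalIntegral_comp_comm (hII f hf2 u (u+h))).symm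
      rw [real_inner_comm, hcomm]
      refine intervalIntegral.integral_congr fun w _ => ?_
      exact real_inner_comm _ _
    rw [e4]
    have e5 : (∫ r in (0:ℝ)..h, ⟪f (u + r), q u⟫) = ∫ w in u..(u+h), ⟪f w, q u⟫ := by
      have := intervalIntegral.integral_comp_add_right (a := (0:ℝ)) (b := h)
        (fun w => (⟪f w, q u⟫ : ℝ)) u
      rw [zero_add, add_comm h u] at this
      rw [← this]
      refine intervalIntegral.integral_congr fun r _ => ?_
      rw [add_comm]
    rw [e5]
  -- product integrability and Fubini
  have hprod : ∀ a b : ℝ, Integrable (Function.uncurry fun u r => (⟪f (u + r), q u⟫ : ℝ))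
      ((volume : Measure ℝ).prod ((volume : Measure ℝ).restrict (Set.Ioc a b))) := by
    intro a b
    haveI : IsFiniteMeasure ((volume : Measure ℝ).restrict (Set.Ioc a b)) := by
      constructor
      rw [Measure.restrict_apply_univ]
      exact measure_Ioc_lt_top
    have hGm : StronglyMeasurable (Function.uncurry fun u r => (⟪f (u + r), q u⟫ : ℝ)) :=
      (hf_sm.comp_measurable (measurable_fst.add measurable_snd)).inner
        (hq_sm.comp_measurable measurable_fst)
    rw [integrable_prod_iff' hGm.aestronglyMeasurable]
    constructor
    · refine Filter.Eventually.of_forall fun r => ?_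
      exact inner_integrable_of_memL2 (hshift f hf2 r) hq2
    · refine Integrable.mono'
        (integrable_const ((eLpNorm f 2 volume).toReal * (eLpNorm q 2 volume).toReal))
        ((hGm.norm.integral_prod_left').aestronglyMeasurable) ?_
      refine Filter.Eventually.of_forall fun r => ?_
      rw [Real.norm_of_nonneg (integral_nonneg fun u => norm_nonneg _)]
      have hmul : Integrable (fun u => ‖f (u + r)‖ * ‖q u‖) volume := by
        have := inner_integrable_of_memL2 (H := ℝ) (hshift f hf2 r).norm hq2.norm
        simpa [RCLike.inner_apply, mul_comm] using this
      calc (∫ u, ‖(⟪f (u + r), q u⟫ : ℝ)‖)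
          ≤ ∫ u, ‖f (u + r)‖ * ‖q u‖ := by
            refine integral_mono (inner_integrable_of_memL2 (hshift f hf2 r) hq2).norm hmul
              fun u => ?_
            exact norm_inner_le_norm _ _
        _ ≤ (eLpNorm (fun u => f (u + r)) 2 volume).toReal * (eLpNorm q 2 volume).toReal :=
            integral_norm_mul_le_of_memL2 (hshift f hf2 r) hq2
        _ = (eLpNorm f 2 volume).toReal * (eLpNorm q 2 volume).toReal := by
            have hsh : eLpNorm (fun u => f (u + r)) 2 volume = eLpNorm f 2 volume :=
              eLpNorm_comp_measurePreserving hf2.1 (measurePreserving_add_right volume r)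
            rw [hsh]
  have hswap : ∀ a b : ℝ, (∫ u, ∫ r in Set.Ioc a b, (⟪f (u + r), q u⟫ : ℝ)) =
      ∫ r in Set.Ioc a b, C r := by
    intro a b
    exact integral_integral_swap (hprod a b)
  -- T h - T 0 = ∫_0^h C
  have hΦ : ∀ h : ℝ, T h - T 0 = ∫ r in (0:ℝ)..h, C r := by
    intro h
    rw [hTsub h]
    rcases le_total 0 h with hh | hh
    · rw [intervalIntegral.integral_of_le hh, ← hswap 0 h]
      refine integral_congr_ae (Filter.Eventually.of_forall fun u => ?_)
      beta_reduce
      rw [intervalIntegral.integral_of_le hh]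
    · rw [intervalIntegral.integral_of_ge hh, ← hswap h 0]
      rw [← integral_neg]
      refine integral_congr_ae (Filter.Eventually.of_forall fun u => ?_)
      beta_reduce
      rw [intervalIntegral.integral_of_ge hh]
  -- continuity of C
  have hC_cont : Continuous C := by
    haveI : Fact ((1:ℝ≥0∞) ≤ 2) := fact_one_le_two_ennreal
    set fL := hf2.toLp f with hfL_def
    set qL := hq2.toLp q with hqL_def
    set cm : C(ℝ × ℝ, ℝ) := ⟨fun s => s.2 + s.1, by fun_prop⟩ with hcm_def
    set τ : C(ℝ, C(ℝ, ℝ)) := cm.curry with hτ_def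
    have hτr : ∀ r : ℝ, ⇑(τ r) = fun x : ℝ => x + r := fun r => rfl
    have hτmp : ∀ r : ℝ, MeasurePreserving (τ r) volume volume := fun r =>
      measurePreserving_add_right volume r
    have hΦc : Continuous fun r : ℝ => Lp.compMeasurePreserving (τ r) (hτmp r) fL :=
      Continuous.compMeasurePreservingLp continuous_const τ.continuous hτmp (by norm_num)
    have hCeq : ∀ r, C r = ⟪Lp.compMeasurePreserving (τ r) (hτmp r) fL, qL⟫ := by
      intro r
      rw [L2.inner_def]
      refine integral_congr_ae ?_
      have h1 : Lp.compMeasurePreserving (τ r) (hτmp r) fL =ᵐ[volume] (⇑fL) ∘ (τ r) :=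
        Lp.coeFn_compMeasurePreserving fL (hτmp r)
      have h2 : (⇑fL) ∘ (τ r) =ᵐ[volume] fun u => f (u + r) := by
        have h3 : ⇑fL =ᵐ[volume] f := hf2.coeFn_toLp
        exact (hτmp r).quasiMeasurePreserving.ae_eq_comp h3
      filter_upwards [h1, h2, hq2.coeFn_toLp] with u hu1 hu2 hu3
      rw [hu1]
      simp only [Function.comp_apply] at hu2 ⊢
      rw [hu2, hu3]
    rw [show C = fun r => (⟪Lp.compMeasurePreserving (τ r) (hτmp r) fL, qL⟫ : ℝ) from
      funext hCeq]
    exact Continuous.inner hΦc continuous_const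
  -- derivative argument
  have hD : HasDerivAt (fun t => ∫ r in (0:ℝ)..t, C r) (C 0) 0 :=
    intervalIntegral.integral_hasDerivAt_right (hC_cont.intervalIntegrable 0 0)
      (hC_cont.stronglyMeasurable.stronglyMeasurableAtFilter) hC_cont.continuousAt
  have hΦeven : (fun t => ∫ r in (0:ℝ)..t, C r) = fun t => ∫ r in (0:ℝ)..(-t), C r := by
    funext t
    rw [← hΦ t, ← hΦ (-t), hTeven t]
  have hD2 : HasDerivAt (fun t => ∫ r in (0:ℝ)..(-t), C r) (-(C 0)) 0 := by
    have h0 : HasDerivAt (fun t => ∫ r in (0:ℝ)..t, C r) (C 0) (-(0:ℝ)) := by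
      simpa using hD
    have h := h0.comp (0:ℝ) (hasDerivAt_neg (0:ℝ))
    simpa [Function.comp_def] using h
  have hD2' : HasDerivAt (fun t => ∫ r in (0:ℝ)..t, C r) (-(C 0)) 0 := by
    rw [hΦeven]; exact hD2
  have hCC : C 0 = -(C 0) := hD.unique hD2'
  have hC0 : C 0 = 0 := by linarith
  have hmain : (∫ s : ℝ, ⟪ξ' s, 𝔸 (ξ s)⟫) = 0 := by
    rw [← hC0]
    simp only [hC_def]
    refine integral_congr_ae ?_
    filter_upwards [hf_ae, hq_ae] with s hs1 hs2
    rw [add_zero, hs1, hs2]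
  refine ⟨hmain, ?_⟩
  -- part 2
  have hA2 : MemLp (fun s => 𝔸 (ξ s)) 2 (volume : Measure ℝ) := 𝔸.comp_memLp' hξ2
  have hi1 : Integrable (fun s => ‖ξ' s‖ ^ 2) volume := by
    have := inner_integrable_of_memL2 hξ'2 hξ'2
    simpa [real_inner_self_eq_norm_sq] using this
  have hi2 : Integrable (fun s => ‖𝔸 (ξ s)‖ ^ 2) volume := by
    have := inner_integrable_of_memL2 hA2 hA2
    simpa [real_inner_self_eq_norm_sq] using this
  have hi3 : Integrable (fun s => (⟪ξ' s, 𝔸 (ξ s)⟫ : ℝ)) volume :=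
    inner_integrable_of_memL2 hξ'2 hA2
  have hpt : (fun s => ‖ξ' s + 𝔸 (ξ s)‖ ^ 2) =
      fun s => (‖𝔸 (ξ s)‖ ^ 2 + ‖ξ' s‖ ^ 2) + 2 * ⟪ξ' s, 𝔸 (ξ s)⟫ := by
    funext s
    rw [norm_add_sq_real]
    ring
  have hi12 : Integrable (fun s => ‖𝔸 (ξ s)‖ ^ 2 + ‖ξ' s‖ ^ 2) volume := hi2.add hi1
  have hi3' : Integrable (fun s => 2 * (⟪ξ' s, 𝔸 (ξ s)⟫ : ℝ)) volume := hi3.const_mul 2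
  calc (∫ s : ℝ, ‖ξ' s + 𝔸 (ξ s)‖ ^ 2)
      = ∫ s : ℝ, ((‖𝔸 (ξ s)‖ ^ 2 + ‖ξ' s‖ ^ 2) + 2 * ⟪ξ' s, 𝔸 (ξ s)⟫) := by rw [hpt]
    _ = (∫ s : ℝ, (‖𝔸 (ξ s)‖ ^ 2 + ‖ξ' s‖ ^ 2)) + ∫ s : ℝ, 2 * (⟪ξ' s, 𝔸 (ξ s)⟫ : ℝ) :=
        integral_add hi12 hi3'
    _ = (∫ s : ℝ, ‖𝔸 (ξ s)‖ ^ 2) + ∫ s : ℝ, ‖ξ' s‖ ^ 2 := by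
        rw [integral_add hi2 hi1, integral_const_mul, hmain]
        ring
end

section
/- (Boundary-value estimate for a constant diagonal Hessian on a finite interval.) Fix T > 0 and a sequence a : ℕ → ℝ with a_ν ≠ 0 for all ν. Let ξ = (ξ_ν) lie in the diagonal-model space P₁([−T,T]). Then Σ_ν ∫_{−T}^{T} ( a_ν² ξ_ν(s)² + ξ_ν′(s)² ) ds ≤ Σ_ν ∫_{−T}^{T} ( ξ_ν′(s) + a_ν ξ_ν(s) )² ds + Σ_{ν : a_ν > 0} a_ν ξ_ν(−T)² + Σ_{ν : a_ν < 0} (−a_ν) ξ_ν(T)². -/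
open MeasureTheory Set

lemma selfconv (c d : ℝ) (hcd : c ≤ d) (g : ℝ → ℝ) (hg : Measurable g)
    (hgi : IntegrableOn g (Set.Icc c d)) :
    ∫ x in Set.Ioc c d, (∫ t in Set.Ioc c x, g t) * g x
      = (∫ t in Set.Ioc c d, g t) ^ 2 / 2 := by
  set μ := volume.restrict (Set.Ioc c d) with hμ
  have hgμ : Integrable g μ := hgi.mono_set Ioc_subset_Icc_self
  set I := ∫ t in Set.Ioc c d, g t with hI
  set H : ℝ → ℝ := fun x => ∫ t in Set.Ioc c x, g t with hH
  -- the kernel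
  set K : ℝ × ℝ → ℝ := fun p => if p.2 ≤ p.1 then g p.2 * g p.1 else 0 with hK
  have hKint : Integrable K (μ.prod μ) := by
    have h1 : Integrable (fun p : ℝ × ℝ => g p.1 * g p.2) (μ.prod μ) :=
      Integrable.mul_prod hgμ hgμ
    have h2 : Integrable (fun p : ℝ × ℝ => g p.2 * g p.1) (μ.prod μ) := by
      have := h1.swap
      exact this
    have hs : MeasurableSet {p : ℝ × ℝ | p.2 ≤ p.1} :=
      measurableSet_le measurable_snd measurable_fst
    have : K = {p : ℝ × ℝ | p.2 ≤ p.1}.indicator (fun p => g p.2 * g p.1) := by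
      funext p; simp [hK, Set.indicator_apply]
    rw [this]
    exact h2.indicator hs
  -- restriction computation
  have hres : ∀ x ∈ Set.Ioc c d, ∫ t, (Set.Iic x).indicator g t ∂μ = H x := by
    intro x hx
    rw [integral_indicator measurableSet_Iic, hμ,
      Measure.restrict_restrict measurableSet_Iic]
    have hset : Set.Iic x ∩ Set.Ioc c d = Set.Ioc c x := by
      ext t
      simp only [Set.mem_inter_iff, Set.mem_Iic, Set.mem_Ioc]
      constructor
      · rintro ⟨h1, h2, _⟩; exact ⟨h2, h1⟩
      · rintro ⟨h1, h2⟩; exact ⟨h2, h1, h2.trans hx.2⟩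
    rw [hset]
  have hresR : ∀ t ∈ Set.Ioc c d, ∫ x, (Set.Ici t).indicator g x ∂μ = I - H t := by
    intro t ht
    rw [integral_indicator measurableSet_Ici, hμ,
      Measure.restrict_restrict measurableSet_Ici]
    have hset : Set.Ici t ∩ Set.Ioc c d = Set.Ioc t d ∪ {t} := by
      ext x
      simp only [Set.mem_inter_iff, Set.mem_Ici, Set.mem_Ioc, Set.mem_union,
        Set.mem_singleton_iff]
      constructor
      · rintro ⟨h1, h2, h3⟩
        rcases eq_or_lt_of_le h1 with h | h
        · right; exact h.symm
        · left; exact ⟨h, h3⟩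
      · rintro (⟨h1, h2⟩ | rfl)
        · exact ⟨h1.le, ht.1.trans h1, h2⟩
        · exact ⟨le_refl _, ht.1, ht.2⟩
    rw [hset]
    have hae : (Set.Ioc t d ∪ {t} : Set ℝ) =ᵐ[volume] Set.Ioc t d := by
      refine (union_ae_eq_left_of_ae_eq_empty ?_)
      simp [ae_eq_empty]
    rw [Measure.restrict_congr_set hae]
    -- ∫ Ioc t d = I - H t
    have hsplit : (∫ s in Set.Ioc c t, g s) + ∫ s in Set.Ioc t d, g s = I := by
      rw [hI, ← setIntegral_union (Set.Ioc_disjoint_Ioc_of_le le_rfl) measurableSet_Ioc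
        (hgi.mono_set (Set.Ioc_subset_Icc_self.trans (Set.Icc_subset_Icc le_rfl ht.2)))
        (hgi.mono_set ((Set.Ioc_subset_Ioc_left ht.1.le).trans Set.Ioc_subset_Icc_self)),
        Set.Ioc_union_Ioc_eq_Ioc ht.1.le ht.2]
    linarith [hsplit]
  -- main computation
  have step1 : ∫ x, H x * g x ∂μ = ∫ x, ∫ t, K (x, t) ∂μ ∂μ := by
    refine integral_congr_ae ?_
    filter_upwards [ae_restrict_mem measurableSet_Ioc] with x hx
    have : ∀ t, K (x, t) = (Set.Iic x).indicator g t * g x := by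
      intro t
      by_cases h : t ≤ x <;> simp [hK, Set.indicator_apply, h]
    simp_rw [this]
    rw [integral_mul_const, hres x hx]
  have step2 : ∫ x, ∫ t, K (x, t) ∂μ ∂μ = ∫ t, ∫ x, K (x, t) ∂μ ∂μ := by
    exact integral_integral_swap hKint
  have step3 : ∫ t, ∫ x, K (x, t) ∂μ ∂μ = ∫ t, g t * (I - H t) ∂μ := by
    refine integral_congr_ae ?_
    filter_upwards [ae_restrict_mem measurableSet_Ioc] with t ht
    have : ∀ x, K (x, t) = (Set.Ici t).indicator g x * g t := by
      intro x
      by_cases h : t ≤ x <;> simp [hK, Set.indicator_apply, h, mul_comm]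
    simp_rw [this]
    rw [integral_mul_const, hresR t ht, mul_comm]
  have hHg : Integrable (fun t => g t * H t) μ := by
    have hHc : ContinuousOn H (Set.Icc c d) :=
      intervalIntegral.continuousOn_primitive hgi
    have : IntegrableOn (fun t => g t * H t) (Set.Icc c d) volume :=
      hgi.mul_continuousOn hHc isCompact_Icc
    exact this.mono_set Ioc_subset_Icc_self
  have step4 : ∫ t, g t * (I - H t) ∂μ = I * I - ∫ t, g t * H t ∂μ := by
    have : ∀ t, g t * (I - H t) = g t * I - g t * H t := fun t => by ring
    simp_rw [this]
    rw [integral_sub (hgμ.mul_const I) hHg, integral_mul_const]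
  have comm : ∫ t, g t * H t ∂μ = ∫ x, H x * g x ∂μ := by
    simp_rw [mul_comm]
  have key := step1.trans (step2.trans (step3.trans step4))
  rw [comm] at key
  nlinarith [key]

lemma per_mode (T : ℝ) (hT : 0 < T) (aν : ℝ) (haν : aν ≠ 0) (f g : ℝ → ℝ)
    (hg : Measurable g) (hgi : IntervalIntegrable g volume (-T) T)
    (hf : ∀ t ∈ Set.Icc (-T) T, f t = f (-T) + ∫ s in (-T)..t, g s)
    (hg2 : (∫⁻ s in Set.Icc (-T) T, ENNReal.ofReal ((g s) ^ 2)) ≠ ⊤) :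
    ∫⁻ s in Set.Icc (-T) T, ENNReal.ofReal (aν ^ 2 * f s ^ 2 + g s ^ 2)
      ≤ (∫⁻ s in Set.Icc (-T) T, ENNReal.ofReal ((g s + aν * f s) ^ 2))
        + (if 0 < aν then ENNReal.ofReal (aν * f (-T) ^ 2) else 0)
        + (if aν < 0 then ENNReal.ofReal (-aν * f T ^ 2) else 0) := by
  have hle : (-T) ≤ T := by linarith
  set c₀ : ℝ := f (-T) with hc₀
  have hgiIcc : IntegrableOn g (Set.Icc (-T) T) := by
    rw [integrableOn_Icc_iff_integrableOn_Ioc]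
    exact hgi.1
  -- continuity of f on Icc
  have hfc : ContinuousOn f (Set.Icc (-T) T) := by
    have : ContinuousOn (fun t => c₀ + ∫ s in (-T)..t, g s) (Set.Icc (-T) T) := by
      apply continuousOn_const.add
      have := intervalIntegral.continuousOn_primitive_interval
        (a := -T) (b := T) (f := g) (μ := volume) (by rwa [Set.uIcc_of_le hle])
      rwa [Set.uIcc_of_le hle] at this
    exact this.congr hf
  have hfi : IntegrableOn f (Set.Icc (-T) T) := hfc.integrableOn_Icc
  have hf2i : IntegrableOn (fun s => f s ^ 2) (Set.Icc (-T) T) :=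
    (hfc.pow 2).integrableOn_Icc
  have hg2i : IntegrableOn (fun s => g s ^ 2) (Set.Icc (-T) T) := by
    refine ⟨(hg.pow_const 2).aestronglyMeasurable, ?_⟩
    rw [hasFiniteIntegral_iff_ofReal (Filter.Eventually.of_forall fun s => sq_nonneg _)]
    exact hg2.lt_top
  have hfgi : IntegrableOn (fun s => f s * g s) (Set.Icc (-T) T) :=
    IntegrableOn.continuousOn_mul hfc hgiIcc isCompact_Icc
  -- the key integral identity
  have hIoc : ∀ t ∈ Set.Ioc (-T) T, f t = c₀ + ∫ s in Set.Ioc (-T) t, g s := by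
    intro t ht
    rw [hf t ⟨ht.1.le, ht.2⟩, intervalIntegral.integral_of_le ht.1.le]
  have hFT : f T = c₀ + ∫ s in Set.Ioc (-T) T, g s :=
    hIoc T ⟨by linarith, le_rfl⟩
  set I : ℝ := ∫ s in Set.Ioc (-T) T, g s with hI
  have hkey : ∫ s in Set.Icc (-T) T, f s * g s = (f T ^ 2 - c₀ ^ 2) / 2 := by
    rw [integral_Icc_eq_integral_Ioc]
    have : ∫ s in Set.Ioc (-T) T, f s * g s
        = ∫ s in Set.Ioc (-T) T, (c₀ * g s + (∫ t in Set.Ioc (-T) s, g t) * g s) := by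
      refine setIntegral_congr_fun measurableSet_Ioc fun s hs => ?_
      rw [hIoc s hs]; ring
    rw [this, integral_add ((hgiIcc.mono_set Set.Ioc_subset_Icc_self).const_mul c₀) ?_,
      integral_const_mul, selfconv (-T) T hle g hg hgiIcc, hFT]
    · ring
    · have hHc : ContinuousOn (fun x => ∫ t in Set.Ioc (-T) x, g t) (Set.Icc (-T) T) :=
        intervalIntegral.continuousOn_primitive hgiIcc
      have h2 : IntegrableOn (fun s => g s * ∫ t in Set.Ioc (-T) s, g t) (Set.Ioc (-T) T) :=
        (hgiIcc.mul_continuousOn hHc isCompact_Icc).mono_set Set.Ioc_subset_Icc_self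
      exact h2.congr_fun (fun s _ => by ring) measurableSet_Ioc
  -- real inequality
  set A : ℝ := ∫ s in Set.Icc (-T) T, (aν ^ 2 * f s ^ 2 + g s ^ 2) with hA
  set B : ℝ := ∫ s in Set.Icc (-T) T, (g s + aν * f s) ^ 2 with hB
  have hAi : IntegrableOn (fun s => aν ^ 2 * f s ^ 2 + g s ^ 2) (Set.Icc (-T) T) :=
    (hf2i.const_mul _).add hg2i
  have hBi : IntegrableOn (fun s => (g s + aν * f s) ^ 2) (Set.Icc (-T) T) := by
    have h : IntegrableOn (fun s => (aν ^ 2 * f s ^ 2 + g s ^ 2) + (2 * aν) * (f s * g s))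
        (Set.Icc (-T) T) := ((hf2i.const_mul (aν ^ 2)).add hg2i).add (hfgi.const_mul (2 * aν))
    exact h.congr_fun (fun s _ => by ring) measurableSet_Icc
  have hBA : B = A + 2 * aν * ∫ s in Set.Icc (-T) T, f s * g s := by
    have : ∀ s, (g s + aν * f s) ^ 2
        = (aν ^ 2 * f s ^ 2 + g s ^ 2) + (2 * aν) * (f s * g s) := fun s => by ring
    rw [hB, hA]
    simp_rw [this]
    rw [integral_add hAi (hfgi.const_mul _), integral_const_mul]
  have hBA' : B = A + aν * (f T ^ 2 - c₀ ^ 2) := by rw [hBA, hkey]; ring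
  have hA0 : 0 ≤ A := setIntegral_nonneg measurableSet_Icc fun s _ => by positivity
  have hB0 : 0 ≤ B := setIntegral_nonneg measurableSet_Icc fun s _ => by positivity
  set b : ℝ := if 0 < aν then aν * c₀ ^ 2 else -aν * f T ^ 2 with hb
  have hb0 : 0 ≤ b := by
    rw [hb]; split <;> rename_i h
    · positivity
    · have h' : aν < 0 := lt_of_le_of_ne (not_lt.mp h) haν
      nlinarith [sq_nonneg (f T)]
  have hAB : A ≤ B + b := by
    rw [hb]; split <;> rename_i h
    · nlinarith [sq_nonneg (f T)]
    · rcases haν.lt_or_gt with h' | h'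
      · nlinarith [sq_nonneg c₀]
      · exact absurd h' h
  -- pass to lintegrals
  have hLA : ∫⁻ s in Set.Icc (-T) T, ENNReal.ofReal (aν ^ 2 * f s ^ 2 + g s ^ 2)
      = ENNReal.ofReal A :=
    (ofReal_integral_eq_lintegral_ofReal hAi
      (Filter.Eventually.of_forall fun s => by positivity)).symm
  have hLB : ∫⁻ s in Set.Icc (-T) T, ENNReal.ofReal ((g s + aν * f s) ^ 2)
      = ENNReal.ofReal B :=
    (ofReal_integral_eq_lintegral_ofReal hBi
      (Filter.Eventually.of_forall fun s => by positivity)).symm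
  rw [hLA, hLB]
  have hsplit : (if 0 < aν then ENNReal.ofReal (aν * f (-T) ^ 2) else 0)
      + (if aν < 0 then ENNReal.ofReal (-aν * f T ^ 2) else 0) = ENNReal.ofReal b := by
    rw [hb]
    rcases haν.lt_or_gt with h | h
    · rw [if_neg (by linarith), if_pos h, if_neg (by linarith), zero_add]
    · rw [if_pos h, if_neg (by linarith), if_pos h, add_zero, ← hc₀]
  rw [add_assoc, hsplit, ← ENNReal.ofReal_add hB0 hb0]
  exact ENNReal.ofReal_le_ofReal hAB

open MeasureTheory

/-- boundary-value estimate for a constant diagonal Hessian on `[−T,T]`: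
for a diagonal operator with nonzero eigenvalues `a_ν` and `ξ = (ξ_ν)` in the
diagonal-model space `P₁([−T,T])`,
`Σ_ν ∫ (a_ν² ξ_ν² + ξ_ν′²) ≤ Σ_ν ∫ (ξ_ν′ + a_ν ξ_ν)²
  + Σ_{a_ν>0} a_ν ξ_ν(−T)² + Σ_{a_ν<0} (−a_ν) ξ_ν(T)²`. -/
theorem diagonal_boundary_estimate_finite_interval
    (T : ℝ) (hT : 0 < T) (a : ℕ → ℝ) (ha : ∀ ν, a ν ≠ 0)
    (ξ ξ' : ℕ → ℝ → ℝ)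
    (hmeas : ∀ ν, Measurable (ξ' ν))
    (hint : ∀ ν, IntervalIntegrable (ξ' ν) volume (-T) T)
    (hac : ∀ ν, ∀ t ∈ Set.Icc (-T) T, ξ ν t = ξ ν (-T) + ∫ s in (-T)..t, ξ' ν s)
    (hL2 : (∑' ν, ∫⁻ s in Set.Icc (-T) T, ENNReal.ofReal ((a ν) ^ 2 * (ξ ν s) ^ 2)) ≠ ⊤)
    (hL2d : (∑' ν, ∫⁻ s in Set.Icc (-T) T, ENNReal.ofReal ((ξ' ν s) ^ 2)) ≠ ⊤) :
    (∑' ν, ∫⁻ s in Set.Icc (-T) T,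
        ENNReal.ofReal ((a ν) ^ 2 * (ξ ν s) ^ 2 + (ξ' ν s) ^ 2)) ≤
      (∑' ν, ∫⁻ s in Set.Icc (-T) T,
          ENNReal.ofReal ((ξ' ν s + a ν * ξ ν s) ^ 2))
      + (∑' ν, if 0 < a ν then ENNReal.ofReal (a ν * (ξ ν (-T)) ^ 2) else 0)
      + (∑' ν, if a ν < 0 then ENNReal.ofReal (-(a ν) * (ξ ν T) ^ 2) else 0) := by
  have hterm : ∀ ν,
      (∫⁻ s in Set.Icc (-T) T,
          ENNReal.ofReal ((a ν) ^ 2 * (ξ ν s) ^ 2 + (ξ' ν s) ^ 2))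
        ≤ (∫⁻ s in Set.Icc (-T) T,
            ENNReal.ofReal ((ξ' ν s + a ν * ξ ν s) ^ 2))
          + (if 0 < a ν then ENNReal.ofReal (a ν * (ξ ν (-T)) ^ 2) else 0)
          + (if a ν < 0 then ENNReal.ofReal (-(a ν) * (ξ ν T) ^ 2) else 0) := by
    intro ν
    have hg2 : (∫⁻ s in Set.Icc (-T) T, ENNReal.ofReal ((ξ' ν s) ^ 2)) ≠ ⊤ :=
      ne_top_of_le_ne_top hL2d (ENNReal.le_tsum ν)
    exact per_mode T hT (a ν) (ha ν) (ξ ν) (ξ' ν) (hmeas ν) (hint ν) (hac ν) hg2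
  calc (∑' ν, ∫⁻ s in Set.Icc (-T) T,
        ENNReal.ofReal ((a ν) ^ 2 * (ξ ν s) ^ 2 + (ξ' ν s) ^ 2))
      ≤ ∑' ν, ((∫⁻ s in Set.Icc (-T) T,
            ENNReal.ofReal ((ξ' ν s + a ν * ξ ν s) ^ 2))
          + (if 0 < a ν then ENNReal.ofReal (a ν * (ξ ν (-T)) ^ 2) else 0)
          + (if a ν < 0 then ENNReal.ofReal (-(a ν) * (ξ ν T) ^ 2) else 0)) :=
        ENNReal.tsum_le_tsum hterm
    _ = _ := by rw [ENNReal.tsum_add, ENNReal.tsum_add]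
end

section
/- (Invariance of the Fredholm index under varying target space.) Let X and Y be real Hilbert spaces, let r ↦ 𝒟_r ∈ L(X,Y) be a continuous family of bounded linear operators indexed by r ∈ [0,1], and let r ↦ p_r ∈ L(Y) be a continuous family of projections (p_r ∘ p_r = p_r). Suppose that for each r ∈ [0,1] the composed operator 𝔇_r := p_r ∘ 𝒟_r, regarded as an operator from X to the closed subspace range(p_r) ⊂ Y, is Fredholm, i.e. ker 𝔇_r is finite-dimensional, range 𝔇_r is closed, and the quotient range(p_r)/range(𝔇_r) is finite-dimensional. Then the index ind 𝔇_r := dim ker 𝔇_r − dim( range(p_r)/range(𝔇_r) ) is independent of r ∈ [0,1]. -/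
open Module LinearMap

set_option maxHeartbeats 4000000
set_option synthInstance.maxHeartbeats 400000

/-- Augmented operator `X × W → Y`, `(x,w) ↦ Q x + P w`. -/
noncomputable def augOp {X Y : Type*}
    [NormedAddCommGroup X] [NormedSpace ℝ X]
    [NormedAddCommGroup Y] [NormedSpace ℝ Y]
    (Q : X →L[ℝ] Y) (P : Y →L[ℝ] Y) (W : Submodule ℝ Y) : (X × W) →ₗ[ℝ] Y :=
  (Q : X →ₗ[ℝ] Y).comp (LinearMap.fst ℝ X W) +
    ((P : Y →ₗ[ℝ] Y).comp W.subtype).comp (LinearMap.snd ℝ X W)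

lemma augOp_apply {X Y : Type*}
    [NormedAddCommGroup X] [NormedSpace ℝ X]
    [NormedAddCommGroup Y] [NormedSpace ℝ Y]
    (Q : X →L[ℝ] Y) (P : Y →L[ℝ] Y) (W : Submodule ℝ Y) (u : X × W) :
    augOp Q P W u = Q u.1 + P u.2 := rfl


/-- The Fredholm index of a composed operator `𝔇 = p ∘ 𝒟 : X → range p`, encoded via the
full composition `Q = p ∘ 𝒟 : X → Y` and the projection `P = p`:
`dim ker Q − dim (range P / range Q)`. -/
noncomputable def projIndex {X Y : Type*}
    [NormedAddCommGroup X] [NormedSpace ℝ X]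
    [NormedAddCommGroup Y] [NormedSpace ℝ Y]
    (Q : X →L[ℝ] Y) (P : Y →L[ℝ] Y) : ℤ :=
  (Module.finrank ℝ (LinearMap.ker (Q : X →ₗ[ℝ] Y)) : ℤ) -
    (Module.finrank ℝ ((LinearMap.range (P : Y →ₗ[ℝ] Y)) ⧸
      Submodule.comap (LinearMap.range (P : Y →ₗ[ℝ] Y)).subtype (LinearMap.range (Q : X →ₗ[ℝ] Y))) : ℤ)

/-- Algebraic index lemma: if the augmented operator is surjective onto `range P`
and its kernel is equivalent to a finite-dimensional `K`, then
`projIndex Q P = dim K - dim W`. -/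
lemma projIndex_eq_of_aug {X Y : Type*}
    [NormedAddCommGroup X] [NormedSpace ℝ X]
    [NormedAddCommGroup Y] [NormedSpace ℝ Y]
    (Q : X →L[ℝ] Y) (P : Y →L[ℝ] Y) (W : Submodule ℝ Y) [FiniteDimensional ℝ W]
    [FiniteDimensional ℝ (LinearMap.ker (Q : X →ₗ[ℝ] Y))]
    [FiniteDimensional ℝ ((LinearMap.range (P : Y →ₗ[ℝ] Y)) ⧸
      Submodule.comap (LinearMap.range (P : Y →ₗ[ℝ] Y)).subtype (LinearMap.range (Q : X →ₗ[ℝ] Y)))]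
    (hsurj : ∀ z : Y, z ∈ LinearMap.range (P : Y →ₗ[ℝ] Y) → ∃ x : X, ∃ w ∈ W, z = Q x + P w)
    (K : Type*) [AddCommGroup K] [Module ℝ K] [FiniteDimensional ℝ K]
    (e : K ≃ₗ[ℝ] LinearMap.ker (augOp Q P W)) :
    projIndex Q P = (finrank ℝ K : ℤ) - finrank ℝ W := by
  classical
  set N := Submodule.comap (LinearMap.range (P : Y →ₗ[ℝ] Y)).subtype (LinearMap.range (Q : X →ₗ[ℝ] Y)) with hN
  haveI : FiniteDimensional ℝ (LinearMap.ker (augOp Q P W)) := e.finiteDimensional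
  -- the projection from the kernel of the augmented operator to W
  set π : LinearMap.ker (augOp Q P W) →ₗ[ℝ] W :=
    (LinearMap.snd ℝ X W).comp (LinearMap.ker (augOp Q P W)).subtype with hπ
  -- kernel of π is iso to ker Q
  have hkerπ : finrank ℝ (LinearMap.ker π) = finrank ℝ (LinearMap.ker (Q : X →ₗ[ℝ] Y)) := by
    have eker : LinearMap.ker π ≃ₗ[ℝ] LinearMap.ker (Q : X →ₗ[ℝ] Y) :=
      { toFun := fun u => ⟨((u : ↥(LinearMap.ker (augOp Q P W))) : X × W).1, by
          have h2 : (((u : ↥(LinearMap.ker (augOp Q P W))) : X × W)).2 = 0 := u.2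
          have h1 := LinearMap.mem_ker.mp (u : ↥(LinearMap.ker (augOp Q P W))).2
          rw [augOp_apply] at h1
          rw [h2] at h1
          simpa using h1⟩
        map_add' := fun u v => rfl
        map_smul' := fun c u => rfl
        invFun := fun x => ⟨⟨((x : X), (0 : W)), by
            simp [LinearMap.mem_ker, augOp_apply, x.2]⟩, by
          simp [hπ]⟩
        left_inv := by
          rintro ⟨⟨⟨x, w⟩, hu⟩, hw⟩
          have : w = 0 := hw
          subst this
          rfl
        right_inv := fun x => rfl }
    exact eker.finrank_eq
  -- the map from W to the cokernel
  have hW : ∀ w : W, P (w : Y) ∈ LinearMap.range (P : Y →ₗ[ℝ] Y) := fun w => ⟨_, rfl⟩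
  set ψ : W →ₗ[ℝ] LinearMap.range (P : Y →ₗ[ℝ] Y) :=
    LinearMap.codRestrict (LinearMap.range (P : Y →ₗ[ℝ] Y)) ((P : Y →ₗ[ℝ] Y).comp W.subtype)
      (fun w => hW w) with hψ
  set φ : W →ₗ[ℝ] (LinearMap.range (P : Y →ₗ[ℝ] Y) ⧸ N) := N.mkQ.comp ψ with hφ
  have hφsurj : Function.Surjective φ := by
    rintro z
    obtain ⟨⟨z, hz⟩, rfl⟩ := N.mkQ_surjective z
    obtain ⟨x, w, hw, hzeq⟩ := hsurj z hz
    refine ⟨⟨w, hw⟩, ?_⟩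
    have hQx : Q x ∈ LinearMap.range (P : Y →ₗ[ℝ] Y) := by
      have : Q x = z - P w := by rw [hzeq]; abel
      rw [this]
      exact Submodule.sub_mem _ hz ⟨w, rfl⟩
    have key : (⟨z, hz⟩ : LinearMap.range (P : Y →ₗ[ℝ] Y)) - ψ ⟨w, hw⟩ ∈ N := by
      have : ((⟨z, hz⟩ : LinearMap.range (P : Y →ₗ[ℝ] Y)) - ψ ⟨w, hw⟩ : LinearMap.range (P : Y →ₗ[ℝ] Y)) = ⟨Q x, hQx⟩ := by
        ext
        simp only [hψ, AddSubgroupClass.coe_sub, LinearMap.codRestrict_apply,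
          LinearMap.comp_apply, Submodule.coe_subtype, ContinuousLinearMap.coe_coe, hzeq]
        change Q x + P w - P w = Q x
        abel
      rw [this]
      exact ⟨x, rfl⟩
    have := (Submodule.Quotient.eq N).2 key
    simpa [hφ] using this.symm
  -- range π = ker φ
  have hrange : LinearMap.range π = LinearMap.ker φ := by
    ext w
    constructor
    · rintro ⟨⟨⟨x, w'⟩, hu⟩, rfl⟩
      have h1 : Q x + P (w' : Y) = 0 := hu
      have : P ((w' : W) : Y) ∈ LinearMap.range (Q : X →ₗ[ℝ] Y) := by
        refine ⟨-x, ?_⟩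
        rw [map_neg]
        exact neg_eq_of_add_eq_zero_right h1
      simp only [LinearMap.mem_ker, hφ, hψ, LinearMap.comp_apply, Submodule.mkQ_apply,
        Submodule.Quotient.mk_eq_zero]
      exact this
    · intro hwφ
      have hmem : P ((w : W) : Y) ∈ LinearMap.range (Q : X →ₗ[ℝ] Y) := by
        have h := hwφ
        simp [hφ, hψ, LinearMap.mem_ker, Submodule.Quotient.mk_eq_zero, hN,
          Submodule.mem_comap] at h
        exact h
      obtain ⟨x, hx⟩ := hmem
      simp only [ContinuousLinearMap.coe_coe] at hx
      refine ⟨⟨⟨-x, w⟩, ?_⟩, rfl⟩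
      show Q (-x) + P (w : Y) = 0
      rw [map_neg, ← hx]
      abel
  -- rank-nullity computations
  have h1 : finrank ℝ (LinearMap.range π) + finrank ℝ (LinearMap.ker π)
      = finrank ℝ (LinearMap.ker (augOp Q P W)) := LinearMap.finrank_range_add_finrank_ker π
  have h2 : finrank ℝ (LinearMap.range φ) + finrank ℝ (LinearMap.ker φ)
      = finrank ℝ W := LinearMap.finrank_range_add_finrank_ker φ
  have h3 : finrank ℝ (LinearMap.range φ) = finrank ℝ (LinearMap.range (P : Y →ₗ[ℝ] Y) ⧸ N) := by
    rw [LinearMap.range_eq_top.2 hφsurj]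
    exact finrank_top ℝ _
  have h4 : finrank ℝ (LinearMap.ker (augOp Q P W)) = finrank ℝ K := e.symm.finrank_eq
  have h5 : finrank ℝ (LinearMap.range π) = finrank ℝ (LinearMap.ker φ) := by rw [hrange]
  unfold projIndex
  rw [← hN]
  omega

section Analytic

variable {X Y : Type*}
  [NormedAddCommGroup X] [InnerProductSpace ℝ X] [CompleteSpace X]
  [NormedAddCommGroup Y] [InnerProductSpace ℝ Y] [CompleteSpace Y]

/-- The continuous version of the augmented operator, restricted to `X₁ × W`. -/
noncomputable def augCLM (X₁ : Submodule ℝ X) (W : Submodule ℝ Y)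
    (Q : X →L[ℝ] Y) (P : Y →L[ℝ] Y) : (X₁ × W) →L[ℝ] Y :=
  Q.comp (X₁.subtypeL.comp (ContinuousLinearMap.fst ℝ X₁ W)) +
    P.comp (W.subtypeL.comp (ContinuousLinearMap.snd ℝ X₁ W))

lemma augCLM_apply (X₁ : Submodule ℝ X) (W : Submodule ℝ Y)
    (Q : X →L[ℝ] Y) (P : Y →L[ℝ] Y) (u : X₁ × W) :
    augCLM X₁ W Q P u = Q (u.1 : X) + P (u.2 : Y) := rfl

/-- `P₀ ∘ (augmented operator)`, corestricted to `range P₀`. -/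
noncomputable def Bmap (X₁ : Submodule ℝ X) (W : Submodule ℝ Y)
    (P₀ : Y →L[ℝ] Y) (Q : X →L[ℝ] Y) (P : Y →L[ℝ] Y) :
    (X₁ × W) →L[ℝ] (LinearMap.range (P₀ : Y →ₗ[ℝ] Y)) :=
  (P₀.comp (augCLM X₁ W Q P)).codRestrict (LinearMap.range (P₀ : Y →ₗ[ℝ] Y)) (fun u => ⟨_, rfl⟩)

lemma Bmap_coe (X₁ : Submodule ℝ X) (W : Submodule ℝ Y)
    (P₀ : Y →L[ℝ] Y) (Q : X →L[ℝ] Y) (P : Y →L[ℝ] Y) (u : X₁ × W) :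
    (Bmap X₁ W P₀ Q P u : Y) = P₀ (Q (u.1 : X) + P (u.2 : Y)) := rfl

lemma projIndex_locally_const
    (Q₀ : X →L[ℝ] Y) (P₀ : Y →L[ℝ] Y)
    (hP₀ : P₀.comp P₀ = P₀) (hPQ₀ : P₀.comp Q₀ = Q₀)
    [FiniteDimensional ℝ (LinearMap.ker (Q₀ : X →ₗ[ℝ] Y))]
    (hclosed : IsClosed (LinearMap.range (Q₀ : X →ₗ[ℝ] Y) : Set Y))
    [FiniteDimensional ℝ ((LinearMap.range (P₀ : Y →ₗ[ℝ] Y)) ⧸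
      Submodule.comap (LinearMap.range (P₀ : Y →ₗ[ℝ] Y)).subtype (LinearMap.range (Q₀ : X →ₗ[ℝ] Y)))] :
    ∃ δ > (0:ℝ), ∃ c : ℤ, ∀ (Q : X →L[ℝ] Y) (P : Y →L[ℝ] Y),
      P.comp P = P → P.comp Q = Q →
      FiniteDimensional ℝ (LinearMap.ker (Q : X →ₗ[ℝ] Y)) →
      FiniteDimensional ℝ ((LinearMap.range (P : Y →ₗ[ℝ] Y)) ⧸
        Submodule.comap (LinearMap.range (P : Y →ₗ[ℝ] Y)).subtype (LinearMap.range (Q : X →ₗ[ℝ] Y))) →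
      ‖P - P₀‖ < δ → ‖Q - Q₀‖ < δ →
      projIndex Q P = c := by
  classical
  set Y₀ : Submodule ℝ Y := LinearMap.range (P₀ : Y →ₗ[ℝ] Y) with hY₀
  -- fixed points of the projection
  have hfix : ∀ y ∈ Y₀, P₀ y = y := by
    rintro y ⟨z, rfl⟩
    exact congrFun (congrArg DFunLike.coe hP₀) z
  have hY₀closed : IsClosed (Y₀ : Set Y) := by
    have : (Y₀ : Set Y) = {y | P₀ y = y} := by
      ext y
      constructor
      · exact fun hy => hfix y hy
      · intro hy; exact ⟨y, hy⟩
    rw [this]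
    exact isClosed_eq P₀.continuous continuous_id
  haveI : CompleteSpace Y₀ := hY₀closed.completeSpace_coe
  set R : Submodule ℝ Y := LinearMap.range (Q₀ : X →ₗ[ℝ] Y) with hR
  haveI : CompleteSpace R := hclosed.completeSpace_coe
  have hRY₀ : R ≤ Y₀ := by
    rintro z ⟨x, rfl⟩
    refine ⟨Q₀ x, ?_⟩
    exact congrFun (congrArg DFunLike.coe hPQ₀) x
  set W : Submodule ℝ Y := Y₀ ⊓ Rᗮ with hW
  have hWY₀ : W ≤ Y₀ := inf_le_left
  have hWR : W ≤ Rᗮ := inf_le_right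
  -- W is finite dimensional: it injects into the cokernel
  haveI : FiniteDimensional ℝ W := by
    set g : W →ₗ[ℝ] ((LinearMap.range (P₀ : Y →ₗ[ℝ] Y)) ⧸
        Submodule.comap (LinearMap.range (P₀ : Y →ₗ[ℝ] Y)).subtype (LinearMap.range (Q₀ : X →ₗ[ℝ] Y))) :=
      (Submodule.comap (LinearMap.range (P₀ : Y →ₗ[ℝ] Y)).subtype (LinearMap.range (Q₀ : X →ₗ[ℝ] Y))).mkQ.comp
        (LinearMap.codRestrict (LinearMap.range (P₀ : Y →ₗ[ℝ] Y)) W.subtype (fun w => hWY₀ w.2)) with hg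
    have hginj : Function.Injective g := by
      intro w w' hww
      have h0 : g (w - w') = 0 := by rw [map_sub, hww, sub_self]
      have : ((w : Y) - (w' : Y)) ∈ R := by
        have := (Submodule.Quotient.mk_eq_zero _).1 h0
        simpa [hg, hR, Submodule.mem_comap] using this
      have h2 : ((w : Y) - (w' : Y)) ∈ Rᗮ := Rᗮ.sub_mem (hWR w.2) (hWR w'.2)
      have := (Submodule.orthogonal_disjoint R).le_bot ⟨this, h2⟩
      have : (w : Y) - (w' : Y) = 0 := this
      ext
      exact sub_eq_zero.1 this
    exact FiniteDimensional.of_injective g hginj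
  haveI : CompleteSpace W := FiniteDimensional.complete ℝ W
  set K₀ : Submodule ℝ X := LinearMap.ker (Q₀ : X →ₗ[ℝ] Y) with hK₀
  set X₁ : Submodule ℝ X := K₀ᗮ with hX₁
  haveI : CompleteSpace X₁ := K₀.isClosed_orthogonal.completeSpace_coe
  -- B₀ is bijective
  set B₀ : (X₁ × W) →L[ℝ] Y₀ := Bmap X₁ W P₀ Q₀ P₀ with hB₀
  have hB₀coe : ∀ u : X₁ × W, (B₀ u : Y) = Q₀ (u.1 : X) + (u.2 : Y) := by
    intro u
    rw [hB₀, Bmap_coe, map_add]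
    congr 1
    · exact congrFun (congrArg DFunLike.coe hPQ₀) (u.1 : X)
    · rw [hfix _ (hWY₀ u.2.2)]
      exact hfix _ (hWY₀ u.2.2)
  have hB₀inj : Function.Injective B₀ := by
    intro u v huv
    have h0 : Q₀ ((u.1 : X) - (v.1 : X)) + ((u.2 : Y) - (v.2 : Y)) = 0 := by
      have h := congrArg (Subtype.val) huv
      rw [hB₀coe, hB₀coe] at h
      rw [map_sub, sub_add_sub_comm]
      exact sub_eq_zero_of_eq h
    have h1 : Q₀ ((u.1 : X) - (v.1 : X)) ∈ R := ⟨_, rfl⟩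
    have h2 : ((u.2 : Y) - (v.2 : Y)) ∈ Rᗮ := Rᗮ.sub_mem (hWR u.2.2) (hWR v.2.2)
    have h3 : Q₀ ((u.1 : X) - (v.1 : X)) = -((u.2 : Y) - (v.2 : Y)) :=
      eq_neg_of_add_eq_zero_left h0
    have h4 : Q₀ ((u.1 : X) - (v.1 : X)) ∈ Rᗮ := by rw [h3]; exact Rᗮ.neg_mem h2
    have h5 : Q₀ ((u.1 : X) - (v.1 : X)) = 0 :=
      (Submodule.orthogonal_disjoint R).le_bot ⟨h1, h4⟩
    have h6 : ((u.1 : X) - (v.1 : X)) ∈ K₀ := h5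
    have h7 : ((u.1 : X) - (v.1 : X)) ∈ K₀ᗮ := K₀ᗮ.sub_mem u.1.2 v.1.2
    have h8 : ((u.1 : X) - (v.1 : X)) = 0 :=
      (Submodule.orthogonal_disjoint K₀).le_bot ⟨h6, h7⟩
    have h9 : ((u.2 : Y) - (v.2 : Y)) = 0 := by
      rw [h8, map_zero, zero_add] at h0
      exact h0
    ext
    · exact sub_eq_zero.1 h8
    · exact sub_eq_zero.1 h9
  have hB₀surj : Function.Surjective B₀ := by
    rintro ⟨y, hy⟩
    obtain ⟨q, hq, z, hz, hyqz⟩ := R.exists_add_mem_mem_orthogonal y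
    have hzY₀ : z ∈ Y₀ := by
      have : z = y - q := by rw [hyqz]; abel
      rw [this]
      exact Y₀.sub_mem hy (hRY₀ hq)
    obtain ⟨x, hx⟩ := hq
    simp only [ContinuousLinearMap.coe_coe] at hx
    obtain ⟨a, ha, b, hb, hxab⟩ := K₀.exists_add_mem_mem_orthogonal x
    refine ⟨(⟨b, hb⟩, ⟨z, ⟨hzY₀, hz⟩⟩), ?_⟩
    apply Subtype.ext
    rw [hB₀coe]
    show Q₀ b + z = y
    have : Q₀ b = q := by
      rw [← hx, hxab, map_add]
      have : Q₀ a = 0 := ha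
      rw [this, zero_add]
    rw [this, ← hyqz]
  clear_value B₀
  -- the reference isomorphism
  set e₀ : (X₁ × W) ≃L[ℝ] Y₀ :=
    ContinuousLinearEquiv.ofBijective B₀ (LinearMap.ker_eq_bot.2 hB₀inj)
      (LinearMap.range_eq_top.2 hB₀surj) with he₀
  have he₀app : ∀ u, (e₀ u : Y₀) = B₀ u := fun u => by
    rw [he₀, ContinuousLinearEquiv.coeFn_ofBijective]
  clear_value e₀
  have hEnn : (0:ℝ) ≤ ‖(e₀.symm : Y₀ →L[ℝ] (X₁ × W))‖ :=
    ContinuousLinearMap.opNorm_nonneg _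
  obtain ⟨C, hC, hCpos⟩ :
      ∃ C : ℝ, C = ‖(e₀.symm : Y₀ →L[ℝ] (X₁ × W))‖ * (‖P₀‖ + 1) + 1 ∧ 0 < C :=
    ⟨_, rfl, by positivity⟩
  obtain ⟨δ, hδpos, hδhalf, hδC⟩ :
      ∃ δ : ℝ, 0 < δ ∧ δ ≤ 1/2 ∧ δ ≤ 1/(2*C) :=
    ⟨min (1/2) (1/(2*C)), lt_min (by norm_num) (by positivity),
      min_le_left _ _, min_le_right _ _⟩
  refine ⟨δ, hδpos, (finrank ℝ K₀ : ℤ) - (finrank ℝ W : ℤ), ?_⟩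
  intro Q P hP hPQ hkerQ hcokerQ hPn hQn
  haveI := hkerQ
  haveI := hcokerQ
  -- P₀ is injective on range P
  have hinj : ∀ z, z ∈ LinearMap.range (P : Y →ₗ[ℝ] Y) → P₀ z = 0 → z = 0 := by
    rintro z ⟨y, rfl⟩ h0
    simp only [ContinuousLinearMap.coe_coe] at h0
    set z := P y
    have hz' : P z = z := congrFun (congrArg DFunLike.coe hP) y
    have hzz : z = (P - P₀) z := by
      rw [ContinuousLinearMap.sub_apply, hz', h0, sub_zero]
    by_contra hne
    have hpos : 0 < ‖z‖ := norm_pos_iff.2 hne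
    have h1 : ‖z‖ ≤ ‖P - P₀‖ * ‖z‖ := by
      conv_lhs => rw [hzz]
      exact (P - P₀).le_opNorm z
    have h2 : ‖P - P₀‖ < 1/2 := lt_of_lt_of_le hPn hδhalf
    nlinarith
  -- the perturbed map and its comparison with B₀
  set Br : (X₁ × W) →L[ℝ] Y₀ := Bmap X₁ W P₀ Q P with hBr
  clear_value Br
  have hdiff : ∀ u : X₁ × W, ‖Br u - B₀ u‖ ≤ ‖P₀‖ * (‖Q - Q₀‖ + ‖P - P₀‖) * ‖u‖ := by
    intro u
    have hcoe : ((Br u - B₀ u : Y₀) : Y) = P₀ ((Q - Q₀) (u.1 : X) + (P - P₀) (u.2 : Y)) := by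
      rw [AddSubgroupClass.coe_sub, hBr, hB₀, Bmap_coe, Bmap_coe]
      rw [← map_sub]
      congr 1
      simp only [ContinuousLinearMap.sub_apply]
      abel
    have : ‖Br u - B₀ u‖ = ‖((Br u - B₀ u : Y₀) : Y)‖ := rfl
    rw [this, hcoe]
    calc ‖P₀ ((Q - Q₀) (u.1 : X) + (P - P₀) (u.2 : Y))‖
        ≤ ‖P₀‖ * ‖(Q - Q₀) (u.1 : X) + (P - P₀) (u.2 : Y)‖ := P₀.le_opNorm _
      _ ≤ ‖P₀‖ * (‖(Q - Q₀) (u.1 : X)‖ + ‖(P - P₀) (u.2 : Y)‖) := by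
          gcongr
          exact norm_add_le _ _
      _ ≤ ‖P₀‖ * (‖Q - Q₀‖ * ‖u‖ + ‖P - P₀‖ * ‖u‖) := by
          gcongr
          · calc ‖(Q - Q₀) (u.1 : X)‖ ≤ ‖Q - Q₀‖ * ‖(u.1 : X)‖ := (Q - Q₀).le_opNorm _
              _ ≤ ‖Q - Q₀‖ * ‖u‖ := by
                  gcongr
                  exact norm_fst_le u
          · calc ‖(P - P₀) (u.2 : Y)‖ ≤ ‖P - P₀‖ * ‖(u.2 : Y)‖ := (P - P₀).le_opNorm _
              _ ≤ ‖P - P₀‖ * ‖u‖ := by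
                  gcongr
                  exact norm_snd_le u
      _ = ‖P₀‖ * (‖Q - Q₀‖ + ‖P - P₀‖) * ‖u‖ := by ring
  set T : (X₁ × W) →L[ℝ] (X₁ × W) := (e₀.symm : Y₀ →L[ℝ] (X₁ × W)).comp Br with hT
  have hTu : ∀ u, T u = e₀.symm (Br u) := fun u => by rw [hT]; rfl
  clear_value T
  have hTsub : ∀ u, T u - u = e₀.symm (Br u - B₀ u) := by
    intro u
    rw [map_sub, hTu]
    congr 1
    rw [← he₀app u, ContinuousLinearEquiv.symm_apply_apply]
  have hTnorm : ‖1 - T‖ ≤ ‖(e₀.symm : Y₀ →L[ℝ] (X₁ × W))‖ * (‖P₀‖ * (‖Q - Q₀‖ + ‖P - P₀‖)) := by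
    apply ContinuousLinearMap.opNorm_le_bound
    · positivity
    · intro u
      have : (1 - T) u = -(T u - u) := by
        simp [ContinuousLinearMap.sub_apply]
      rw [this, norm_neg, hTsub]
      calc ‖e₀.symm (Br u - B₀ u)‖
          ≤ ‖(e₀.symm : Y₀ →L[ℝ] (X₁ × W))‖ * ‖Br u - B₀ u‖ :=
            (e₀.symm : Y₀ →L[ℝ] (X₁ × W)).le_opNorm _
        _ ≤ ‖(e₀.symm : Y₀ →L[ℝ] (X₁ × W))‖ * (‖P₀‖ * (‖Q - Q₀‖ + ‖P - P₀‖) * ‖u‖) := by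
            gcongr
            exact hdiff u
        _ = ‖(e₀.symm : Y₀ →L[ℝ] (X₁ × W))‖ * (‖P₀‖ * (‖Q - Q₀‖ + ‖P - P₀‖)) * ‖u‖ := by
            ring
  have hlt : ‖1 - T‖ < 1 := by
    obtain ⟨E, hE, hEnn'⟩ : ∃ E : ℝ, E = ‖(e₀.symm : Y₀ →L[ℝ] (X₁ × W))‖ ∧ 0 ≤ E :=
      ⟨_, rfl, ContinuousLinearMap.opNorm_nonneg _⟩
    rw [← hE] at hTnorm hC
    have hP₀nn : (0:ℝ) ≤ ‖P₀‖ := norm_nonneg _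
    have hQd : (0:ℝ) ≤ ‖Q - Q₀‖ := norm_nonneg _
    have hPd : (0:ℝ) ≤ ‖P - P₀‖ := norm_nonneg _
    have key : E * (‖P₀‖ * (‖Q - Q₀‖ + ‖P - P₀‖)) ≤ E * ‖P₀‖ * (2 * δ) := by
      have hsum : ‖Q - Q₀‖ + ‖P - P₀‖ ≤ 2 * δ := by linarith
      calc E * (‖P₀‖ * (‖Q - Q₀‖ + ‖P - P₀‖)) = E * ‖P₀‖ * (‖Q - Q₀‖ + ‖P - P₀‖) := by
            ring
        _ ≤ E * ‖P₀‖ * (2 * δ) := mul_le_mul_of_nonneg_left hsum (by positivity)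
    have h2 : E * ‖P₀‖ * (2 * δ) ≤ E * ‖P₀‖ / C := by
      have hq : 2 * δ ≤ 1 / C := by
        have : 2 * (1/(2*C)) = 1/C := by field_simp
        linarith
      calc E * ‖P₀‖ * (2 * δ) ≤ E * ‖P₀‖ * (1 / C) :=
            mul_le_mul_of_nonneg_left hq (by positivity)
        _ = E * ‖P₀‖ / C := by ring
    have h3 : E * ‖P₀‖ / C < 1 := by
      rw [div_lt_one hCpos]
      have hCeq : E * ‖P₀‖ + (E + 1) = C := by rw [hC]; ring
      linarith
    calc ‖1 - T‖ ≤ E * (‖P₀‖ * (‖Q - Q₀‖ + ‖P - P₀‖)) := hTnorm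
      _ ≤ E * ‖P₀‖ * (2 * δ) := key
      _ ≤ E * ‖P₀‖ / C := h2
      _ < 1 := h3
  -- T is invertible, hence Br is bijective
  set tu : ((X₁ × W) →L[ℝ] (X₁ × W))ˣ := Units.oneSub (1 - T) hlt with htu
  have htuval : (tu : (X₁ × W) →L[ℝ] (X₁ × W)) = T := by
    rw [htu]
    show 1 - (1 - T) = T
    exact sub_sub_cancel 1 T
  clear_value tu
  have hTbij : Function.Bijective T := by
    have hb := (ContinuousLinearEquiv.unitsEquiv ℝ (X₁ × W) tu).bijective
    have hco : ⇑(ContinuousLinearEquiv.unitsEquiv ℝ (X₁ × W) tu) = ⇑T := by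
      funext x
      rw [ContinuousLinearEquiv.unitsEquiv_apply, htuval]
    rwa [hco] at hb
  have hBrT : ∀ v, Br v = e₀ (T v) := by
    intro v
    rw [hTu, e₀.apply_symm_apply]
  have hBrinj : Function.Injective Br := by
    intro a b hab
    exact hTbij.1 (by rw [hTu, hTu, hab])
  have hBrsurj : Function.Surjective Br := by
    intro y
    obtain ⟨v, hv⟩ := hTbij.2 (e₀.symm y)
    exact ⟨v, by rw [hBrT, hv, e₀.apply_symm_apply]⟩
  obtain ⟨er, herapp⟩ : ∃ er : (X₁ × W) ≃L[ℝ] Y₀, ∀ v, (er v : Y₀) = Br v :=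
    ⟨ContinuousLinearEquiv.ofBijective Br (LinearMap.ker_eq_bot.2 hBrinj)
      (LinearMap.range_eq_top.2 hBrsurj),
      fun v => by rw [ContinuousLinearEquiv.coeFn_ofBijective]⟩
  -- range of Q is inside range of P
  have hQrange : ∀ x : X, Q x ∈ LinearMap.range (P : Y →ₗ[ℝ] Y) := fun x =>
    ⟨Q x, congrFun (congrArg DFunLike.coe hPQ) x⟩
  -- surjectivity hypothesis for the algebraic lemma
  have hsurj : ∀ z : Y, z ∈ LinearMap.range (P : Y →ₗ[ℝ] Y) → ∃ x : X, ∃ w ∈ W, z = Q x + P w := by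
    intro z hz
    have hz₀ : P₀ z ∈ Y₀ := ⟨z, rfl⟩
    set v := er.symm ⟨P₀ z, hz₀⟩ with hv
    have hv1 : (er v : Y₀) = ⟨P₀ z, hz₀⟩ := by rw [hv, er.apply_symm_apply]
    have hcoe : P₀ (Q (v.1 : X) + P (v.2 : Y)) = P₀ z := by
      have := congrArg Subtype.val hv1
      rwa [herapp, hBr, Bmap_coe] at this
    have hmem : Q (v.1 : X) + P (v.2 : Y) - z ∈ LinearMap.range (P : Y →ₗ[ℝ] Y) :=
      Submodule.sub_mem _ (Submodule.add_mem _ (hQrange _) ⟨_, rfl⟩) hz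
    have h0 : P₀ (Q (v.1 : X) + P (v.2 : Y) - z) = 0 := by
      rw [map_sub, hcoe, sub_self]
    have hzero := hinj _ hmem h0
    exact ⟨(v.1 : X), (v.2 : Y), v.2.2, (sub_eq_zero.1 hzero).symm⟩
  -- the kernel isomorphism
  obtain ⟨j, hjcoe⟩ : ∃ j : K₀ →ₗ[ℝ] Y₀, ∀ a : K₀, ((j a : Y₀) : Y) = P₀ (Q (a : X)) :=
    ⟨LinearMap.codRestrict Y₀ ((P₀ : Y →ₗ[ℝ] Y).comp ((Q : X →ₗ[ℝ] Y).comp K₀.subtype))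
      (fun a => ⟨_, rfl⟩), fun a => rfl⟩
  obtain ⟨L1, hL1⟩ : ∃ L1 : K₀ →ₗ[ℝ] (X₁ × W), ∀ a : K₀, L1 a = er.symm (-(j a)) :=
    ⟨((er.symm : Y₀ ≃L[ℝ] (X₁ × W)) : Y₀ →ₗ[ℝ] (X₁ × W)).comp (-j), fun a => rfl⟩
  have hBrL1 : ∀ a : K₀, Br (L1 a) = -(j a) := by
    intro a
    rw [hL1, ← herapp, er.apply_symm_apply]
  have hkey : ∀ a : K₀, Q ((a : X) + ((L1 a).1 : X)) + P (((L1 a).2 : Y)) = 0 := by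
    intro a
    have h1 := congrArg Subtype.val (hBrL1 a)
    rw [hBr, Bmap_coe] at h1
    have h2 : ((-(j a) : Y₀) : Y) = -(P₀ (Q (a : X))) := by
      rw [NegMemClass.coe_neg, hjcoe]
    rw [h2] at h1
    have h3 : P₀ (Q (a : X) + (Q ((L1 a).1 : X) + P ((L1 a).2 : Y))) = 0 := by
      rw [map_add, h1]
      abel
    have hmem : Q (a : X) + (Q ((L1 a).1 : X) + P ((L1 a).2 : Y)) ∈ LinearMap.range (P : Y →ₗ[ℝ] Y) :=
      Submodule.add_mem _ (hQrange _) (Submodule.add_mem _ (hQrange _) ⟨_, rfl⟩)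
    have h4 := hinj _ hmem h3
    rw [map_add]
    rw [← h4]
    abel
  obtain ⟨G, hGapp⟩ : ∃ G : K₀ →ₗ[ℝ] X × W,
      ∀ a : K₀, G a = ((a : X) + ((L1 a).1 : X), (L1 a).2) :=
    ⟨LinearMap.prod (K₀.subtype + X₁.subtype.comp ((LinearMap.fst ℝ X₁ W).comp L1))
      ((LinearMap.snd ℝ X₁ W).comp L1), fun a => rfl⟩
  have hGmem : ∀ a : K₀, G a ∈ LinearMap.ker (augOp Q P W) := by
    intro a
    rw [LinearMap.mem_ker, hGapp, augOp_apply]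
    exact hkey a
  obtain ⟨Φ, hΦcoe⟩ : ∃ Φ : K₀ →ₗ[ℝ] LinearMap.ker (augOp Q P W),
      ∀ a : K₀, ((Φ a : X × W)) = G a :=
    ⟨G.codRestrict (LinearMap.ker (augOp Q P W)) hGmem, fun a => rfl⟩
  have hΦinj : Function.Injective Φ := by
    intro a a' haa
    have hg : G a = G a' := by rw [← hΦcoe, ← hΦcoe, haa]
    rw [hGapp, hGapp] at hg
    have h1 : (a : X) + ((L1 a).1 : X) = (a' : X) + ((L1 a').1 : X) :=
      congrArg Prod.fst hg
    have h2 : (a : X) - (a' : X) = ((L1 a').1 : X) - ((L1 a).1 : X) := by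
      rw [sub_eq_sub_iff_add_eq_add, h1]
      exact add_comm _ _
    have hm1 : (a : X) - (a' : X) ∈ K₀ := K₀.sub_mem a.2 a'.2
    have hm2 : (a : X) - (a' : X) ∈ K₀ᗮ := by
      rw [h2]
      exact K₀ᗮ.sub_mem (L1 a').1.2 (L1 a).1.2
    have h0 : (a : X) - (a' : X) = 0 :=
      (Submodule.orthogonal_disjoint K₀).le_bot ⟨hm1, hm2⟩
    ext
    exact sub_eq_zero.1 h0
  have hΦsurj : Function.Surjective Φ := by
    rintro ⟨⟨x, w⟩, hxw⟩
    have hker : Q x + P (w : Y) = 0 := hxw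
    obtain ⟨a, ha, b, hb, hxab⟩ := K₀.exists_add_mem_mem_orthogonal x
    have hL1a : L1 ⟨a, ha⟩ = (⟨b, hb⟩, w) := by
      rw [hL1]
      rw [ContinuousLinearEquiv.symm_apply_eq]
      apply Subtype.ext
      rw [herapp, hBr, Bmap_coe, NegMemClass.coe_neg, hjcoe]
      show -(P₀ (Q a)) = P₀ (Q b + P (w : Y))
      have hsum : P₀ (Q a + (Q b + P (w : Y))) = 0 := by
        rw [← add_assoc, ← map_add Q, ← hxab, hker, map_zero]
      have h' : P₀ (Q a) + P₀ (Q b + P (w : Y)) = 0 := by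
        rw [← map_add]
        exact hsum
      exact neg_eq_of_add_eq_zero_right h'
    refine ⟨⟨a, ha⟩, ?_⟩
    apply Subtype.ext
    rw [hΦcoe, hGapp, hL1a]
    exact Prod.ext hxab.symm rfl
  have efinal : K₀ ≃ₗ[ℝ] LinearMap.ker (augOp Q P W) :=
    LinearEquiv.ofBijective Φ ⟨hΦinj, hΦsurj⟩
  exact projIndex_eq_of_aug Q P W hsurj K₀ efinal

end Analytic

/-- invariance of the Fredholm index under varying target space:
for continuous families `r ↦ 𝒟_r ∈ L(X,Y)` and `r ↦ p_r` of projections on `Y`, if each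
composed operator `𝔇_r = p_r ∘ 𝒟_r : X → range p_r` is Fredholm (finite-dimensional
kernel, closed range, finite-dimensional cokernel `range p_r / range 𝔇_r`), then
`ind 𝔇_r = dim ker 𝔇_r − dim (range p_r / range 𝔇_r)` is independent of `r ∈ [0,1]`. -/
theorem index_invariance_varying_target
    {X Y : Type*}
    [NormedAddCommGroup X] [InnerProductSpace ℝ X] [CompleteSpace X]
    [NormedAddCommGroup Y] [InnerProductSpace ℝ Y] [CompleteSpace Y]
    (D : Set.Icc (0:ℝ) 1 → X →L[ℝ] Y) (hD : Continuous D)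
    (p : Set.Icc (0:ℝ) 1 → Y →L[ℝ] Y) (hp : Continuous p)
    (hproj : ∀ r, (p r).comp (p r) = p r)
    (hker : ∀ r, FiniteDimensional ℝ (LinearMap.ker ((p r).comp (D r) : X →ₗ[ℝ] Y)))
    (hclosed : ∀ r, IsClosed (LinearMap.range ((p r).comp (D r) : X →ₗ[ℝ] Y) : Set Y))
    (hcoker : ∀ r, FiniteDimensional ℝ
      ((LinearMap.range (p r : Y →ₗ[ℝ] Y)) ⧸
        Submodule.comap (LinearMap.range (p r : Y →ₗ[ℝ] Y)).subtype
          (LinearMap.range (((p r).comp (D r) : X →L[ℝ] Y) : X →ₗ[ℝ] Y)))) :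
    ∀ r s : Set.Icc (0:ℝ) 1,
      projIndex ((p r).comp (D r)) (p r) = projIndex ((p s).comp (D s)) (p s) := by
  intro r s
  have hQcont : Continuous fun r => (p r).comp (D r) := hp.clm_comp hD
  have key : ∀ r₀ : Set.Icc (0:ℝ) 1, ∀ᶠ r' in nhds r₀,
      projIndex ((p r').comp (D r')) (p r') = projIndex ((p r₀).comp (D r₀)) (p r₀) := by
    intro r₀
    haveI := hker r₀
    haveI := hcoker r₀
    have hPQ : ∀ t, (p t).comp ((p t).comp (D t)) = (p t).comp (D t) := fun t => by
      rw [← ContinuousLinearMap.comp_assoc, hproj]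
    obtain ⟨δ, hδ, c, hc⟩ := projIndex_locally_const ((p r₀).comp (D r₀)) (p r₀)
      (hproj r₀) (hPQ r₀) (hclosed r₀)
    have h0 : projIndex ((p r₀).comp (D r₀)) (p r₀) = c := by
      apply hc _ _ (hproj r₀) (hPQ r₀) (hker r₀) (hcoker r₀) <;>
        simp only [sub_self, norm_zero] <;> exact hδ
    have hev1 : ∀ᶠ r' in nhds r₀, ‖p r' - p r₀‖ < δ := by
      have hcont : Continuous fun r' => ‖p r' - p r₀‖ := (hp.sub continuous_const).norm
      have htend := hcont.continuousAt (x := r₀)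
      have : ‖p r₀ - p r₀‖ < δ := by simpa using hδ
      exact htend.eventually_lt_const this
    have hev2 : ∀ᶠ r' in nhds r₀, ‖(p r').comp (D r') - (p r₀).comp (D r₀)‖ < δ := by
      have hcont : Continuous fun r' => ‖(p r').comp (D r') - (p r₀).comp (D r₀)‖ :=
        (hQcont.sub continuous_const).norm
      have htend := hcont.continuousAt (x := r₀)
      have : ‖(p r₀).comp (D r₀) - (p r₀).comp (D r₀)‖ < δ := by simpa using hδ
      exact htend.eventually_lt_const this
    filter_upwards [hev1, hev2] with r' h1 h2
    rw [hc _ _ (hproj r') (hPQ r') (hker r') (hcoker r') h1 h2, h0]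
  haveI : PreconnectedSpace (Set.Icc (0:ℝ) 1) := Subtype.preconnectedSpace isPreconnected_Icc
  have hlc : IsLocallyConstant fun r' => projIndex ((p r').comp (D r')) (p r') :=
    (IsLocallyConstant.iff_eventually_eq _).2 key
  exact hlc.apply_eq_of_preconnectedSpace r s
end

section
/- Let Y be a real Hilbert space and let p, q ∈ L(Y) be projections (p∘p = p and q∘q = q) satisfying ‖p − q‖ ≤ min{ 1/(4‖p‖), 1/2 } in operator norm. Then the restriction of p to range(q) is a continuous linear isomorphism from range(q) onto range(p). -/
/-- if `p, q` are continuous projections on a real Hilbert space `Y` with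
`‖p − q‖ ≤ min (1/(4‖p‖)) (1/2)`, then the restriction of `p` to `range q` is a continuous
linear isomorphism onto `range p` (it is a continuous linear map which is bijective). -/
theorem projection_restriction_isomorphism
    {Y : Type*} [NormedAddCommGroup Y] [InnerProductSpace ℝ Y] [CompleteSpace Y]
    (p q : Y →L[ℝ] Y)
    (hp : p.comp p = p) (hq : q.comp q = q)
    (hclose : ‖p - q‖ ≤ min (1 / (4 * ‖p‖)) (1 / 2)) :
    Function.Bijective
      ⇑(ContinuousLinearMap.codRestrict
          (p.comp (LinearMap.range (q : Y →ₗ[ℝ] Y)).subtypeL)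
          (LinearMap.range (p : Y →ₗ[ℝ] Y))
          (fun y => LinearMap.mem_range_self (p : Y →ₗ[ℝ] Y) (y : Y))) := by
  -- fixed point characterizations
  have hpfix : ∀ x ∈ LinearMap.range (p : Y →ₗ[ℝ] Y), p x = x := by
    rintro x ⟨a, rfl⟩
    have := congrArg (fun f : Y →L[ℝ] Y => f a) hp
    simpa using this
  have hqfix : ∀ x ∈ LinearMap.range (q : Y →ₗ[ℝ] Y), q x = x := by
    rintro x ⟨a, rfl⟩
    have := congrArg (fun f : Y →L[ℝ] Y => f a) hq
    simpa using this
  have hhalf : ‖p - q‖ ≤ 1 / 2 := hclose.trans (min_le_right _ _)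
  -- norm product bound
  have hprod : ‖p‖ * ‖p - q‖ ≤ 1 / 4 := by
    rcases eq_or_lt_of_le (norm_nonneg p) with h0 | h0
    · rw [← h0]; norm_num
    · have h1 : ‖p - q‖ ≤ 1 / (4 * ‖p‖) := hclose.trans (min_le_left _ _)
      have := mul_le_mul_of_nonneg_left h1 (le_of_lt h0)
      calc ‖p‖ * ‖p - q‖ ≤ ‖p‖ * (1 / (4 * ‖p‖)) := this
        _ = 1 / 4 := by field_simp
  -- range p is closed, hence complete
  set S := LinearMap.range (p : Y →ₗ[ℝ] Y) with hS
  have hSclosed : IsClosed (S : Set Y) := by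
    have : (S : Set Y) = (LinearMap.ker ((ContinuousLinearMap.id ℝ Y - p : Y →L[ℝ] Y) : Y →ₗ[ℝ] Y) : Set Y) := by
      ext x
      constructor
      · intro hx
        simp only [SetLike.mem_coe, LinearMap.mem_ker] at *
        simp [ContinuousLinearMap.sub_apply, hpfix x hx]
      · intro hx
        simp only [SetLike.mem_coe, LinearMap.mem_ker, ContinuousLinearMap.sub_apply,
          ContinuousLinearMap.id_apply, sub_eq_zero] at hx
        exact ⟨x, by have h2 := hx; rw [ContinuousLinearMap.coe_coe, ContinuousLinearMap.sub_apply, ContinuousLinearMap.id_apply, sub_eq_zero] at h2; exact h2.symm⟩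
    rw [this]
    exact ContinuousLinearMap.isClosed_ker _
  haveI : CompleteSpace S := hSclosed.completeSpace_coe
  constructor
  · -- injectivity
    rintro ⟨a, ha⟩ ⟨b, hb⟩ hab
    have hab' : p a = p b := congrArg Subtype.val hab
    have hw : q (a - b) = a - b := by
      have := q.map_sub a b
      rw [hqfix a ha, hqfix b hb] at this
      exact this
    have hkey : ‖a - b‖ ≤ (1 / 2) * ‖a - b‖ := by
      have h1 : a - b = -((p - q) (a - b)) := by
        have hps : p (a - b) = 0 := by rw [p.map_sub, hab', sub_self]
        simp [ContinuousLinearMap.sub_apply, hps, hw]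
      calc ‖a - b‖ = ‖-((p - q) (a - b))‖ := congrArg norm h1
        _ = ‖(p - q) (a - b)‖ := norm_neg _
        _ ≤ ‖p - q‖ * ‖a - b‖ := (p - q).le_opNorm _
        _ ≤ (1 / 2) * ‖a - b‖ :=
            mul_le_mul_of_nonneg_right hhalf (norm_nonneg _)
    have : ‖a - b‖ ≤ 0 := by linarith
    have : a = b := by
      have := le_antisymm this (norm_nonneg _)
      rwa [norm_eq_zero, sub_eq_zero] at this
    exact Subtype.ext this
  · -- surjectivity
    -- the operator A = p ∘ q on S is invertible
    set A : S →L[ℝ] S :=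
      ContinuousLinearMap.codRestrict ((p.comp q).comp S.subtypeL) S
        (fun y => LinearMap.mem_range_self (p : Y →ₗ[ℝ] Y) (q y)) with hA
    have hnA : ‖(1 : S →L[ℝ] S) - A‖ ≤ 1 / 4 := by
      apply ContinuousLinearMap.opNorm_le_bound _ (by norm_num)
      intro x
      have hx : p (x : Y) = (x : Y) := hpfix _ x.2
      have hval : ((((1 : S →L[ℝ] S) - A) x : S) : Y) = p ((p - q) (x : Y)) := by
        simp only [ContinuousLinearMap.sub_apply, ContinuousLinearMap.one_apply,
          AddSubgroupClass.coe_sub, hA, ContinuousLinearMap.coe_codRestrict_apply,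
          ContinuousLinearMap.comp_apply, Submodule.coe_subtypeL',
          Submodule.coe_subtype, map_sub, hx]
        rfl
      calc ‖(((1 : S →L[ℝ] S) - A) x : S)‖
            = ‖((((1 : S →L[ℝ] S) - A) x : S) : Y)‖ := rfl
        _ = ‖p ((p - q) (x : Y))‖ := by rw [hval]
        _ ≤ ‖p‖ * ‖(p - q) (x : Y)‖ := p.le_opNorm _
        _ ≤ ‖p‖ * (‖p - q‖ * ‖(x : Y)‖) :=
            mul_le_mul_of_nonneg_left ((p - q).le_opNorm _) (norm_nonneg _)
        _ = (‖p‖ * ‖p - q‖) * ‖x‖ := by rw [mul_assoc]; rfl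
        _ ≤ (1 / 4) * ‖x‖ := mul_le_mul_of_nonneg_right hprod (norm_nonneg _)
    have hlt : ‖(1 : S →L[ℝ] S) - A‖ < 1 := lt_of_le_of_lt hnA (by norm_num)
    have hu : IsUnit A := by
      have h : IsUnit ((1 : S →L[ℝ] S) - ((1 : S →L[ℝ] S) - A)) :=
        ⟨Units.oneSub ((1 : S →L[ℝ] S) - A) hlt, rfl⟩
      rwa [sub_sub_cancel] at h
    rcases hu with ⟨u, hu⟩
    rintro ⟨y, hy⟩
    set z : S := (↑u⁻¹ : S →L[ℝ] S) ⟨y, hy⟩ with hz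
    refine ⟨⟨q (z : Y), LinearMap.mem_range_self (q : Y →ₗ[ℝ] Y) (z : Y)⟩, ?_⟩
    apply Subtype.ext
    have h1 : A z = ⟨y, hy⟩ := by
      rw [hz, ← ContinuousLinearMap.mul_apply, ← hu, u.mul_inv]
      rfl
    have h2 : ((A z : S) : Y) = p (q (z : Y)) := by
      simp [hA, ContinuousLinearMap.coe_codRestrict_apply]
      rfl
    have := congrArg Subtype.val h1
    rw [h2] at this
    exact this
end

section
/- Let (H₀,H₁) be a Hilbert space pair with inclusion ι : H₁ → H₀ and let A ∈ L(H₁,H₀) be symmetric, i.e. ⟨Ax, ιy⟩₀ = ⟨ιx, Ay⟩₀ for all x, y ∈ H₁, and Fredholm of index zero. Then there exist a sequence (w_ℓ)_{ℓ∈ℕ} in H₁ and a sequence of reals (a_ℓ)_{ℓ∈ℕ} such that (ι w_ℓ)_{ℓ∈ℕ} is an orthonormal Hilbert basis of H₀, A w_ℓ = a_ℓ · (ι w_ℓ) for every ℓ, and for every R > 0 the set {ℓ ∈ ℕ : |a_ℓ| ≤ R} is finite (in particular each eigenvalue of A has finite multiplicity and the eigenvalues accumulate only at ±∞). -/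
open scoped RealInnerProductSpace

open Filter Topology

section SpectralAux
variable {E : Type*} [NormedAddCommGroup E] [InnerProductSpace ℝ E]

lemma sym_op_norm_le {T : E →L[ℝ] E} (hsym : ∀ x y : E, ⟪T x, y⟫ = ⟪x, T y⟫)
    {M : ℝ} (hM : 0 ≤ M) (h : ∀ x : E, |⟪T x, x⟫| ≤ M * ‖x‖ ^ 2) : ‖T‖ ≤ M := by
  refine T.opNorm_le_bound hM fun x => ?_
  rcases eq_or_ne (T x) 0 with h0 | h0
  · simp [h0]; positivity
  have hb : ∀ u v : E, ⟪T u, v⟫ ≤ (M / 2) * (‖u‖ ^ 2 + ‖v‖ ^ 2) := by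
    intro u v
    have h1 : ⟪T v, u⟫ = ⟪T u, v⟫ := by rw [hsym v u, real_inner_comm]
    have key : 4 * ⟪T u, v⟫ = ⟪T (u + v), u + v⟫ - ⟪T (u - v), u - v⟫ := by
      simp only [map_add, map_sub, inner_add_left, inner_add_right, inner_sub_left,
        inner_sub_right]
      rw [h1]; ring
    have par : ‖u + v‖ ^ 2 + ‖u - v‖ ^ 2 = 2 * (‖u‖ ^ 2 + ‖v‖ ^ 2) := by
      have := parallelogram_law_with_norm ℝ u v
      nlinarith [this]
    have b1 := h (u + v)
    have b2 := h (u - v)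
    have a1 := abs_le.mp b1
    have a2 := abs_le.mp b2
    nlinarith
  rcases eq_or_ne x 0 with rfl | hx0
  · simp at h0
  have hxpos : 0 < ‖x‖ := norm_pos_iff.mpr hx0
  have hTpos : 0 < ‖T x‖ := norm_pos_iff.mpr h0
  have := hb x ((‖x‖ / ‖T x‖) • T x)
  rw [real_inner_smul_right, real_inner_self_eq_norm_sq] at this
  have hnv : ‖(‖x‖ / ‖T x‖) • T x‖ = ‖x‖ := by
    rw [norm_smul, Real.norm_eq_abs, abs_of_nonneg (by positivity)]
    field_simp
  rw [hnv] at this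
  have hl : ‖x‖ / ‖T x‖ * ‖T x‖ ^ 2 = ‖x‖ * ‖T x‖ := by field_simp
  rw [hl] at this
  nlinarith

lemma exists_unit_approx [Nontrivial E] {T : E →L[ℝ] E}
    (hsym : ∀ x y : E, ⟪T x, y⟫ = ⟪x, T y⟫) {ε : ℝ} (hε : 0 < ε) :
    ∃ x : E, ‖x‖ = 1 ∧ ‖T‖ - ε < |⟪T x, x⟫| := by
  by_contra hcon
  push_neg at hcon
  obtain ⟨x0, hx0⟩ := exists_ne (0 : E)
  have hu : ‖‖x0‖⁻¹ • x0‖ = 1 := norm_smul_inv_norm hx0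
  have hM0 : 0 ≤ ‖T‖ - ε := le_trans (abs_nonneg _) (hcon _ hu)
  have hall : ∀ x : E, |⟪T x, x⟫| ≤ (‖T‖ - ε) * ‖x‖ ^ 2 := by
    intro x
    rcases eq_or_ne x 0 with rfl | hx
    · simp
    have hxpos : 0 < ‖x‖ := norm_pos_iff.mpr hx
    have h1 := hcon (‖x‖⁻¹ • x) (norm_smul_inv_norm hx)
    rw [map_smul, real_inner_smul_left, real_inner_smul_right] at h1
    rw [abs_mul, abs_mul, abs_inv, abs_norm] at h1
    have : |⟪T x, x⟫| = ‖x‖ ^ 2 * (‖x‖⁻¹ * (‖x‖⁻¹ * |⟪T x, x⟫|)) := by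
      field_simp
    rw [this]
    calc ‖x‖ ^ 2 * (‖x‖⁻¹ * (‖x‖⁻¹ * |⟪T x, x⟫|)) ≤ ‖x‖ ^ 2 * (‖T‖ - ε) := by
          apply mul_le_mul_of_nonneg_left h1 (by positivity)
      _ = (‖T‖ - ε) * ‖x‖ ^ 2 := by ring
  have := sym_op_norm_le hsym hM0 hall
  linarith


lemma approx_eigen [CompleteSpace E] {T : E →L[ℝ] E} (hcpt : IsCompactOperator (⇑T))
    {m : ℝ} (hm : m ≠ 0) {y : ℕ → E} (hy : ∀ k, ‖y k‖ = 1)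
    (hconv : Tendsto (fun k => ‖T (y k) - m • y k‖) atTop (𝓝 0)) :
    ∃ u : E, ‖u‖ = 1 ∧ T u = m • u := by
  have hcpt' : IsCompactOperator (⇑(T : E →ₗ[ℝ] E)) := hcpt
  obtain ⟨K, hK, hTK⟩ := hcpt'.image_closedBall_subset_compact 1
  have hmem : ∀ k, T (y k) ∈ K := fun k =>
    hTK ⟨y k, by simp [Metric.mem_closedBall, dist_zero_right, hy k], rfl⟩
  obtain ⟨z, hzK, ψ, hψ, hz⟩ := hK.tendsto_subseq hmem
  have h2 : Tendsto (fun k => T (y (ψ k)) - m • y (ψ k)) atTop (𝓝 0) := by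
    exact tendsto_zero_iff_norm_tendsto_zero.mpr (hconv.comp hψ.tendsto_atTop)
  have h3 : Tendsto (fun k => m • y (ψ k)) atTop (𝓝 z) := by
    have := hz.sub h2
    simpa using this
  have h4 : Tendsto (fun k => y (ψ k)) atTop (𝓝 (m⁻¹ • z)) := by
    have := h3.const_smul m⁻¹
    simpa [inv_smul_smul₀ hm] using this
  refine ⟨m⁻¹ • z, ?_, ?_⟩
  · have hn : Tendsto (fun k => ‖y (ψ k)‖) atTop (𝓝 ‖m⁻¹ • z‖) := h4.norm
    have hc : Tendsto (fun _ : ℕ => (1 : ℝ)) atTop (𝓝 1) := tendsto_const_nhds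
    have : (fun k => ‖y (ψ k)‖) = fun _ => (1 : ℝ) := funext fun k => hy (ψ k)
    rw [this] at hn
    exact tendsto_nhds_unique hn hc
  · have hTu : Tendsto (fun k => T (y (ψ k))) atTop (𝓝 (T (m⁻¹ • z))) :=
      (T.continuous.tendsto _).comp h4
    have : T (m⁻¹ • z) = z := tendsto_nhds_unique hTu hz
    rw [this, smul_inv_smul₀ hm]

lemma exists_eigen [CompleteSpace E] [Nontrivial E] {T : E →L[ℝ] E}
    (hcpt : IsCompactOperator (⇑T)) (hsym : ∀ x y : E, ⟪T x, y⟫ = ⟪x, T y⟫) :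
    ∃ (c : ℝ) (u : E), ‖u‖ = 1 ∧ T u = c • u := by
  rcases eq_or_ne T 0 with rfl | h0
  · obtain ⟨x0, hx0⟩ := exists_ne (0 : E)
    exact ⟨0, ‖x0‖⁻¹ • x0, norm_smul_inv_norm hx0, by simp⟩
  have hTpos : 0 < ‖T‖ := norm_pos_iff.mpr h0
  have hex : ∀ n : ℕ, ∃ x : E, ‖x‖ = 1 ∧ ‖T‖ - 1 / (n + 1) < |⟪T x, x⟫| := fun n =>
    exists_unit_approx hsym (by positivity)
  choose x hx1 hx2 using hex
  set a : ℕ → ℝ := fun n => ⟪T (x n), x n⟫ with ha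
  have habs : ∀ n, |a n| ≤ ‖T‖ := by
    intro n
    calc |a n| ≤ ‖T (x n)‖ * ‖x n‖ := abs_real_inner_le_norm _ _
      _ ≤ ‖T‖ * ‖x n‖ * ‖x n‖ := by
          apply mul_le_mul_of_nonneg_right (T.le_opNorm _) (norm_nonneg _)
      _ = ‖T‖ := by rw [hx1]; ring
  -- key quantitative estimate
  have key : ∀ (m : ℝ) (n : ℕ), |m| = ‖T‖ → m * a n = |m| * |a n| →
      ‖T (x n) - m • x n‖ ^ 2 ≤ 2 * ‖T‖ * (1 / (n + 1)) := by
    intro m n hmn hsign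
    have e1 : ‖T (x n) - m • x n‖ ^ 2 =
        ‖T (x n)‖ ^ 2 - 2 * (m * a n) + m ^ 2 * ‖x n‖ ^ 2 := by
      rw [norm_sub_sq_real, real_inner_smul_right, norm_smul]
      simp only [Real.norm_eq_abs]
      rw [mul_pow, sq_abs]
    have e2 : ‖T (x n)‖ ≤ ‖T‖ := by
      have := T.le_opNorm (x n)
      rwa [hx1, mul_one] at this
    have e3 : ‖T‖ - 1 / (n + 1) < |a n| := hx2 n
    have hn1 : (0 : ℝ) < 1 / (n + 1) := by positivity
    rw [e1, hx1]
    rw [hsign, hmn]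
    have hm2 : m ^ 2 = ‖T‖ ^ 2 := by rw [← sq_abs, hmn]
    nlinarith [norm_nonneg (T (x n)), habs n, e2, e3, hTpos]
  have hcase : (∃ᶠ n in atTop, 0 ≤ a n) ∨ (∃ᶠ n in atTop, a n < 0) := by
    by_contra hc
    push_neg at hc
    obtain ⟨hc1, hc2⟩ := hc
    have := hc1.and hc2
    obtain ⟨n, hn1, hn2⟩ := this.exists
    linarith
  have main : ∀ (m : ℝ), |m| = ‖T‖ → (∃ᶠ n in atTop, m * a n = |m| * |a n|) →
      ∃ (c : ℝ) (u : E), ‖u‖ = 1 ∧ T u = c • u := by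
    intro m hmn hfreq
    obtain ⟨φ, hφ, hφP⟩ := Filter.extraction_of_frequently_atTop hfreq
    have hm0 : m ≠ 0 := fun h => by rw [h, abs_zero] at hmn; exact hTpos.ne hmn
    refine ⟨m, ?_⟩
    apply approx_eigen hcpt hm0 (y := fun k => x (φ k)) (fun k => hx1 _)
    have hb : ∀ k : ℕ, ‖T (x (φ k)) - m • x (φ k)‖ ^ 2 ≤ 2 * ‖T‖ * (1 / (k + 1)) := by
      intro k
      refine le_trans (key m (φ k) hmn (hφP k)) ?_
      have hk : k ≤ φ k := hφ.le_apply
      have : (k : ℝ) + 1 ≤ (φ k : ℝ) + 1 := by exact_mod_cast Nat.add_le_add_right hk 1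
      have h1 : (1 : ℝ) / (φ k + 1) ≤ 1 / (k + 1) := by
        apply one_div_le_one_div_of_le (by positivity) this
      nlinarith
    have hsq : Tendsto (fun k => ‖T (x (φ k)) - m • x (φ k)‖ ^ 2) atTop (𝓝 0) := by
      apply squeeze_zero (fun k => sq_nonneg _) hb
      have := tendsto_one_div_add_atTop_nhds_zero_nat.const_mul (2 * ‖T‖)
      simpa using this
    have := hsq.sqrt
    simp only [Real.sqrt_zero] at this
    convert this using 2 with k
    rw [Real.sqrt_sq (norm_nonneg _)]
  rcases hcase with hf | hf
  · refine main ‖T‖ (abs_of_nonneg hTpos.le) (hf.mono fun n hn => ?_)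
    rw [abs_of_nonneg hTpos.le, abs_of_nonneg hn]
  · refine main (-‖T‖) (by rw [abs_neg, abs_of_nonneg hTpos.le]) (hf.mono fun n hn => ?_)
    rw [abs_neg, abs_of_nonneg hTpos.le, abs_of_neg hn]
    ring

lemma orthonormal_countable [TopologicalSpace.SeparableSpace E] {s : Set E}
    (hs : Orthonormal ℝ ((↑) : s → E)) : s.Countable := by
  obtain ⟨c, hcc, hcd⟩ := TopologicalSpace.exists_countable_dense E
  have hex : ∀ x : s, ∃ y ∈ c, dist (x : E) y < 1 / 2 := fun x =>
    hcd.exists_dist_lt (x : E) (by norm_num)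
  choose f hf1 hf2 using hex
  have hinj : Function.Injective f := by
    intro u v huv
    by_contra hne
    have hi : ⟪(u : E), (v : E)⟫ = 0 := hs.2 hne
    have hsq : ‖(u : E) - (v : E)‖ ^ 2 = 2 := by
      rw [norm_sub_sq_real, hi]
      have h1 := hs.1 u
      have h2 := hs.1 v
      rw [h1, h2]; ring
    have hd : dist (u : E) (v : E) < 1 := by
      calc dist (u : E) (v : E) ≤ dist (u : E) (f u) + dist (f v) (v : E) := by
            rw [huv]; exact dist_triangle _ _ _
        _ < 1 / 2 + 1 / 2 := by
            have h3 := hf2 u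
            have h4 := hf2 v
            rw [dist_comm (f v) (v : E)]
            linarith
        _ = 1 := by norm_num
    rw [dist_eq_norm] at hd
    nlinarith [norm_nonneg ((u : E) - v)]
  haveI : Countable c := hcc.to_subtype
  have hcnt : Countable s :=
    Function.Injective.countable (f := fun x : s => (⟨f x, hf1 x⟩ : c))
      fun u v h => hinj (congrArg Subtype.val h)
  exact Set.countable_coe_iff.mp hcnt

lemma spectral_basis [CompleteSpace E] [TopologicalSpace.SeparableSpace E]
    (hinf : ¬ FiniteDimensional ℝ E)
    (T : E →L[ℝ] E) (hcpt : IsCompactOperator (⇑T))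
    (hsym : ∀ x y : E, ⟪T x, y⟫ = ⟪x, T y⟫) :
    ∃ (e : ℕ → E) (μ : ℕ → ℝ), Orthonormal ℝ e ∧
      (Submodule.span ℝ (Set.range e)).topologicalClosure = ⊤ ∧
      (∀ n, T (e n) = μ n • e n) ∧ (∀ c : ℝ, 0 < c → {n : ℕ | c ≤ |μ n|}.Finite) := by
  classical
  set S : Set (Set E) :=
    {s | Orthonormal ℝ ((↑) : s → E) ∧ ∀ x ∈ s, ∃ c : ℝ, T x = c • x} with hSdef
  obtain ⟨s, hsmax⟩ : ∃ m, Maximal (· ∈ S) m := by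
    apply zorn_subset
    intro c hcS hchain
    refine ⟨⋃₀ c, ⟨?_, ?_⟩, fun t ht => Set.subset_sUnion_of_mem ht⟩
    · exact orthonormal_sUnion_of_directed hchain.directedOn fun t ht => (hcS ht).1
    · rintro x ⟨t, htc, hxt⟩
      exact (hcS htc).2 x hxt
  have hsS : s ∈ S := hsmax.prop
  have hspan_inv : ∀ y ∈ Submodule.span ℝ s, T y ∈ Submodule.span ℝ s := by
    intro y hy
    induction hy using Submodule.span_induction with
    | mem x hx =>
        obtain ⟨cx, hcx⟩ := hsS.2 x hx
        rw [hcx]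
        exact Submodule.smul_mem _ _ (Submodule.subset_span hx)
    | zero => simp
    | add x y hx hy ihx ihy => rw [map_add]; exact Submodule.add_mem _ ihx ihy
    | smul a x hx ih => rw [map_smul]; exact Submodule.smul_mem _ _ ih
  set V : Submodule ℝ E := (Submodule.span ℝ s)ᗮ with hVdef
  have hVinv : ∀ x ∈ V, T x ∈ V := by
    intro x hx
    rw [Submodule.mem_orthogonal] at hx ⊢
    intro u hu
    rw [← hsym u x]
    exact hx (T u) (hspan_inv u hu)
  have hbot : V = ⊥ := by
    by_contra hne
    haveI : Nontrivial V := Submodule.nontrivial_iff_ne_bot.mpr hne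
    haveI : CompleteSpace V := (Submodule.isClosed_orthogonal _).completeSpace_coe
    set T' : V →L[ℝ] V :=
      ContinuousLinearMap.codRestrict (T.comp V.subtypeL) V (fun x => hVinv x x.2) with hT'def
    have hcpt' : IsCompactOperator (⇑T') := by
      have h1 : IsCompactOperator (⇑T ∘ ⇑V.subtypeL) := hcpt.comp_clm V.subtypeL
      exact h1.codRestrict (fun x => hVinv _ x.2) (Submodule.isClosed_orthogonal _)
    have hsym' : ∀ x y : V, ⟪T' x, y⟫ = ⟪x, T' y⟫ := by
      intro x y
      have h1 : ⟪T (x : E), (y : E)⟫ = ⟪(x : E), T (y : E)⟫ := hsym x y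
      exact h1
    obtain ⟨c, u, hu1, hu2⟩ := exists_eigen hcpt' hsym'
    have huE : T (u : E) = c • (u : E) := by
      have := congrArg Subtype.val hu2
      exact this
    have hune : (u : E) ∉ s := by
      intro hus
      have h1 : ⟪(u : E), (u : E)⟫ = 0 :=
        (Submodule.mem_orthogonal _ _).mp u.2 (u : E) (Submodule.subset_span hus)
      have h2 : ‖(u : E)‖ = 1 := hu1
      rw [real_inner_self_eq_norm_sq, h2] at h1
      norm_num at h1
    have hs' : insert (u : E) s ∈ S := by
      constructor
      · have horth := orthonormal_subtype_iff_ite.mp hsS.1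
        rw [orthonormal_subtype_iff_ite]
        intro v hv w hw
        have h2 : ‖(u : E)‖ = 1 := hu1
        rcases hv with rfl | hv <;> rcases hw with rfl | hw
        · rw [if_pos rfl, real_inner_self_eq_norm_sq, h2]; norm_num
        · rw [if_neg (fun h : (u : E) = w => hune (h ▸ hw))]
          exact Submodule.inner_left_of_mem_orthogonal (Submodule.subset_span hw) u.2
        · rw [if_neg (fun h : v = (u : E) => hune (h ▸ hv))]
          exact Submodule.inner_right_of_mem_orthogonal (Submodule.subset_span hv) u.2
        · exact horth v hv w hw
      · rintro x (rfl | hx)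
        · exact ⟨c, huE⟩
        · exact hsS.2 x hx
    have hsub := hsmax.2 hs' (Set.subset_insert _ _)
    exact hune (hsub (Set.mem_insert _ _))
  have hdense : (Submodule.span ℝ s).topologicalClosure = ⊤ :=
    Submodule.topologicalClosure_eq_top_iff.mpr hbot
  have hcnt := orthonormal_countable hsS.1
  have hsinf : s.Infinite := by
    by_contra hfin
    rw [Set.not_infinite] at hfin
    haveI : FiniteDimensional ℝ (Submodule.span ℝ s) := FiniteDimensional.span_of_finite ℝ hfin
    have hclosed : IsClosed ((Submodule.span ℝ s : Set E)) :=
      Submodule.closed_of_finiteDimensional _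
    rw [hclosed.submodule_topologicalClosure_eq] at hdense
    haveI : FiniteDimensional ℝ (⊤ : Submodule ℝ E) := hdense ▸ inferInstance
    exact hinf (Module.Finite.equiv (Submodule.topEquiv))
  haveI := hcnt.to_subtype
  haveI := hsinf.to_subtype
  obtain ⟨eqv⟩ : Nonempty (ℕ ≃ s) := nonempty_equiv_of_countable
  set e : ℕ → E := fun n => ((eqv n : s) : E) with hedef
  have hes : ∀ n, e n ∈ s := fun n => (eqv n).2
  choose μ hμ using fun n => hsS.2 (e n) (hes n)
  have hre : Set.range e = s := by
    ext x
    constructor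
    · rintro ⟨n, rfl⟩; exact hes n
    · intro hx
      exact ⟨eqv.symm ⟨x, hx⟩, by simp [hedef]⟩
  have honb : Orthonormal ℝ e := hsS.1.comp eqv eqv.injective
  refine ⟨e, μ, honb, by rw [hre]; exact hdense, hμ, ?_⟩
  intro c hc
  by_contra hfin
  have hinfs : {n : ℕ | c ≤ |μ n|}.Infinite := hfin
  have hfreq : ∃ᶠ n in atTop, c ≤ |μ n| := Nat.frequently_atTop_iff_infinite.mpr hinfs
  obtain ⟨φ, hφ, hφP⟩ := Filter.extraction_of_frequently_atTop hfreq
  have hcpt'' : IsCompactOperator (⇑(T : E →ₗ[ℝ] E)) := hcpt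
  obtain ⟨K, hK, hTK⟩ := hcpt''.image_closedBall_subset_compact 1
  have hnorm1 : ∀ n, ‖e n‖ = 1 := fun n => honb.1 n
  have hmem : ∀ k, T (e (φ k)) ∈ K := fun k =>
    hTK ⟨e (φ k), by simp [Metric.mem_closedBall, dist_zero_right, hnorm1], rfl⟩
  obtain ⟨z, hzK, ψ, hψ, hz⟩ := hK.tendsto_subseq hmem
  have hcau := hz.cauchySeq
  rw [Metric.cauchySeq_iff] at hcau
  obtain ⟨N, hN⟩ := hcau c hc
  have hd := hN (N + 1) (by omega) N (by omega)
  set p := φ (ψ (N + 1)) with hpdef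
  set q := φ (ψ N) with hqdef
  have hpq : p ≠ q := by
    have := (hφ.comp hψ) (show N < N + 1 by omega)
    simp only [Function.comp] at this
    omega
  have hinner : ⟪e p, e q⟫ = 0 := honb.2 hpq
  have hdist : dist (T (e p)) (T (e q)) ^ 2 = μ p ^ 2 + μ q ^ 2 := by
    rw [dist_eq_norm, hμ p, hμ q, norm_sub_sq_real,
      real_inner_smul_left, real_inner_smul_right, hinner, norm_smul, norm_smul]
    simp only [Real.norm_eq_abs, mul_pow, sq_abs, hnorm1]
    ring
  have h1 : c ^ 2 ≤ μ p ^ 2 := by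
    have hcp := hφP (ψ (N + 1))
    nlinarith [sq_abs (μ p), abs_nonneg (μ p)]
  have h2 : c ^ 2 ≤ μ q ^ 2 := by
    have hcq := hφP (ψ N)
    nlinarith [sq_abs (μ q), abs_nonneg (μ q)]
  have hd' : dist (T (e p)) (T (e q)) < c := hd
  nlinarith [dist_nonneg (x := T (e p)) (y := T (e q))]

end SpectralAux

set_option maxHeartbeats 2000000 in
/-- spectral theorem for self-adjoint Hilbert space pair operators:
if `A : H₁ → H₀` is symmetric and Fredholm of index zero, then there is an orthonormal
Hilbert basis `(ι w_ℓ)` of `H₀` consisting of eigenvectors, `A w_ℓ = a_ℓ • ι w_ℓ`, with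
eigenvalues of finite multiplicity accumulating only at `±∞`. -/
theorem pair_operator_spectral_theorem
    {H0 H1 : Type*}
    [NormedAddCommGroup H0] [InnerProductSpace ℝ H0] [CompleteSpace H0]
    [NormedAddCommGroup H1] [InnerProductSpace ℝ H1] [CompleteSpace H1]
    (h0inf : ¬ FiniteDimensional ℝ H0) (h1inf : ¬ FiniteDimensional ℝ H1)
    (ι : H1 →L[ℝ] H0) (hι_inj : Function.Injective ι)
    (hι_cpt : IsCompactOperator (⇑ι)) (hι_dense : DenseRange ι)
    (A : H1 →L[ℝ] H0)
    (h_sym : ∀ x y : H1, ⟪A x, ι y⟫ = ⟪ι x, A y⟫)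
    (h_fred : FredholmIdxZero A) :
    ∃ (w : ℕ → H1) (a : ℕ → ℝ),
      Orthonormal ℝ (fun ℓ => ι (w ℓ)) ∧
      (Submodule.span ℝ (Set.range fun ℓ => ι (w ℓ))).topologicalClosure = ⊤ ∧
      (∀ ℓ, A (w ℓ) = a ℓ • ι (w ℓ)) ∧
      (∀ R : ℝ, 0 < R → {ℓ : ℕ | |a ℓ| ≤ R}.Finite) := by
  classical
  -- separability of H0
  haveI hsep : TopologicalSpace.SeparableSpace H0 := by
    obtain ⟨K, hK, hKmem⟩ := hι_cpt
    obtain ⟨r, hr, hball⟩ := Metric.mem_nhds_iff.mp hKmem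
    have hKsep : TopologicalSpace.IsSeparable K := hK.isSeparable
    have hcover : Set.range ι ⊆ ⋃ n : ℕ, (fun y : H0 => ((n : ℝ) + 1) • y) '' K := by
      rintro _ ⟨x, rfl⟩
      obtain ⟨n, hn⟩ := exists_nat_gt (‖x‖ / (r / 2))
      have h2 : (0 : ℝ) < r / 2 := by linarith
      have hn' : ‖x‖ < ((n : ℝ) + 1) * (r / 2) := by
        have h3 : ‖x‖ / (r / 2) < (n : ℝ) + 1 := lt_of_lt_of_le hn (by linarith)
        exact (div_lt_iff₀ h2).mp h3
      have hpos : (0 : ℝ) < (n : ℝ) + 1 := by positivity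
      refine Set.mem_iUnion.mpr ⟨n, ⟨ι ((((n : ℝ) + 1))⁻¹ • x), ?_, ?_⟩⟩
      · apply hball
        rw [Metric.mem_ball, dist_zero_right, norm_smul, Real.norm_eq_abs,
          abs_inv, abs_of_pos hpos]
        calc ((n : ℝ) + 1)⁻¹ * ‖x‖ < ((n : ℝ) + 1)⁻¹ * (((n : ℝ) + 1) * (r / 2)) :=
              mul_lt_mul_of_pos_left hn' (inv_pos.mpr hpos)
          _ = r / 2 := by field_simp
          _ < r := by linarith
      · simp only [map_smul, smul_smul, mul_inv_cancel₀ hpos.ne', one_smul]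
    have hsepr : TopologicalSpace.IsSeparable (Set.range ι) :=
      (TopologicalSpace.isSeparable_iUnion.mpr fun n : ℕ =>
        hKsep.image (continuous_const_smul _)).mono hcover
    have huniv : TopologicalSpace.IsSeparable (Set.univ : Set H0) := by
      rw [← hι_dense.closure_eq]
      exact hsepr.closure
    exact TopologicalSpace.isSeparable_univ_iff.mp huniv
  -- the submodules
  set N : Submodule ℝ H1 := LinearMap.ker (A : H1 →ₗ[ℝ] H0) with hNdef
  haveI hNfd : FiniteDimensional ℝ N := h_fred.1
  have hιinjL : Function.Injective ⇑(↑ι : H1 →ₗ[ℝ] H0) := hι_inj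
  set ιN : Submodule ℝ H0 := N.map (↑ι : H1 →ₗ[ℝ] H0) with hιNdef
  haveI hιNfd : FiniteDimensional ℝ ιN :=
    Module.Finite.equiv (Submodule.equivMapOfInjective _ hιinjL N)
  haveI : CompleteSpace ιN := FiniteDimensional.complete ℝ ιN
  set M : Submodule ℝ H0 := ιNᗮ with hMdef
  have hMclosed : IsClosed (M : Set H0) := ιN.isClosed_orthogonal
  haveI : CompleteSpace M := hMclosed.completeSpace_coe
  have hcompl : IsCompl ιN M := Submodule.isCompl_orthogonal_of_hasOrthogonalProjection
  -- the range of A is M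
  have hrange_le : LinearMap.range (A : H1 →ₗ[ℝ] H0) ≤ M := by
    rintro _ ⟨x, rfl⟩
    rw [hMdef, Submodule.mem_orthogonal]
    rintro _ ⟨n, hn, rfl⟩
    have hn0 : A n = 0 := hn
    rw [real_inner_comm]
    show ⟪A x, ι n⟫ = 0
    rw [h_sym x n, hn0, inner_zero_right]
  have hrange_eq : LinearMap.range (A : H1 →ₗ[ℝ] H0) = M := by
    refine le_antisymm hrange_le ?_
    haveI hQfd : FiniteDimensional ℝ (H0 ⧸ LinearMap.range (A : H1 →ₗ[ℝ] H0)) := h_fred.2.2.1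
    haveI hQM : FiniteDimensional ℝ (H0 ⧸ M) :=
      Module.Finite.equiv (Submodule.quotientEquivOfIsCompl M ιN hcompl.symm).symm
    have hfr : Module.finrank ℝ (H0 ⧸ LinearMap.range (A : H1 →ₗ[ℝ] H0)) = Module.finrank ℝ (H0 ⧸ M) := by
      rw [(Submodule.quotientEquivOfIsCompl M ιN hcompl.symm).finrank_eq, h_fred.2.2.2,
        (Submodule.equivMapOfInjective _ hιinjL N).finrank_eq]
    set g : (H0 ⧸ LinearMap.range (A : H1 →ₗ[ℝ] H0)) →ₗ[ℝ] (H0 ⧸ M) :=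
      Submodule.liftQ _ M.mkQ (by rw [Submodule.ker_mkQ]; exact hrange_le) with hgdef
    have hgsurj : Function.Surjective g := by
      intro y
      obtain ⟨x, rfl⟩ := Submodule.mkQ_surjective M y
      exact ⟨Submodule.Quotient.mk x, rfl⟩
    have hginj : Function.Injective g :=
      (LinearMap.injective_iff_surjective_of_finrank_eq_finrank hfr).mpr hgsurj
    intro x hx
    have h0 : g (Submodule.Quotient.mk x) = 0 := by
      show M.mkQ x = 0
      rw [Submodule.mkQ_apply, Submodule.Quotient.mk_eq_zero]
      exact hx
    have h1 : (Submodule.Quotient.mk x : H0 ⧸ LinearMap.range (A : H1 →ₗ[ℝ] H0)) = 0 := by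
      apply hginj
      rw [h0, map_zero]
    rwa [Submodule.Quotient.mk_eq_zero] at h1
  -- the complement N' and the bijection A' : N' ≃ M
  set N' : Submodule ℝ H1 := M.comap (↑ι : H1 →ₗ[ℝ] H0) with hN'def
  have hN'closed : IsClosed (N' : Set H1) := hMclosed.preimage ι.continuous
  haveI : CompleteSpace N' := hN'closed.completeSpace_coe
  have hmemM : ∀ x : N', A (x : H1) ∈ M := fun x => hrange_le ⟨(x : H1), rfl⟩
  set A' : N' →L[ℝ] M :=
    ContinuousLinearMap.codRestrict (A.comp N'.subtypeL) M hmemM with hA'def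
  have hA'ker : LinearMap.ker (A' : N' →ₗ[ℝ] M) = ⊥ := by
    rw [Submodule.eq_bot_iff]
    intro x hx
    have hx0 : A (x : H1) = 0 := by
      have := congrArg Subtype.val (LinearMap.mem_ker.mp hx)
      exact this
    have h1 : ι (x : H1) ∈ ιN := ⟨(x : H1), hx0, rfl⟩
    have h2 : ι (x : H1) ∈ M := x.2
    have h3 : ι (x : H1) = 0 := by
      have := (Submodule.orthogonal_disjoint ιN).le_bot ⟨h1, h2⟩
      simpa using this
    have h4 : (x : H1) = 0 := hι_inj (by simpa using h3)
    exact Subtype.ext h4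
  have hA'range : LinearMap.range (A' : N' →ₗ[ℝ] M) = ⊤ := by
    rw [LinearMap.range_eq_top]
    intro m
    obtain ⟨x, hx⟩ : ∃ x, A x = (m : H0) := by
      have : (m : H0) ∈ LinearMap.range (A : H1 →ₗ[ℝ] H0) := by rw [hrange_eq]; exact m.2
      exact this
    obtain ⟨n, hnN, hnu⟩ : ∃ n ∈ N, ι n = ((ιN.orthogonalProjectionOnto (ι x) : ιN) : H0) :=
      Submodule.mem_map.mp (ιN.orthogonalProjectionOnto (ι x)).2
    have hmem' : x - n ∈ N' := by
      rw [hN'def]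
      show ι (x - n) ∈ M
      rw [map_sub, hnu]
      exact Submodule.sub_starProjection_mem_orthogonal (K := ιN) (ι x)
    refine ⟨⟨x - n, hmem'⟩, ?_⟩
    apply Subtype.ext
    show A (x - n) = (m : H0)
    have hn0 : A n = 0 := hnN
    rw [map_sub, hx, hn0, sub_zero]
  set Aeq : N' ≃L[ℝ] M := ContinuousLinearEquiv.ofBijective A' hA'ker hA'range with hAeqdef
  -- the compact operator T on M
  set J : N' →L[ℝ] M :=
    ContinuousLinearMap.codRestrict (ι.comp N'.subtypeL) M (fun x => x.2) with hJdef
  set T : M →L[ℝ] M := J.comp (Aeq.symm : M →L[ℝ] N') with hTdef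
  have hTapp : ∀ m : M, (T m : H0) = ι ((Aeq.symm m : N') : H1) := fun m => rfl
  have hTcpt : IsCompactOperator (⇑T) := by
    have h1 : IsCompactOperator (⇑ι ∘ ⇑(N'.subtypeL.comp (Aeq.symm : M →L[ℝ] N'))) :=
      hι_cpt.comp_clm _
    exact h1.codRestrict (fun m => (Aeq.symm m).2) hMclosed
  have hAS : ∀ m : M, A ((Aeq.symm m : N') : H1) = (m : H0) := by
    intro m
    exact congrArg Subtype.val (Aeq.apply_symm_apply m)
  have hTsym : ∀ m m' : M, ⟪T m, m'⟫ = ⟪m, T m'⟫ := by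
    intro m m'
    show ⟪(T m : H0), (m' : H0)⟫ = ⟪(m : H0), (T m' : H0)⟫
    rw [hTapp, hTapp, ← hAS m, ← hAS m', ← h_sym]
  have hTinj : Function.Injective T := by
    intro m m' h
    have h2 : ι ((Aeq.symm m : N') : H1) = ι ((Aeq.symm m' : N') : H1) := by
      rw [← hTapp, ← hTapp, h]
    have h4 : Aeq.symm m = Aeq.symm m' := Subtype.ext (hι_inj h2)
    simpa using congrArg Aeq h4
  -- M is infinite-dimensional and separable
  have hMinf : ¬ FiniteDimensional ℝ M := by
    intro hfd
    apply h0inf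
    haveI : FiniteDimensional ℝ (ιN ⊔ M : Submodule ℝ H0) := inferInstance
    haveI : FiniteDimensional ℝ (⊤ : Submodule ℝ H0) := by
      rw [← hcompl.sup_eq_top]; infer_instance
    exact Module.Finite.equiv Submodule.topEquiv
  haveI : SecondCountableTopology H0 := UniformSpace.secondCountable_of_separable H0
  haveI : TopologicalSpace.SeparableSpace M :=
    TopologicalSpace.SecondCountableTopology.to_separableSpace
  obtain ⟨e, μ, he_on, he_dense, he_eig, he_fin⟩ := spectral_basis hMinf T hTcpt hTsym
  have hμ0 : ∀ n, μ n ≠ 0 := by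
    intro n h0
    have h1 := he_eig n
    rw [h0, zero_smul] at h1
    have h2 : e n = 0 := hTinj (by rw [h1, map_zero])
    have h3 := he_on.1 n
    rw [h2, norm_zero] at h3
    norm_num at h3
  -- the finite-dimensional part: an orthonormal basis of ιN
  set k := Module.finrank ℝ ιN with hkdef
  set b := stdOrthonormalBasis ℝ ιN with hbdef
  have hbex : ∀ i : Fin k, ∃ n, n ∈ N ∧ ι n = ((b i : ιN) : H0) := by
    intro i
    obtain ⟨n, hn1, hn2⟩ := Submodule.mem_map.mp (b i).2
    exact ⟨n, hn1, hn2⟩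
  choose nv hnv1 hnv2 using hbex
  -- the infinite-dimensional part
  set xv : ℕ → H1 := fun n => (μ n)⁻¹ • ((Aeq.symm (e n) : N') : H1) with hxvdef
  have hxι : ∀ n, ι (xv n) = ((e n : M) : H0) := by
    intro n
    rw [hxvdef]
    simp only [map_smul]
    rw [← hTapp, he_eig n]
    rw [Submodule.coe_smul, smul_smul, inv_mul_cancel₀ (hμ0 n), one_smul]
  have hxA : ∀ n, A (xv n) = (μ n)⁻¹ • ((e n : M) : H0) := by
    intro n
    rw [hxvdef]
    simp only [map_smul]
    rw [hAS]
  -- assembling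
  set w : ℕ → H1 := fun ℓ => if h : ℓ < k then nv ⟨ℓ, h⟩ else xv (ℓ - k) with hwdef
  set a : ℕ → ℝ := fun ℓ => if ℓ < k then 0 else (μ (ℓ - k))⁻¹ with hadef
  have hwι : ∀ ℓ : ℕ,
      ι (w ℓ) = if h : ℓ < k then ((b ⟨ℓ, h⟩ : ιN) : H0) else ((e (ℓ - k) : M) : H0) := by
    intro ℓ
    by_cases h : ℓ < k
    · rw [hwdef]; simp only [dif_pos h]; exact hnv2 ⟨ℓ, h⟩
    · rw [hwdef]; simp only [dif_neg h]; exact hxι (ℓ - k)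
  have horthonormal : Orthonormal ℝ (fun ℓ => ι (w ℓ)) := by
    rw [orthonormal_iff_ite]
    intro i j
    simp only [hwι i, hwι j]
    by_cases hi : i < k <;> by_cases hj : j < k
    · rw [dif_pos hi, dif_pos hj]
      have h1 := orthonormal_iff_ite.mp b.orthonormal ⟨i, hi⟩ ⟨j, hj⟩
      rw [Submodule.coe_inner] at h1
      rw [h1]
      by_cases hij : i = j
      · subst hij; rw [if_pos rfl, if_pos rfl]
      · rw [if_neg (by simp [Fin.ext_iff, hij]), if_neg hij]
    · rw [dif_pos hi, dif_neg hj, if_neg (by omega)]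
      exact Submodule.inner_right_of_mem_orthogonal (b ⟨i, hi⟩).2 (e (j - k)).2
    · rw [dif_neg hi, dif_pos hj, if_neg (by omega)]
      exact Submodule.inner_left_of_mem_orthogonal (b ⟨j, hj⟩).2 (e (i - k)).2
    · rw [dif_neg hi, dif_neg hj]
      have h1 := orthonormal_iff_ite.mp he_on (i - k) (j - k)
      rw [Submodule.coe_inner] at h1
      rw [h1]
      by_cases hij : i = j
      · subst hij; rw [if_pos rfl, if_pos rfl]
      · rw [if_neg (by omega), if_neg hij]
  refine ⟨w, a, horthonormal, ?_, ?_, ?_⟩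
  · -- dense span
    set W := Submodule.span ℝ (Set.range fun ℓ => ι (w ℓ)) with hWdef
    have hιN_le : ιN ≤ W := by
      intro z hz
      have hz' : (⟨z, hz⟩ : ιN) ∈ (⊤ : Submodule ℝ ιN) := trivial
      rw [← b.toBasis.span_eq] at hz'
      have h2 := Submodule.mem_map_of_mem (f := ιN.subtype) hz'
      rw [Submodule.map_span] at h2
      have h3 : ιN.subtype '' Set.range ⇑b.toBasis ⊆ Set.range fun ℓ => ι (w ℓ) := by
        rintro _ ⟨_, ⟨i, rfl⟩, rfl⟩
        refine ⟨(i : ℕ), ?_⟩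
        show ι (w (i : ℕ)) = ιN.subtype (b.toBasis i)
        rw [hwι (i : ℕ), dif_pos i.isLt]
        simp
      exact Submodule.span_mono h3 h2
    have hWbot : Wᗮ = ⊥ := by
      rw [Submodule.eq_bot_iff]
      intro x hx
      have hxM : x ∈ M := (Submodule.orthogonal_le hιN_le) hx
      have hon : ∀ ℓ : ℕ, ⟪ι (w ℓ), x⟫ = 0 := fun ℓ =>
        (Submodule.mem_orthogonal W x).mp hx _ (Submodule.subset_span ⟨ℓ, rfl⟩)
      have hxM' : (⟨x, hxM⟩ : M) ∈ (Submodule.span ℝ (Set.range e))ᗮ := by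
        rw [Submodule.mem_orthogonal]
        intro u hu
        induction hu using Submodule.span_induction with
        | mem v hv =>
            obtain ⟨n, rfl⟩ := hv
            have h5 : ⟪((e n : M) : H0), x⟫ = 0 := by
              have h6 := hon (n + k)
              rw [hwι (n + k), dif_neg (by omega)] at h6
              simpa using h6
            rw [Submodule.coe_inner]
            exact h5
        | zero => rw [inner_zero_left]
        | add u v hu hv ihu ihv => rw [inner_add_left, ihu, ihv, add_zero]
        | smul c u hu ih => rw [real_inner_smul_left, ih, mul_zero]
      have h7 : (Submodule.span ℝ (Set.range e))ᗮ = ⊥ :=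
        Submodule.topologicalClosure_eq_top_iff.mp he_dense
      rw [h7, Submodule.mem_bot] at hxM'
      simpa using congrArg Subtype.val hxM'
    exact Submodule.topologicalClosure_eq_top_iff.mpr hWbot
  · -- eigen equations
    intro ℓ
    by_cases h : ℓ < k
    · rw [hwdef, hadef]
      simp only [dif_pos h, if_pos h, zero_smul]
      exact hnv1 ⟨ℓ, h⟩
    · rw [hwdef, hadef]
      simp only [dif_neg h, if_neg h]
      rw [hxA, hxι]
  · -- finiteness
    intro R hR
    have hsub : {ℓ : ℕ | |a ℓ| ≤ R} ⊆
        Set.Iio k ∪ (fun n => n + k) '' {n : ℕ | R⁻¹ ≤ |μ n|} := by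
      intro ℓ hℓ
      by_cases h : ℓ < k
      · exact Or.inl h
      · right
        refine ⟨ℓ - k, ?_, by simp only []; omega⟩
        have hℓa : |a ℓ| ≤ R := hℓ
        have ha' : a ℓ = (μ (ℓ - k))⁻¹ := by simp only [hadef]; rw [if_neg h]
        rw [ha'] at hℓa
        have habs : 0 < |μ (ℓ - k)| := abs_pos.mpr (hμ0 (ℓ - k))
        rw [abs_inv] at hℓa
        have h1 : 1 ≤ R * |μ (ℓ - k)| := by
          calc (1 : ℝ) = |μ (ℓ - k)|⁻¹ * |μ (ℓ - k)| := (inv_mul_cancel₀ habs.ne').symm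
            _ ≤ R * |μ (ℓ - k)| := mul_le_mul_of_nonneg_right hℓa habs.le
        show R⁻¹ ≤ |μ (ℓ - k)|
        rw [inv_eq_one_div, div_le_iff₀ hR]
        linarith
    exact Set.Finite.subset
      ((Set.finite_Iio k).union ((he_fin R⁻¹ (by positivity)).image _)) hsub
end

section
/- (Surjectivity of the evaluation map onto H_{1/2}.) Let 𝔥 : ℕ → (0,∞) be a growth function with 𝔥(ν) ≥ 1 for all ν, and let x⁰ = (x⁰_ν)_{ν∈ℕ} be a real sequence with Σ_ν √𝔥(ν) (x⁰_ν)² < ∞. Define x_ν : [0,1] → ℝ by x_ν(s) := e^{−√𝔥(ν) · s} x⁰_ν. Then x_ν(0) = x⁰_ν for every ν and Σ_ν ∫_0^1 ( 𝔥(ν) x_ν(s)² + x_ν′(s)² + x_ν(s)² ) ds ≤ 2 Σ_ν √𝔥(ν) (x⁰_ν)². In particular, every element of ℓ²_{𝔥^{1/2}} is the value at s = 0 of a family x = (x_ν) of absolutely continuous functions on [0,1] with Σ_ν ∫_0^1 𝔥(ν) x_ν² ds < ∞ and Σ_ν ∫_0^1 ( x_ν′² + x_ν² ) ds < ∞. 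-/
open MeasureTheory
lemma key_bound (a c : ℝ) (ha : 1 ≤ a) :
    (∫⁻ s in Set.Icc (0:ℝ) 1,
        ENNReal.ofReal
          (a ^ 2 * (Real.exp (-a * s) * c) ^ 2
            + (-a * Real.exp (-a * s) * c) ^ 2
            + (Real.exp (-a * s) * c) ^ 2)) ≤
      ENNReal.ofReal (2 * a * c ^ 2) := by
  have ha0 : (0:ℝ) < a := lt_of_lt_of_le one_pos ha
  set K : ℝ := (2 * a ^ 2 + 1) * c ^ 2 with hK
  have hfeq : ∀ s : ℝ,
      a ^ 2 * (Real.exp (-a * s) * c) ^ 2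
        + (-a * Real.exp (-a * s) * c) ^ 2
        + (Real.exp (-a * s) * c) ^ 2 = K * Real.exp (-(2 * a) * s) := by
    intro s
    have e2 : Real.exp (-a * s) * Real.exp (-a * s) = Real.exp (-(2 * a) * s) := by
      rw [← Real.exp_add]; ring_nf
    rw [hK]
    linear_combination ((2 * a ^ 2 + 1) * c ^ 2) * e2
  have hcont : Continuous fun s : ℝ => K * Real.exp (-(2 * a) * s) := by
    continuity
  have hint : IntegrableOn (fun s : ℝ => K * Real.exp (-(2 * a) * s)) (Set.Icc (0:ℝ) 1) :=
    hcont.integrableOn_Icc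
  have hK0 : 0 ≤ K := by positivity
  have hnn : 0 ≤ᵐ[volume.restrict (Set.Icc (0:ℝ) 1)]
      fun s : ℝ => K * Real.exp (-(2 * a) * s) := by
    filter_upwards with s
    positivity
  calc (∫⁻ s in Set.Icc (0:ℝ) 1,
        ENNReal.ofReal
          (a ^ 2 * (Real.exp (-a * s) * c) ^ 2
            + (-a * Real.exp (-a * s) * c) ^ 2
            + (Real.exp (-a * s) * c) ^ 2))
      = ∫⁻ s in Set.Icc (0:ℝ) 1, ENNReal.ofReal (K * Real.exp (-(2 * a) * s)) := by
        simp only [hfeq]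
    _ = ENNReal.ofReal (∫ s in Set.Icc (0:ℝ) 1, K * Real.exp (-(2 * a) * s)) :=
        (MeasureTheory.ofReal_integral_eq_lintegral_ofReal hint hnn).symm
    _ ≤ ENNReal.ofReal (2 * a * c ^ 2) := by
        apply ENNReal.ofReal_le_ofReal
        have hval : (∫ s in Set.Icc (0:ℝ) 1, K * Real.exp (-(2 * a) * s))
            = K * ((1 - Real.exp (-(2 * a))) / (2 * a)) := by
          rw [MeasureTheory.integral_Icc_eq_integral_Ioc,
            ← intervalIntegral.integral_of_le (by norm_num : (0:ℝ) ≤ 1),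
            intervalIntegral.integral_const_mul]
          have hc : (-(2 * a)) ≠ 0 := by
            intro hcon; nlinarith
          rw [intervalIntegral.integral_comp_mul_left (a := (0:ℝ)) (b := 1) Real.exp hc]
          rw [integral_exp]
          field_simp
          rw [smul_eq_mul, mul_zero, neg_zero, Real.exp_zero]
          have h2 : 2 * a * (1 / (2 * a)) = 1 := by field_simp
          linear_combination (K * (1 - Real.exp (-(2 * a)))) * h2
        rw [hval, mul_div_assoc', div_le_iff₀ (by positivity : (0:ℝ) < 2 * a)]
        nlinarith [Real.exp_pos (-(2 * a)), sq_nonneg c, sq_nonneg (a - 1),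
          mul_nonneg hK0 (Real.exp_pos (-(2 * a))).le]


/-- surjectivity of the evaluation map onto `H_{1/2}`: for a growth
function `𝔥 ≥ 1` and `x⁰ ∈ ℓ²_{𝔥^{1/2}}`, the family `x_ν(s) = e^{−√𝔥(ν) s} x⁰_ν`
satisfies `x_ν(0) = x⁰_ν`, has derivative `x_ν′(s) = −√𝔥(ν) e^{−√𝔥(ν) s} x⁰_ν`, and
`Σ_ν ∫_0^1 (𝔥(ν) x_ν² + x_ν′² + x_ν²) ds ≤ 2 Σ_ν √𝔥(ν) (x⁰_ν)²`. -/
theorem evaluation_surjective_estimate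
    (h : ℕ → ℝ) (hmono : Monotone h) (hub : ∀ C : ℝ, ∃ ν, C < h ν)
    (h1 : ∀ ν, 1 ≤ h ν)
    (x0 : ℕ → ℝ)
    (hx0 : Summable fun ν => Real.sqrt (h ν) * (x0 ν) ^ 2) :
    (∀ ν, Real.exp (-(Real.sqrt (h ν)) * (0:ℝ)) * x0 ν = x0 ν) ∧
    (∀ ν, ∀ s : ℝ,
      HasDerivAt (fun t => Real.exp (-(Real.sqrt (h ν)) * t) * x0 ν)
        (-(Real.sqrt (h ν)) * Real.exp (-(Real.sqrt (h ν)) * s) * x0 ν) s) ∧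
    (∑' ν, ∫⁻ s in Set.Icc (0:ℝ) 1,
        ENNReal.ofReal
          (h ν * (Real.exp (-(Real.sqrt (h ν)) * s) * x0 ν) ^ 2
            + (-(Real.sqrt (h ν)) * Real.exp (-(Real.sqrt (h ν)) * s) * x0 ν) ^ 2
            + (Real.exp (-(Real.sqrt (h ν)) * s) * x0 ν) ^ 2)) ≤
      2 * ∑' ν, ENNReal.ofReal (Real.sqrt (h ν) * (x0 ν) ^ 2) := by

  refine ⟨fun ν => by simp, fun ν s => ?_, ?_⟩
  · have hd : HasDerivAt (fun t : ℝ => -(Real.sqrt (h ν)) * t) (-(Real.sqrt (h ν))) s := by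
      simpa using (hasDerivAt_id s).const_mul (-(Real.sqrt (h ν)))
    have := ((Real.hasDerivAt_exp _).comp s hd).mul_const (x0 ν)
    exact this.congr_deriv (by ring)
  · have key : ∀ ν, (∫⁻ s in Set.Icc (0:ℝ) 1,
        ENNReal.ofReal
          (h ν * (Real.exp (-(Real.sqrt (h ν)) * s) * x0 ν) ^ 2
            + (-(Real.sqrt (h ν)) * Real.exp (-(Real.sqrt (h ν)) * s) * x0 ν) ^ 2
            + (Real.exp (-(Real.sqrt (h ν)) * s) * x0 ν) ^ 2)) ≤
        ENNReal.ofReal (2 * Real.sqrt (h ν) * (x0 ν) ^ 2) := by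
      intro ν
      have ha : 1 ≤ Real.sqrt (h ν) := by
        rw [show (1:ℝ) = Real.sqrt 1 by simp]
        exact Real.sqrt_le_sqrt (h1 ν)
      have hsq : Real.sqrt (h ν) ^ 2 = h ν :=
        Real.sq_sqrt (le_trans zero_le_one (h1 ν))
      have := key_bound (Real.sqrt (h ν)) (x0 ν) ha
      rwa [hsq] at this
    calc (∑' ν, ∫⁻ s in Set.Icc (0:ℝ) 1,
        ENNReal.ofReal
          (h ν * (Real.exp (-(Real.sqrt (h ν)) * s) * x0 ν) ^ 2
            + (-(Real.sqrt (h ν)) * Real.exp (-(Real.sqrt (h ν)) * s) * x0 ν) ^ 2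
            + (Real.exp (-(Real.sqrt (h ν)) * s) * x0 ν) ^ 2))
        ≤ ∑' ν, ENNReal.ofReal (2 * Real.sqrt (h ν) * (x0 ν) ^ 2) :=
          ENNReal.tsum_le_tsum key
      _ = 2 * ∑' ν, ENNReal.ofReal (Real.sqrt (h ν) * (x0 ν) ^ 2) := by
          rw [← ENNReal.tsum_mul_left]
          congr 1
          funext ν
          rw [mul_assoc, ENNReal.ofReal_mul (by norm_num : (0:ℝ) ≤ 2)]
          norm_num
end

section
/- (Surjectivity of the two-point evaluation map.) Let 𝔥 : ℕ → (0,∞) be a growth function with 𝔥(ν) ≥ 1 for all ν. For any two real sequences x⁰ = (x⁰_ν) and x¹ = (x¹_ν) with Σ_ν √𝔥(ν) (x⁰_ν)² < ∞ and Σ_ν √𝔥(ν) (x¹_ν)² < ∞, there exists a family x = (x_ν)_{ν∈ℕ} of absolutely continuous functions x_ν : [0,1] → ℝ with Σ_ν ∫_0^1 𝔥(ν) x_ν(s)² ds < ∞ and Σ_ν ∫_0^1 ( x_ν′(s)² + x_ν(s)² ) ds < ∞, such that x_ν(0) = x⁰_ν and x_ν(1) = x¹_ν for every ν ∈ ℕ.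 -/
open MeasureTheory

/-- surjectivity of the two-point evaluation map: for a growth function
`𝔥 ≥ 1` and sequences `x⁰, x¹ ∈ ℓ²_{𝔥^{1/2}}`, there is a family `x = (x_ν)` of
absolutely continuous functions on `[0,1]` with `Σ_ν ∫ 𝔥(ν) x_ν² < ∞` and
`Σ_ν ∫ (x_ν′² + x_ν²) < ∞` such that `x_ν(0) = x⁰_ν` and `x_ν(1) = x¹_ν` for every ν. -/
theorem two_point_evaluation_surjective
    (h : ℕ → ℝ) (hmono : Monotone h) (hub : ∀ C : ℝ, ∃ ν, C < h ν)
    (h1 : ∀ ν, 1 ≤ h ν)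
    (x0 x1 : ℕ → ℝ)
    (hx0 : Summable fun ν => Real.sqrt (h ν) * (x0 ν) ^ 2)
    (hx1 : Summable fun ν => Real.sqrt (h ν) * (x1 ν) ^ 2) :
    ∃ x x' : ℕ → ℝ → ℝ,
      (∀ ν, Measurable (x' ν)) ∧
      (∀ ν, IntervalIntegrable (x' ν) volume 0 1) ∧
      (∀ ν, ∀ t ∈ Set.Icc (0:ℝ) 1, x ν t = x ν 0 + ∫ s in (0:ℝ)..t, x' ν s) ∧
      ((∑' ν, ∫⁻ s in Set.Icc (0:ℝ) 1,
          ENNReal.ofReal (h ν * (x ν s) ^ 2)) ≠ ⊤) ∧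
      ((∑' ν, ∫⁻ s in Set.Icc (0:ℝ) 1,
          ENNReal.ofReal ((x' ν s) ^ 2 + (x ν s) ^ 2)) ≠ ⊤) ∧
      (∀ ν, x ν 0 = x0 ν) ∧ (∀ ν, x ν 1 = x1 ν) := by
  classical
  have hhpos : ∀ ν, (0:ℝ) < h ν := fun ν => lt_of_lt_of_le one_pos (h1 ν)
  have hs1 : ∀ ν, 1 ≤ Real.sqrt (h ν) := fun ν => by
    have := Real.sqrt_le_sqrt (h1 ν); simpa using this
  have hspos : ∀ ν, 0 < Real.sqrt (h ν) := fun ν => lt_of_lt_of_le one_pos (hs1 ν)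
  set δ : ℕ → ℝ := fun ν => (Real.sqrt (h ν))⁻¹ with hδ
  have hδpos : ∀ ν, 0 < δ ν := fun ν => inv_pos.mpr (hspos ν)
  have hδle1 : ∀ ν, δ ν ≤ 1 := fun ν => inv_le_one_of_one_le₀ (hs1 ν)
  have hδinv : ∀ ν, (δ ν)⁻¹ = Real.sqrt (h ν) := fun ν => inv_inv _
  have hδh : ∀ ν, h ν * δ ν = Real.sqrt (h ν) := by
    intro ν
    show h ν * (Real.sqrt (h ν))⁻¹ = Real.sqrt (h ν)
    rw [inv_eq_one_div, mul_one_div, div_eq_iff (ne_of_gt (hspos ν)),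
      Real.mul_self_sqrt (hhpos ν).le]
  -- the functions
  set X' : ℕ → ℝ → ℝ := fun ν s =>
    Set.indicator (Set.Iic (δ ν)) (fun _ => -(x0 ν) / δ ν) s +
    Set.indicator (Set.Ioi (1 - δ ν)) (fun _ => x1 ν / δ ν) s with hX'
  set X : ℕ → ℝ → ℝ := fun ν t => x0 ν + ∫ s in (0:ℝ)..t, X' ν s with hXdef
  have hmeas : ∀ ν, Measurable (X' ν) := fun ν =>
    (measurable_const.indicator measurableSet_Iic).add
      (measurable_const.indicator measurableSet_Ioi)
  have hIntOn : ∀ ν (a b : ℝ), IntegrableOn (X' ν) (Set.Ioc a b) volume := by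
    intro ν a b
    apply Integrable.add
    · exact (integrableOn_const measure_Ioc_lt_top.ne).indicator measurableSet_Iic
    · exact (integrableOn_const measure_Ioc_lt_top.ne).indicator measurableSet_Ioi
  have hint : ∀ ν, IntervalIntegrable (X' ν) volume 0 1 := by
    intro ν
    rw [intervalIntegrable_iff_integrableOn_Ioc_of_le (by norm_num)]
    exact hIntOn ν 0 1
  -- key value computation
  have key : ∀ ν t, 0 ≤ t → X ν t =
      x0 ν + (min t (δ ν)) * (-(x0 ν) / δ ν)
        + (max (t - (1 - δ ν)) 0) * (x1 ν / δ ν) := by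
    intro ν t ht
    have hi1 : IntegrableOn (fun s => Set.indicator (Set.Iic (δ ν)) (fun _ => -(x0 ν) / δ ν) s)
        (Set.Ioc 0 t) volume :=
      (integrableOn_const measure_Ioc_lt_top.ne).indicator measurableSet_Iic
    have hi2 : IntegrableOn (fun s => Set.indicator (Set.Ioi (1 - δ ν)) (fun _ => x1 ν / δ ν) s)
        (Set.Ioc 0 t) volume :=
      (integrableOn_const measure_Ioc_lt_top.ne).indicator measurableSet_Ioi
    have e1 : (∫ s in Set.Ioc (0:ℝ) t,
        Set.indicator (Set.Iic (δ ν)) (fun _ => -(x0 ν) / δ ν) s)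
        = (min t (δ ν)) * (-(x0 ν) / δ ν) := by
      rw [setIntegral_indicator measurableSet_Iic, Set.Ioc_inter_Iic,
        setIntegral_const, Real.volume_real_Ioc, smul_eq_mul,
        max_eq_left (by simp [le_min ht (hδpos ν).le])]
      ring_nf
    have e2 : (∫ s in Set.Ioc (0:ℝ) t,
        Set.indicator (Set.Ioi (1 - δ ν)) (fun _ => x1 ν / δ ν) s)
        = (max (t - (1 - δ ν)) 0) * (x1 ν / δ ν) := by
      rw [setIntegral_indicator measurableSet_Ioi, Set.Ioc_inter_Ioi,
        setIntegral_const, Real.volume_real_Ioc, smul_eq_mul,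
        max_eq_right (by linarith [hδle1 ν] : (0:ℝ) ≤ 1 - δ ν)]
    rw [hXdef]
    simp only []
    rw [intervalIntegral.integral_of_le ht, hX']
    rw [integral_add hi1 hi2, e1, e2]
    ring
  -- endpoint values
  have hX0 : ∀ ν, X ν 0 = x0 ν := by
    intro ν
    rw [key ν 0 le_rfl, min_eq_left (hδpos ν).le,
      max_eq_right (by linarith [hδle1 ν] : (0:ℝ) - (1 - δ ν) ≤ 0)]
    ring
  have hX1 : ∀ ν, X ν 1 = x1 ν := by
    intro ν
    rw [key ν 1 zero_le_one, min_eq_right (hδle1 ν),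
      max_eq_left (by linarith [hδpos ν] : (0:ℝ) ≤ 1 - (1 - δ ν))]
    have hδne : δ ν ≠ 0 := (hδpos ν).ne'
    field_simp
    ring
  -- the bad set
  set A : ℕ → Set ℝ := fun ν => Set.Icc 0 (δ ν) ∪ Set.Icc (1 - δ ν) 1 with hA
  have hAmeas : ∀ ν, MeasurableSet (A ν) :=
    fun ν => measurableSet_Icc.union measurableSet_Icc
  have hAvol : ∀ ν, volume (A ν) ≤ ENNReal.ofReal (2 * δ ν) := by
    intro ν
    calc volume (A ν) ≤ volume (Set.Icc (0:ℝ) (δ ν)) + volume (Set.Icc (1 - δ ν) 1) :=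
          measure_union_le _ _
      _ = ENNReal.ofReal (δ ν) + ENNReal.ofReal (δ ν) := by
          rw [Real.volume_Icc, Real.volume_Icc]
          norm_num
      _ = ENNReal.ofReal (2 * δ ν) := by
          rw [← ENNReal.ofReal_add (hδpos ν).le (hδpos ν).le, two_mul]
  -- X vanishes off A, and is bounded by |x0| + |x1| on [0,1]
  have hXzero : ∀ ν, ∀ t ∈ Set.Icc (0:ℝ) 1, t ∉ A ν → X ν t = 0 := by
    intro ν t ht hnA
    have h1' : δ ν < t := by
      by_contra hc
      exact hnA (Or.inl ⟨ht.1, not_lt.mp hc⟩)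
    have h2' : t < 1 - δ ν := by
      by_contra hc
      exact hnA (Or.inr ⟨not_lt.mp hc, ht.2⟩)
    rw [key ν t ht.1, min_eq_right h1'.le,
      max_eq_right (by linarith : t - (1 - δ ν) ≤ 0)]
    have hδne : δ ν ≠ 0 := (hδpos ν).ne'
    field_simp
    ring
  have hXbound : ∀ ν, ∀ t ∈ Set.Icc (0:ℝ) 1, |X ν t| ≤ |x0 ν| + |x1 ν| := by
    intro ν t ht
    have hm : 0 ≤ min t (δ ν) := le_min ht.1 (hδpos ν).le
    have hm' : min t (δ ν) ≤ δ ν := min_le_right _ _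
    have hq : 0 ≤ max (t - (1 - δ ν)) 0 := le_max_right _ _
    have hq' : max (t - (1 - δ ν)) 0 ≤ δ ν :=
      max_le (by linarith [ht.2]) (hδpos ν).le
    have hrw : X ν t = x0 ν * (1 - min t (δ ν) / δ ν)
        + x1 ν * (max (t - (1 - δ ν)) 0 / δ ν) := by
      have hδne : δ ν ≠ 0 := (hδpos ν).ne'
      rw [key ν t ht.1]; field_simp; ring
    have hc1 : |1 - min t (δ ν) / δ ν| ≤ 1 := by
      rw [abs_le]
      constructor
      · have : min t (δ ν) / δ ν ≤ 1 := by
          rw [div_le_one (hδpos ν)]; exact hm'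
        linarith
      · have : 0 ≤ min t (δ ν) / δ ν := div_nonneg hm (hδpos ν).le
        linarith
    have hc2 : |max (t - (1 - δ ν)) 0 / δ ν| ≤ 1 := by
      rw [abs_le]
      constructor
      · have : 0 ≤ max (t - (1 - δ ν)) 0 / δ ν := div_nonneg hq (hδpos ν).le
        linarith
      · rw [div_le_one (hδpos ν)]; exact hq'
    calc |X ν t| ≤ |x0 ν * (1 - min t (δ ν) / δ ν)|
          + |x1 ν * (max (t - (1 - δ ν)) 0 / δ ν)| := by
          rw [hrw]; exact abs_add_le _ _
      _ ≤ |x0 ν| * 1 + |x1 ν| * 1 := by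
          rw [abs_mul, abs_mul]
          exact add_le_add (mul_le_mul_of_nonneg_left hc1 (abs_nonneg _))
            (mul_le_mul_of_nonneg_left hc2 (abs_nonneg _))
      _ = |x0 ν| + |x1 ν| := by ring
  -- X' vanishes off A (within [0,1]) and is bounded
  have hX'zero : ∀ ν, ∀ t ∈ Set.Icc (0:ℝ) 1, t ∉ A ν → X' ν t = 0 := by
    intro ν t ht hnA
    have h1' : δ ν < t := by
      by_contra hc
      exact hnA (Or.inl ⟨ht.1, not_lt.mp hc⟩)
    have h2' : t < 1 - δ ν := by
      by_contra hc
      exact hnA (Or.inr ⟨not_lt.mp hc, ht.2⟩)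
    rw [hX']
    simp only [Set.indicator_apply, Set.mem_Iic, Set.mem_Ioi]
    rw [if_neg (by linarith), if_neg (by linarith)]
    ring
  have hX'bound : ∀ ν t, |X' ν t| ≤ (|x0 ν| + |x1 ν|) * Real.sqrt (h ν) := by
    intro ν t
    have b1 : |Set.indicator (Set.Iic (δ ν)) (fun _ => -(x0 ν) / δ ν) t|
        ≤ |x0 ν| / δ ν := by
      rw [Set.indicator_apply]
      split_ifs
      · rw [abs_div, abs_neg, abs_of_pos (hδpos ν)]
      · simp [div_nonneg (abs_nonneg _) (hδpos ν).le]
    have b2 : |Set.indicator (Set.Ioi (1 - δ ν)) (fun _ => x1 ν / δ ν) t|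
        ≤ |x1 ν| / δ ν := by
      rw [Set.indicator_apply]
      split_ifs
      · rw [abs_div, abs_of_pos (hδpos ν)]
      · simp [div_nonneg (abs_nonneg _) (hδpos ν).le]
    calc |X' ν t| ≤ |x0 ν| / δ ν + |x1 ν| / δ ν :=
        le_trans (abs_add_le _ _) (add_le_add b1 b2)
      _ = (|x0 ν| + |x1 ν|) * Real.sqrt (h ν) := by
        rw [← add_div, div_eq_mul_inv, hδinv ν]
  -- generic integral bound via the indicator of A
  have bound : ∀ ν (f : ℝ → ℝ) (M : ℝ), 0 ≤ M →
      (∀ s ∈ Set.Icc (0:ℝ) 1,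
        ENNReal.ofReal (f s) ≤ (A ν).indicator (fun _ => ENNReal.ofReal M) s) →
      (∫⁻ s in Set.Icc (0:ℝ) 1, ENNReal.ofReal (f s))
        ≤ ENNReal.ofReal (M * (2 * δ ν)) := by
    intro ν f M hM hle
    calc (∫⁻ s in Set.Icc (0:ℝ) 1, ENNReal.ofReal (f s))
        ≤ ∫⁻ s in Set.Icc (0:ℝ) 1, (A ν).indicator (fun _ => ENNReal.ofReal M) s :=
          setLIntegral_mono' measurableSet_Icc hle
      _ ≤ ∫⁻ s, (A ν).indicator (fun _ => ENNReal.ofReal M) s :=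
          setLIntegral_le_lintegral _ _
      _ = ENNReal.ofReal M * volume (A ν) := lintegral_indicator_const (hAmeas ν) _
      _ ≤ ENNReal.ofReal M * ENNReal.ofReal (2 * δ ν) := by
          gcongr
          exact hAvol ν
      _ = ENNReal.ofReal (M * (2 * δ ν)) := (ENNReal.ofReal_mul hM).symm
  -- the dominating summable sequence
  set C : ℕ → ℝ := fun ν =>
    8 * (Real.sqrt (h ν) * x0 ν ^ 2 + Real.sqrt (h ν) * x1 ν ^ 2) with hC
  have hCsum : Summable C := (hx0.add hx1).mul_left 8
  have hCnn : ∀ ν, 0 ≤ C ν := by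
    intro ν
    have := (hspos ν).le
    positivity
  have final : ∀ (F : ℕ → ENNReal), (∀ ν, F ν ≤ ENNReal.ofReal (C ν)) →
      (∑' ν, F ν) ≠ ⊤ := by
    intro F hF
    have hle : (∑' ν, F ν) ≤ ∑' ν, ENNReal.ofReal (C ν) := ENNReal.tsum_le_tsum hF
    rw [← ENNReal.ofReal_tsum_of_nonneg hCnn hCsum] at hle
    exact ne_top_of_le_ne_top ENNReal.ofReal_ne_top hle
  -- first series
  have sum1 : ∀ ν, (∫⁻ s in Set.Icc (0:ℝ) 1, ENNReal.ofReal (h ν * (X ν s) ^ 2))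
      ≤ ENNReal.ofReal (C ν) := by
    intro ν
    have hM : (0:ℝ) ≤ h ν * (|x0 ν| + |x1 ν|) ^ 2 :=
      mul_nonneg (hhpos ν).le (sq_nonneg _)
    refine le_trans (bound ν _ _ hM ?_) (ENNReal.ofReal_le_ofReal ?_)
    · intro s hs
      by_cases hsA : s ∈ A ν
      · rw [Set.indicator_of_mem hsA]
        apply ENNReal.ofReal_le_ofReal
        have hb := hXbound ν s hs
        have hsq : (X ν s) ^ 2 ≤ (|x0 ν| + |x1 ν|) ^ 2 := by
          have := pow_le_pow_left₀ (abs_nonneg (X ν s)) hb 2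
          rwa [sq_abs] at this
        exact mul_le_mul_of_nonneg_left hsq (hhpos ν).le
      · rw [Set.indicator_of_notMem hsA, hXzero ν s hs hsA]
        simp
    · have e : h ν * (|x0 ν| + |x1 ν|) ^ 2 * (2 * δ ν)
          = 2 * Real.sqrt (h ν) * (|x0 ν| + |x1 ν|) ^ 2 := by
        rw [show h ν * (|x0 ν| + |x1 ν|) ^ 2 * (2 * δ ν)
            = (h ν * δ ν) * (2 * (|x0 ν| + |x1 ν|) ^ 2) by ring, hδh ν]
        ring
      rw [e]
      simp only [hC]
      have h2 : (|x0 ν| + |x1 ν|) ^ 2 ≤ 2 * (x0 ν ^ 2 + x1 ν ^ 2) := by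
        nlinarith [sq_abs (x0 ν), sq_abs (x1 ν), abs_nonneg (x0 ν), abs_nonneg (x1 ν),
          sq_nonneg (|x0 ν| - |x1 ν|)]
      nlinarith [mul_le_mul_of_nonneg_left h2 (by positivity : (0:ℝ) ≤ 2 * Real.sqrt (h ν)),
        mul_nonneg (hspos ν).le (by positivity : (0:ℝ) ≤ x0 ν ^ 2 + x1 ν ^ 2)]
  -- second series
  have sum2 : ∀ ν, (∫⁻ s in Set.Icc (0:ℝ) 1,
        ENNReal.ofReal ((X' ν s) ^ 2 + (X ν s) ^ 2))
      ≤ ENNReal.ofReal (C ν) := by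
    intro ν
    have hM : (0:ℝ) ≤ 2 * h ν * (|x0 ν| + |x1 ν|) ^ 2 :=
      mul_nonneg (mul_nonneg two_pos.le (hhpos ν).le) (sq_nonneg _)
    refine le_trans (bound ν _ _ hM ?_) (ENNReal.ofReal_le_ofReal ?_)
    · intro s hs
      by_cases hsA : s ∈ A ν
      · rw [Set.indicator_of_mem hsA]
        apply ENNReal.ofReal_le_ofReal
        have hb := hXbound ν s hs
        have hb' := hX'bound ν s
        have hsq : (X ν s) ^ 2 ≤ (|x0 ν| + |x1 ν|) ^ 2 := by
          have := pow_le_pow_left₀ (abs_nonneg (X ν s)) hb 2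
          rwa [sq_abs] at this
        have hsq' : (X' ν s) ^ 2 ≤ (|x0 ν| + |x1 ν|) ^ 2 * h ν := by
          have := pow_le_pow_left₀ (abs_nonneg (X' ν s)) hb' 2
          rw [sq_abs, mul_pow, Real.sq_sqrt (hhpos ν).le] at this
          exact this
        have hge : (|x0 ν| + |x1 ν|) ^ 2 ≤ (|x0 ν| + |x1 ν|) ^ 2 * h ν := by
          nlinarith [h1 ν, sq_nonneg (|x0 ν| + |x1 ν|)]
        nlinarith
      · rw [Set.indicator_of_notMem hsA, hXzero ν s hs hsA, hX'zero ν s hs hsA]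
        simp
    · have e : 2 * h ν * (|x0 ν| + |x1 ν|) ^ 2 * (2 * δ ν)
          = 4 * Real.sqrt (h ν) * (|x0 ν| + |x1 ν|) ^ 2 := by
        rw [show 2 * h ν * (|x0 ν| + |x1 ν|) ^ 2 * (2 * δ ν)
            = (h ν * δ ν) * (4 * (|x0 ν| + |x1 ν|) ^ 2) by ring, hδh ν]
        ring
      rw [e]
      simp only [hC]
      have h2 : (|x0 ν| + |x1 ν|) ^ 2 ≤ 2 * (x0 ν ^ 2 + x1 ν ^ 2) := by
        nlinarith [sq_abs (x0 ν), sq_abs (x1 ν), abs_nonneg (x0 ν), abs_nonneg (x1 ν),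
          sq_nonneg (|x0 ν| - |x1 ν|)]
      nlinarith [mul_le_mul_of_nonneg_left h2 (by positivity : (0:ℝ) ≤ 4 * Real.sqrt (h ν))]
  refine ⟨X, X', hmeas, hint, ?_, final _ sum1, final _ sum2, hX0, hX1⟩
  intro ν t ht
  rw [hX0 ν]
end
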